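/- arXiv:1801.04882 — 13 statements merged into one kernel-verified Lean document; each statement's English description precedes it below -/
import Mathlib

section
/- Let m = ⌈log₂ M⌉ with m ≤ L, let I : {1,…,M} → {0,1}^m be an injective map (taking i to the m-bit binary representation of i−1), and let D ⊆ ({0,1}^{L−m})^M be a block code of length M over the alphabet Σ = {0,1}^{L−m} whose minimum Hamming distance over Σ (the number of coordinates in which two distinct codewords differ) is at least δ+1 (for instance, an MDS[M, M−δ] code). Define C₁ = { {(I(1),u₁),…,(I(M),u_M)} : (u₁,…,u_M) ∈ D } ⊆ X_M^L, where (I(i),u_i) denotes the concatenation of the index prefix and the suffix. Then for all s,t ∈ ℕ with s + 2t ≤ δ, the code C₁ is an (s,t,L)_H error-correcting code. -/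
/-- The Hamming error ball `B^H_{s,t,ε}(S)`: all sets obtained from `S` by losing at most `s`
sequences and distorting at most `t` sequences by at most `ε` substitutions each. -/
def hamBall (L s t ε : ℕ) (S : Finset (Fin L → Bool)) :
    Set (Finset (Fin L → Bool)) :=
  { S' | ∃ (U Lo F : Finset (Fin L → Bool)) (f : (Fin L → Bool) → (Fin L → Bool)),
      Disjoint U Lo ∧ Disjoint U F ∧ Disjoint Lo F ∧
      U ∪ Lo ∪ F = S ∧ Lo.card ≤ s ∧ F.card ≤ t ∧
      (∀ x ∈ F, hammingDist x (f x) ≤ ε) ∧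
      S' = U ∪ F.image f }

/-- `C` is an `(s,t,ε)_H` error-correcting code. -/
def isHamCode (L s t ε : ℕ) (C : Set (Finset (Fin L → Bool))) : Prop :=
  ∀ S₁ ∈ C, ∀ S₂ ∈ C, S₁ ≠ S₂ →
    hamBall L s t ε S₁ ∩ hamBall L s t ε S₂ = ∅

/-- Concatenation of a prefix of length `m` and a suffix of length `L - m`. -/
def concatVec (m L : ℕ) (a : Fin m → Bool) (b : Fin (L - m) → Bool) : Fin L → Bool :=
  fun j => if h : (j : ℕ) < m then a ⟨j, h⟩
           else b ⟨(j : ℕ) - m, by have := j.isLt; omega⟩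


lemma concat_inj {m L : ℕ} (hm : m ≤ L) {a a' : Fin m → Bool} {b b' : Fin (L - m) → Bool}
    (h : concatVec m L a b = concatVec m L a' b') : a = a' ∧ b = b' := by
  constructor
  · funext j
    have hj := congrFun h ⟨j, lt_of_lt_of_le j.isLt hm⟩
    simpa [concatVec, j.isLt] using hj
  · funext k
    have hk : m + (k : ℕ) < L := by have := k.isLt; omega
    have hkk := congrFun h ⟨m + k, hk⟩
    simp only [concatVec] at hkk
    rw [dif_neg (by omega), dif_neg (by omega)] at hkk
    simpa [Nat.add_sub_cancel_left] using hkk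

/-- Construction 1 (index-based construction) corrects `s` losses and substitution errors
in `t` sequences whenever `s + 2t ≤ δ`, where `δ + 1` is the minimum distance of the outer
block code `D` over the alphabet `{0,1}^{L-m}`. -/
theorem stmt_0 (L M δ s t : ℕ) (hL : 1 ≤ L) (hM : 1 ≤ M) (hML : M ≤ 2 ^ L)
    (hm : Nat.clog 2 M ≤ L)
    (I : Fin M → Fin (Nat.clog 2 M) → Bool) (hI : Function.Injective I)
    (D : Set (Fin M → Fin (L - Nat.clog 2 M) → Bool))
    (hD : ∀ u ∈ D, ∀ v ∈ D, u ≠ v →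
      δ + 1 ≤ (Finset.univ.filter fun i => u i ≠ v i).card)
    (hst : s + 2 * t ≤ δ) :
    isHamCode L s t L
      { S | ∃ u ∈ D,
          S = Finset.image
            (fun i => concatVec (Nat.clog 2 M) L (I i) (u i)) Finset.univ } := by
  intro S₁ hS₁ S₂ hS₂ hne
  obtain ⟨u, hu, rfl⟩ := hS₁
  obtain ⟨v, hv, rfl⟩ := hS₂
  have huv : u ≠ v := by rintro rfl; exact hne rfl
  have hA := hD u hu v hv huv
  ext S'
  simp only [Set.mem_inter_iff, Set.mem_empty_iff_false, iff_false]
  rintro ⟨⟨U₁, Lo₁, F₁, f₁, _, _, _, hS₁eq, hLo₁, hF₁, _, hS'₁⟩,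
          ⟨U₂, Lo₂, F₂, f₂, _, _, _, hS₂eq, hLo₂, hF₂, _, hS'₂⟩⟩
  set g : Fin M → (Fin L → Bool) := fun i => concatVec (Nat.clog 2 M) L (I i) (u i) with hg
  have hginj : Function.Injective g := fun i j hij => hI (concat_inj hm hij).1
  set A := Finset.univ.filter (fun i => u i ≠ v i) with hAdef
  have hsub : A ⊆ (A.filter (fun i => g i ∈ Lo₁)) ∪ (A.filter (fun i => g i ∈ F₁))
      ∪ (A.filter (fun i => g i ∈ U₁)) := by
    intro i hi
    have hmem : g i ∈ U₁ ∪ Lo₁ ∪ F₁ := by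
      rw [hS₁eq]; exact Finset.mem_image_of_mem _ (Finset.mem_univ i)
    simp only [Finset.mem_union, Finset.mem_filter] at hmem ⊢
    tauto
  have key : ∀ i ∈ A, g i ∈ U₁ → g i ∈ F₂.image f₂ := by
    intro i hiA hi
    have hS' : g i ∈ S' := by rw [hS'₁]; exact Finset.mem_union_left _ hi
    rw [hS'₂, Finset.mem_union] at hS'
    rcases hS' with h | h
    · exfalso
      have hmem : g i ∈ U₂ ∪ Lo₂ ∪ F₂ :=
        Finset.mem_union_left _ (Finset.mem_union_left _ h)
      rw [hS₂eq] at hmem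
      obtain ⟨j, _, hj⟩ := Finset.mem_image.mp hmem
      have hpair := concat_inj hm hj
      have hji : j = i := hI hpair.1
      subst hji
      have : u j = v j := hpair.2.symm
      simp only [hAdef, Finset.mem_filter] at hiA
      exact hiA.2 this
    · exact h
  have h1 : (A.filter (fun i => g i ∈ Lo₁)).card ≤ Lo₁.card :=
    Finset.card_le_card_of_injOn g
      (fun i hi => (Finset.mem_filter.mp hi).2) hginj.injOn
  have h2 : (A.filter (fun i => g i ∈ F₁)).card ≤ F₁.card :=
    Finset.card_le_card_of_injOn g
      (fun i hi => (Finset.mem_filter.mp hi).2) hginj.injOn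
  have h3 : (A.filter (fun i => g i ∈ U₁)).card ≤ F₂.card := by
    calc (A.filter (fun i => g i ∈ U₁)).card ≤ (F₂.image f₂).card :=
          Finset.card_le_card_of_injOn g
            (fun i hi => key i (Finset.mem_filter.mp hi).1 (Finset.mem_filter.mp hi).2)
            hginj.injOn
      _ ≤ F₂.card := Finset.card_image_le
  have hcard := Finset.card_le_card hsub
  have hcu := (Finset.card_union_le (A.filter (fun i => g i ∈ Lo₁) ∪ A.filter (fun i => g i ∈ F₁)) (A.filter (fun i => g i ∈ U₁)))
  have hcu2 := (Finset.card_union_le (A.filter (fun i => g i ∈ Lo₁)) (A.filter (fun i => g i ∈ F₁)))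
  omega
end

section
/- Let m = ⌈log₂ M⌉ with m ≤ L, let I : {1,…,M} → {0,1}^m be an injective map (taking i to the m-bit binary representation of i−1), and let D ⊆ ({0,1}^{L−m})^M be a block code of length M over the alphabet Σ = {0,1}^{L−m} whose minimum Hamming distance over Σ is at least δ+1. Define C₁ = { {(I(1),u₁),…,(I(M),u_M)} : (u₁,…,u_M) ∈ D } ⊆ X_M^L, where (I(i),u_i) denotes concatenation. Then for all s,t ∈ ℕ with s + 2t ≤ δ, the code C₁ is an (s,t,L)_L error-correcting code. -/
/-- `y` is within `ε` insertions/deletions of `x`: there is a common subsequence `z`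
with `(|x| - |z|) + (|y| - |z|) ≤ ε`. -/
def withinLev (ε : ℕ) (x y : List Bool) : Prop :=
  ∃ z : List Bool, z.Sublist x ∧ z.Sublist y ∧
    (x.length - z.length) + (y.length - z.length) ≤ ε

/-- The Levenshtein error ball `B^Lev_{s,t,ε}(S)`. -/
def levBall (s t ε : ℕ) (S : Finset (List Bool)) : Set (Finset (List Bool)) :=
  { S' | ∃ (U Lo F : Finset (List Bool)) (f : List Bool → List Bool),
      Disjoint U Lo ∧ Disjoint U F ∧ Disjoint Lo F ∧
      U ∪ Lo ∪ F = S ∧ Lo.card ≤ s ∧ F.card ≤ t ∧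
      (∀ x ∈ F, withinLev ε x (f x)) ∧
      S' = U ∪ F.image f }

/-- `C` is an `(s,t,ε)_L` error-correcting code. -/
def isLevCode (s t ε : ℕ) (C : Set (Finset (List Bool))) : Prop :=
  ∀ S₁ ∈ C, ∀ S₂ ∈ C, S₁ ≠ S₂ →
    levBall s t ε S₁ ∩ levBall s t ε S₂ = ∅

/-- Construction 1 (index-based construction) is an `(s,t,L)_L` error-correcting code
whenever `s + 2t ≤ δ`, where `δ + 1` is the minimum distance of the outer block code `D`
over the alphabet `{0,1}^{L-m}`. -/
theorem stmt_1 (L M δ s t : ℕ) (hL : 1 ≤ L) (hM : 1 ≤ M) (hML : M ≤ 2 ^ L)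
    (hm : Nat.clog 2 M ≤ L)
    (I : Fin M → List Bool) (hIlen : ∀ i, (I i).length = Nat.clog 2 M)
    (hI : Function.Injective I)
    (D : Set (Fin M → List Bool))
    (hDlen : ∀ u ∈ D, ∀ i, (u i).length = L - Nat.clog 2 M)
    (hD : ∀ u ∈ D, ∀ v ∈ D, u ≠ v →
      δ + 1 ≤ (Finset.univ.filter fun i => u i ≠ v i).card)
    (hst : s + 2 * t ≤ δ) :
    isLevCode s t L
      { S | ∃ u ∈ D, S = Finset.image (fun i => I i ++ u i) Finset.univ } := by

  intro S₁ hS₁ S₂ hS₂ hne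
  obtain ⟨u, hu, rfl⟩ := hS₁
  obtain ⟨v, hv, rfl⟩ := hS₂
  have huv : u ≠ v := by rintro rfl; exact hne rfl
  rw [Set.eq_empty_iff_forall_notMem]
  rintro S' ⟨⟨U₁, Lo₁, F₁, f₁, -, -, -, hsum₁, hLo₁, hF₁, -, hS'₁⟩,
            ⟨U₂, Lo₂, F₂, f₂, -, -, -, hsum₂, hLo₂, hF₂, -, hS'₂⟩⟩
  have hg : Function.Injective (fun i => I i ++ u i) := by
    intro i j h
    have := List.append_inj h (by rw [hIlen, hIlen])
    exact hI this.1
  set Bad := Finset.univ.filter (fun i => u i ≠ v i) with hBad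
  have hcard : δ + 1 ≤ Bad.card := hD u hu v hv huv
  have hsub : Bad.image (fun i => I i ++ u i) ⊆ Lo₁ ∪ F₁ ∪ F₂.image f₂ := by
    intro x hx
    obtain ⟨i, hi, rfl⟩ := Finset.mem_image.mp hx
    have hiuv : u i ≠ v i := (Finset.mem_filter.mp hi).2
    have hxS₁ : I i ++ u i ∈ U₁ ∪ Lo₁ ∪ F₁ := by
      rw [hsum₁]; exact Finset.mem_image.mpr ⟨i, Finset.mem_univ i, rfl⟩
    rcases Finset.mem_union.mp hxS₁ with h | h
    · rcases Finset.mem_union.mp h with h | h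
      · have hx' : I i ++ u i ∈ U₂ ∪ F₂.image f₂ := by
          rw [← hS'₂, hS'₁]; exact Finset.mem_union_left _ h
        rcases Finset.mem_union.mp hx' with h2 | h2
        · exfalso
          have hmem : I i ++ u i ∈ Finset.image (fun j => I j ++ v j) Finset.univ := by
            rw [← hsum₂]
            exact Finset.mem_union_left _ (Finset.mem_union_left _ h2)
          obtain ⟨j, -, hj⟩ := Finset.mem_image.mp hmem
          have hpair := List.append_inj hj (by rw [hIlen, hIlen])
          have hji : j = i := hI hpair.1
          subst hji
          exact hiuv hpair.2.symm
        · exact Finset.mem_union_right _ h2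
      · exact Finset.mem_union_left _ (Finset.mem_union_left _ h)
    · exact Finset.mem_union_left _ (Finset.mem_union_right _ h)
  have h1 : Bad.card ≤ (Lo₁ ∪ F₁ ∪ F₂.image f₂).card := by
    calc Bad.card = (Bad.image (fun i => I i ++ u i)).card :=
          (Finset.card_image_of_injective _ hg).symm
      _ ≤ _ := Finset.card_le_card hsub
  have h2 : (Lo₁ ∪ F₁ ∪ F₂.image f₂).card ≤ s + t + t := by
    calc (Lo₁ ∪ F₁ ∪ F₂.image f₂).card ≤ (Lo₁ ∪ F₁).card + (F₂.image f₂).card :=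
        Finset.card_union_le _ _
      _ ≤ Lo₁.card + F₁.card + F₂.card :=
        add_le_add (Finset.card_union_le _ _) Finset.card_image_le
      _ ≤ s + t + t := add_le_add (add_le_add hLo₁ hF₁) hF₂
  omega
end

section
/- Let m = ⌈log₂ M⌉ with m ≤ L, let I : {1,…,M} → {0,1}^m be an injective map, and let D ⊆ ({0,1}^{L−m})^M be a block code of length M over the alphabet Σ = {0,1}^{L−m} whose minimum Hamming distance over Σ is at least δ+1. Define C₁ = { {(I(1),u₁),…,(I(M),u_M)} : (u₁,…,u_M) ∈ D } ⊆ X_M^L. For S ∈ X_M^L, define the mixed substitution/deletion error ball as the family of all sets S' = U ∪ f(F_H) ∪ g(F_D), where S is written as a disjoint union S = U ⊔ Lo ⊔ F_H ⊔ F_D with |Lo| ≤ s, |F_H| ≤ t_H and |F_D| ≤ t_D, f : F_H → {0,1}^L is an arbitrary map (modelling up to L substitutions per sequence), and g maps each x ∈ F_D to a subsequence of x (modelling deletion errors). If s + 2·t_H + t_D ≤ δ, then the mixed substitution/deletion error balls of distinct codewords of C₁ are pairwise disjoint, i.e., C₁ corrects s losses of sequences, substitution errors in t_H sequences and deletion errors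 in t_D sequences. -/
/-- The mixed substitution/deletion error ball of a set `S` of length-`L` words:
all sets `S' = U ∪ f(F_H) ∪ g(F_D)` where `S = U ⊔ Lo ⊔ F_H ⊔ F_D`, `|Lo| ≤ s`,
`|F_H| ≤ t_H`, `|F_D| ≤ t_D`, `f` sends each word of `F_H` to an arbitrary length-`L`
word (up to `L` substitutions) and `g` sends each word of `F_D` to one of its
subsequences (deletion errors). -/
def mixedBall (L s tH tD : ℕ) (S : Finset (List Bool)) : Set (Finset (List Bool)) :=
  { S' | ∃ (U Lo FH FD : Finset (List Bool)) (f g : List Bool → List Bool),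
      Disjoint U Lo ∧ Disjoint U FH ∧ Disjoint U FD ∧
      Disjoint Lo FH ∧ Disjoint Lo FD ∧ Disjoint FH FD ∧
      U ∪ Lo ∪ FH ∪ FD = S ∧
      Lo.card ≤ s ∧ FH.card ≤ tH ∧ FD.card ≤ tD ∧
      (∀ x ∈ FH, (f x).length = L) ∧
      (∀ x ∈ FD, (g x).Sublist x) ∧
      S' = U ∪ FH.image f ∪ FD.image g }

/-- Construction 1 corrects `s` losses, substitution errors in `t_H` sequences and
deletion errors in `t_D` sequences whenever `s + 2 t_H + t_D ≤ δ`: the mixed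
substitution/deletion error balls of distinct codewords are pairwise disjoint. -/
theorem stmt_2 (L M δ s tH tD : ℕ) (hL : 1 ≤ L) (hM : 1 ≤ M) (hML : M ≤ 2 ^ L)
    (hm : Nat.clog 2 M ≤ L)
    (I : Fin M → List Bool) (hIlen : ∀ i, (I i).length = Nat.clog 2 M)
    (hI : Function.Injective I)
    (D : Set (Fin M → List Bool))
    (hDlen : ∀ u ∈ D, ∀ i, (u i).length = L - Nat.clog 2 M)
    (hD : ∀ u ∈ D, ∀ v ∈ D, u ≠ v →
      δ + 1 ≤ (Finset.univ.filter fun i => u i ≠ v i).card)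
    (hst : s + 2 * tH + tD ≤ δ) :
    ∀ S₁ ∈ { S | ∃ u ∈ D, S = Finset.image (fun i => I i ++ u i) Finset.univ },
    ∀ S₂ ∈ { S | ∃ u ∈ D, S = Finset.image (fun i => I i ++ u i) Finset.univ },
      S₁ ≠ S₂ → mixedBall L s tH tD S₁ ∩ mixedBall L s tH tD S₂ = ∅ := by
  classical
  intro S₁ hS₁mem S₂ hS₂mem hne
  obtain ⟨u, hu, rfl⟩ := hS₁mem
  obtain ⟨v, hv, rfl⟩ := hS₂mem
  set m := Nat.clog 2 M with hmdef
  have huv : u ≠ v := by rintro rfl; exact hne rfl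
  have hΔcard := hD u hu v hv huv
  -- injectivity of the word maps
  have hwinj : ∀ w : Fin M → List Bool, Function.Injective (fun i => I i ++ w i) := by
    intro w i j h
    apply hI
    have h1 : (I i ++ w i).take m = I i := List.take_left' (hIlen i)
    have h2 : (I j ++ w j).take m = I j := List.take_left' (hIlen j)
    simp only at h
    rw [← h1, ← h2, h]
  -- lengths
  have hlen1 : ∀ i, (I i ++ u i).length = L := by
    intro i
    rw [List.length_append, hIlen, hDlen u hu]
    omega
  have hlen2 : ∀ i, (I i ++ v i).length = L := by
    intro i
    rw [List.length_append, hIlen, hDlen v hv]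
    omega
  -- if u i ≠ v i then I i ++ u i is not an element of S₂
  have hnotS₂ : ∀ i, u i ≠ v i →
      (I i ++ u i) ∉ Finset.image (fun j => I j ++ v j) Finset.univ := by
    intro i hi hmem
    obtain ⟨j, -, hj⟩ := Finset.mem_image.mp hmem
    have hIij : I j = I i := by
      have h1 : (I i ++ u i).take m = I i := List.take_left' (hIlen i)
      have h2 : (I j ++ v j).take m = I j := List.take_left' (hIlen j)
      rw [← h1, ← h2, hj]
    have : j = i := hI hIij
    subst this
    rw [hIij] at hj
    exact hi (List.append_cancel_left hj.symm)
  ext S'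
  simp only [Set.mem_inter_iff, Set.mem_empty_iff_false, iff_false]
  rintro ⟨⟨U₁, Lo₁, FH₁, FD₁, f₁, g₁, _, _, _, _, _, _, hS₁, hLo₁, hFH₁, hFD₁, hf₁, hg₁, hS'₁⟩,
         ⟨U₂, Lo₂, FH₂, FD₂, f₂, g₂, _, _, _, _, _, _, hS₂, hLo₂, hFH₂, hFD₂, hf₂, hg₂, hS'₂⟩⟩
  set Δ : Finset (Fin M) := Finset.univ.filter fun i => u i ≠ v i with hΔdef
  set K : Finset (Fin M) := Δ.filter fun i => (I i ++ u i) ∈ U₁ with hKdef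
  have hKsub : K ⊆ Δ := Finset.filter_subset _ _
  -- every element of K lands (via the word map) in FH₂.image f₂
  have hKimg : ∀ i ∈ K, (I i ++ u i) ∈ FH₂.image f₂ := by
    intro i hiK
    have hiΔ : u i ≠ v i := (Finset.mem_filter.mp (hKsub hiK)).2
    have hiU₁ : (I i ++ u i) ∈ U₁ := (Finset.mem_filter.mp hiK).2
    have hiS' : (I i ++ u i) ∈ S' := by
      rw [hS'₁]
      exact Finset.mem_union_left _ (Finset.mem_union_left _ hiU₁)
    rw [hS'₂] at hiS'
    rcases Finset.mem_union.mp hiS' with h | h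
    · rcases Finset.mem_union.mp h with h | h
      · -- in U₂ ⊆ S₂ : contradiction
        exfalso
        apply hnotS₂ i hiΔ
        rw [← hS₂]
        exact Finset.mem_union_left _ (Finset.mem_union_left _
          (Finset.mem_union_left _ h))
      · exact h
    · -- deletion image: length forces equality, contradiction
      exfalso
      obtain ⟨x, hx, hxeq⟩ := Finset.mem_image.mp h
      have hxS₂ : x ∈ Finset.image (fun j => I j ++ v j) Finset.univ := by
        rw [← hS₂]
        exact Finset.mem_union_right _ hx
      have hxlen : x.length = L := by
        obtain ⟨j, -, hj⟩ := Finset.mem_image.mp hxS₂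
        rw [← hj]; exact hlen2 j
      have hsub : (g₂ x).Sublist x := hg₂ x hx
      have : g₂ x = x := hsub.eq_of_length (by rw [hxeq, hlen1, hxlen])
      apply hnotS₂ i hiΔ
      rw [← hxeq, this]
      exact hxS₂
  -- |K| ≤ tH
  have hKcard : K.card ≤ tH := by
    have h1 : K.image (fun i => I i ++ u i) ⊆ FH₂.image f₂ := by
      intro w hw
      obtain ⟨i, hi, rfl⟩ := Finset.mem_image.mp hw
      exact hKimg i hi
    calc K.card = (K.image (fun i => I i ++ u i)).card :=
          (Finset.card_image_of_injective _ (hwinj u)).symm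
      _ ≤ (FH₂.image f₂).card := Finset.card_le_card h1
      _ ≤ FH₂.card := Finset.card_image_le
      _ ≤ tH := hFH₂
  -- |Δ \ K| ≤ s + tH + tD
  have hDKcard : (Δ \ K).card ≤ s + tH + tD := by
    have h1 : (Δ \ K).image (fun i => I i ++ u i) ⊆ Lo₁ ∪ FH₁ ∪ FD₁ := by
      intro w hw
      obtain ⟨i, hi, rfl⟩ := Finset.mem_image.mp hw
      obtain ⟨hiΔ, hiK⟩ := Finset.mem_sdiff.mp hi
      have hiU₁ : (I i ++ u i) ∉ U₁ := by
        intro h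
        exact hiK (Finset.mem_filter.mpr ⟨hiΔ, h⟩)
      have hiS₁ : (I i ++ u i) ∈ U₁ ∪ Lo₁ ∪ FH₁ ∪ FD₁ := by
        rw [hS₁]
        exact Finset.mem_image.mpr ⟨i, Finset.mem_univ i, rfl⟩
      rcases Finset.mem_union.mp hiS₁ with h | h
      · rcases Finset.mem_union.mp h with h | h
        · rcases Finset.mem_union.mp h with h | h
          · exact absurd h hiU₁
          · exact Finset.mem_union_left _ (Finset.mem_union_left _ h)
        · exact Finset.mem_union_left _ (Finset.mem_union_right _ h)
      · exact Finset.mem_union_right _ h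
    calc (Δ \ K).card = ((Δ \ K).image (fun i => I i ++ u i)).card :=
          (Finset.card_image_of_injective _ (hwinj u)).symm
      _ ≤ (Lo₁ ∪ FH₁ ∪ FD₁).card := Finset.card_le_card h1
      _ ≤ (Lo₁ ∪ FH₁).card + FD₁.card := Finset.card_union_le _ _
      _ ≤ Lo₁.card + FH₁.card + FD₁.card := by
          exact Nat.add_le_add_right (Finset.card_union_le _ _) _
      _ ≤ s + tH + tD := by
          exact Nat.add_le_add (Nat.add_le_add hLo₁ hFH₁) hFD₁
  have hsplit : (Δ \ K).card + K.card = Δ.card := Finset.card_sdiff_add_card_eq_card hKsub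
  omega
end

section
/- Fix a bijection φ between {0,1}^L and {1,…,2^L}, and for S ∈ X_M^L let v(S) ∈ {0,1}^{2^L} be the indicator vector with v(S)_j = 1 if and only if φ⁻¹(j) ∈ S. For a vector v ∈ {0,1}^{2^L} of Hamming weight M, let J_{s,t}(v) be the set of all vectors obtained from v by choosing a set A of coordinates where v equals 1 and a set B of coordinates where v equals 0 such that |B| ≤ t and |B| ≤ |A| ≤ s + |B|, and flipping the coordinates in A to 0 and those in B to 1 (this models |A|−|B| asymmetric 1→0 errors and |B| errors in the Johnson graph). Suppose Y ⊆ {v ∈ {0,1}^{2^L} : wt(v) = M} satisfies J_{s,t}(v) ∩ J_{s,t}(w) = ∅ for all distinct v, w ∈ Y. Then C₂ = {S ∈ X_M^L : v(S) ∈ Y} is an (s,t,L)_H error-correcting code. -/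
/-- Flip the coordinates in `A` to `0` and the coordinates in `B` to `1`. -/
def flipTo (n : ℕ) (v : Fin n → Bool) (A B : Finset (Fin n)) : Fin n → Bool :=
  fun j => if j ∈ A then false else if j ∈ B then true else v j

/-- The ball `J_{s,t}(v)` of outcomes of `|A| - |B|` asymmetric `1 → 0` errors and
`|B|` errors in the Johnson graph: choose `A` among the one-coordinates and `B` among
the zero-coordinates with `|B| ≤ t` and `|B| ≤ |A| ≤ s + |B|`, and flip them. -/
def Jball (n s t : ℕ) (v : Fin n → Bool) : Set (Fin n → Bool) :=
  { w | ∃ A B : Finset (Fin n),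
      (∀ j ∈ A, v j = true) ∧ (∀ j ∈ B, v j = false) ∧
      B.card ≤ t ∧ B.card ≤ A.card ∧ A.card ≤ s + B.card ∧
      w = flipTo n v A B }

/-- Numerical facts extracted from membership in a Hamming error ball. -/
lemma hamBall_facts {L s t ε : ℕ} {S S' : Finset (Fin L → Bool)}
    (h : S' ∈ hamBall L s t ε S) :
    S'.card ≤ S.card ∧ (S' \ S).card ≤ t ∧
      (S' \ S).card + S.card ≤ s + t + S'.card := by
  obtain ⟨U, Lo, F, f, hUL, hUF, hLF, hunion, hLo, hF, -, hS'⟩ := h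
  have hUS : U ⊆ S := by rw [← hunion]; intro x hx; simp [hx]
  have hsub : S' \ S ⊆ F.image f := by
    intro x hx
    rw [Finset.mem_sdiff, hS', Finset.mem_union] at hx
    rcases hx.1 with h | h
    · exact absurd (hUS h) hx.2
    · exact h
  have hcardS : U.card + Lo.card + F.card = S.card := by
    rw [← hunion,
      Finset.card_union_of_disjoint (Finset.disjoint_union_left.mpr ⟨hUF, hLF⟩),
      Finset.card_union_of_disjoint hUL]
  have hup : S'.card ≤ U.card + F.card := by
    have h1 : S'.card ≤ U.card + (F.image f).card := by
      rw [hS']; exact Finset.card_union_le U (F.image f)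
    have h2 : (F.image f).card ≤ F.card := Finset.card_image_le
    omega
  have hb : (S' \ S).card ≤ F.card :=
    le_trans (Finset.card_le_card hsub) Finset.card_image_le
  have hlow : U.card + (S' \ S).card ≤ S'.card := by
    have hd : Disjoint U (S' \ S) := Finset.disjoint_sdiff.mono_left hUS
    calc U.card + (S' \ S).card = (U ∪ (S' \ S)).card :=
          (Finset.card_union_of_disjoint hd).symm
      _ ≤ S'.card := Finset.card_le_card (by
          intro x hx
          rcases Finset.mem_union.mp hx with h | h
          · rw [hS']; exact Finset.mem_union_left _ h
          · exact (Finset.mem_sdiff.mp h).1)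
  omega

/-- The indicator vector of a suitable set `S''` lies in the Johnson ball of the
indicator vector of `S`. -/
lemma mem_Jball_ind {L M s t : ℕ} (φ : (Fin L → Bool) ≃ Fin (2 ^ L))
    {S S'' : Finset (Fin L → Bool)} (hS : S.card = M)
    (h1 : S''.card ≤ M) (h2 : M ≤ S''.card + s) (h3 : (S'' \ S).card ≤ t) :
    (fun j => decide (φ.symm j ∈ S'')) ∈
      Jball (2 ^ L) s t (fun j => decide (φ.symm j ∈ S)) := by
  refine ⟨(S \ S'').image φ, (S'' \ S).image φ, ?_, ?_, ?_, ?_, ?_, ?_⟩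
  · intro j hj
    obtain ⟨x, hx, rfl⟩ := Finset.mem_image.mp hj
    simp [(Finset.mem_sdiff.mp hx).1]
  · intro j hj
    obtain ⟨x, hx, rfl⟩ := Finset.mem_image.mp hj
    simp [(Finset.mem_sdiff.mp hx).2]
  · rwa [Finset.card_image_of_injective _ φ.injective]
  · rw [Finset.card_image_of_injective _ φ.injective,
      Finset.card_image_of_injective _ φ.injective]
    have e1 : (S ∩ S'').card + (S \ S'').card = S.card := Finset.card_inter_add_card_sdiff S S''
    have e2 : (S'' ∩ S).card + (S'' \ S).card = S''.card := Finset.card_inter_add_card_sdiff S'' S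
    rw [Finset.inter_comm] at e2
    omega
  · rw [Finset.card_image_of_injective _ φ.injective,
      Finset.card_image_of_injective _ φ.injective]
    have e1 : (S ∩ S'').card + (S \ S'').card = S.card := Finset.card_inter_add_card_sdiff S S''
    have e2 : (S'' ∩ S).card + (S'' \ S).card = S''.card := Finset.card_inter_add_card_sdiff S'' S
    rw [Finset.inter_comm] at e2
    omega
  · funext j
    have memA : j ∈ (S \ S'').image φ ↔ φ.symm j ∈ S \ S'' := by
      rw [Finset.mem_image]
      constructor
      · rintro ⟨x, hx, rfl⟩; simpa using hx
      · intro h; exact ⟨φ.symm j, h, by simp⟩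
    have memB : j ∈ (S'' \ S).image φ ↔ φ.symm j ∈ S'' \ S := by
      rw [Finset.mem_image]
      constructor
      · rintro ⟨x, hx, rfl⟩; simpa using hx
      · intro h; exact ⟨φ.symm j, h, by simp⟩
    unfold flipTo
    by_cases hA : j ∈ (S \ S'').image φ
    · rw [if_pos hA]
      have := (Finset.mem_sdiff.mp (memA.mp hA)).2
      simp [this]
    · rw [if_neg hA]
      by_cases hB : j ∈ (S'' \ S).image φ
      · rw [if_pos hB]
        have := (Finset.mem_sdiff.mp (memB.mp hB)).1
        simp [this]
      · rw [if_neg hB]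
        rw [memA, Finset.mem_sdiff] at hA
        rw [memB, Finset.mem_sdiff] at hB
        by_cases h : φ.symm j ∈ S
        · have : φ.symm j ∈ S'' := by tauto
          simp [h, this]
        · have : φ.symm j ∉ S'' := by tauto
          simp [h, this]

/-- Construction 2 (constant-weight codes): if `Y` is a set of weight-`M` indicator
vectors of length `2^L` whose `J_{s,t}`-balls are pairwise disjoint, then
`C₂ = { S ∈ X_M^L : v(S) ∈ Y }` is an `(s,t,L)_H` error-correcting code. -/
theorem stmt_3 (L M s t : ℕ) (hL : 1 ≤ L) (hM : 1 ≤ M) (hML : M ≤ 2 ^ L)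
    (φ : (Fin L → Bool) ≃ Fin (2 ^ L))
    (Y : Set (Fin (2 ^ L) → Bool))
    (hwt : ∀ v ∈ Y, (Finset.univ.filter fun j => v j = true).card = M)
    (hY : ∀ v ∈ Y, ∀ w ∈ Y, v ≠ w →
      Jball (2 ^ L) s t v ∩ Jball (2 ^ L) s t w = ∅) :
    isHamCode L s t L
      { S | S.card = M ∧ (fun j => decide (φ.symm j ∈ S)) ∈ Y } := by
  rintro S₁ ⟨hS₁, hv₁⟩ S₂ ⟨hS₂, hv₂⟩ hne
  rw [Set.eq_empty_iff_forall_notMem]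
  rintro S' ⟨h₁, h₂⟩
  obtain ⟨hc₁, hb₁, hd₁⟩ := hamBall_facts h₁
  obtain ⟨hc₂, hb₂, hd₂⟩ := hamBall_facts h₂
  rw [hS₁] at hc₁ hd₁
  rw [hS₂] at hc₂ hd₂
  -- choose E, a set of (M - S'.card) - s elements outside S'
  set k : ℕ := (M - S'.card) - s with hk
  have hroom : k ≤ (Finset.univ \ S').card := by
    have : (Finset.univ \ S').card = 2 ^ L - S'.card := by
      rw [Finset.card_sdiff_of_subset (Finset.subset_univ _), Finset.card_univ]
      congr 1
      simp [Fintype.card_fun]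
    omega
  obtain ⟨E, hE, hEcard⟩ := Finset.exists_subset_card_eq hroom
  have hdisj : Disjoint S' E := by
    refine Finset.disjoint_left.mpr fun x hx hxE => ?_
    have := hE hxE
    rw [Finset.mem_sdiff] at this
    exact this.2 hx
  set S'' : Finset (Fin L → Bool) := S' ∪ E with hS''
  have hScard : S''.card = S'.card + k := by
    rw [hS'', Finset.card_union_of_disjoint hdisj, hEcard]
  have hsdiff : ∀ S : Finset (Fin L → Bool), (S'' \ S).card ≤ (S' \ S).card + k := by
    intro S
    have : S'' \ S ⊆ (S' \ S) ∪ E := by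
      intro x hx
      rw [Finset.mem_sdiff, hS'', Finset.mem_union] at hx
      rcases hx.1 with h | h
      · exact Finset.mem_union_left _ (Finset.mem_sdiff.mpr ⟨h, hx.2⟩)
      · exact Finset.mem_union_right _ h
    calc (S'' \ S).card ≤ ((S' \ S) ∪ E).card := Finset.card_le_card this
      _ ≤ (S' \ S).card + E.card := Finset.card_union_le _ _
      _ = (S' \ S).card + k := by rw [hEcard]
  have ht₁ : (S'' \ S₁).card ≤ t := by have := hsdiff S₁; omega
  have ht₂ : (S'' \ S₂).card ≤ t := by have := hsdiff S₂; omega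
  have hw₁ := mem_Jball_ind (s := s) (t := t) φ hS₁ (by omega : S''.card ≤ M)
    (by omega : M ≤ S''.card + s) ht₁
  have hw₂ := mem_Jball_ind (s := s) (t := t) φ hS₂ (by omega : S''.card ≤ M)
    (by omega : M ≤ S''.card + s) ht₂
  have hvne : (fun j => decide (φ.symm j ∈ S₁)) ≠ (fun j => decide (φ.symm j ∈ S₂)) := by
    intro h
    apply hne
    ext x
    have := congrFun h (φ x)
    simpa using this
  have := hY _ hv₁ _ hv₂ hvne
  rw [Set.eq_empty_iff_forall_notMem] at this
  exact this _ ⟨hw₁, hw₂⟩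
end

section
/- For all integers L ≥ 1, M with 1 ≤ M ≤ 2^L, and s, t ∈ ℕ, there exists an (s,t,L)_H error-correcting code C ⊆ X_M^L with |C| ≥ binom(2^L, M) / 2^{(s+2t)·L}; equivalently, there exists such a code with redundancy log₂ binom(2^L, M) − log₂ |C| ≤ (s+2t)·L. -/
open Polynomial


lemma hamBall_disjoint {L s t : ℕ} {S₁ S₂ : Finset (Fin L → Bool)}
    (h : s + 2 * t < (S₁ \ S₂).card) :
    hamBall L s t L S₁ ∩ hamBall L s t L S₂ = ∅ := by
  ext S'
  simp only [Set.mem_inter_iff, Set.mem_empty_iff_false, iff_false, not_and]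
  rintro ⟨U₁, Lo₁, F₁, f₁, -, -, -, hu₁, hLo₁, hF₁, -, rfl⟩
  rintro ⟨U₂, Lo₂, F₂, f₂, -, -, -, hu₂, hLo₂, hF₂, -, heq⟩
  have hsub : S₁ \ S₂ ⊆ (Lo₁ ∪ F₁) ∪ F₂.image f₂ := by
    intro x hx
    obtain ⟨hx1, hx2⟩ := Finset.mem_sdiff.mp hx
    rw [← hu₁] at hx1
    rcases Finset.mem_union.mp hx1 with h1 | h1
    · rcases Finset.mem_union.mp h1 with h2 | h2
      · have hx' : x ∈ U₂ ∪ F₂.image f₂ := by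
          rw [← heq]; exact Finset.mem_union_left _ h2
        rcases Finset.mem_union.mp hx' with h3 | h3
        · exact absurd (hu₂ ▸ Finset.mem_union_left _ (Finset.mem_union_left _ h3)) hx2
        · exact Finset.mem_union_right _ h3
      · exact Finset.mem_union_left _ (Finset.mem_union_left _ h2)
    · exact Finset.mem_union_left _ (Finset.mem_union_right _ h1)
  have hc := Finset.card_le_card hsub
  have h2 := Finset.card_union_le (Lo₁ ∪ F₁) (F₂.image f₂)
  have h3 := Finset.card_union_le Lo₁ F₁
  have h4 := Finset.card_image_le (s := F₂) (f := f₂)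
  omega

lemma poly_key {F : Type*} [Field F] [DecidableEq F] {M r : ℕ} {S S' : Finset F}
    (hS : S.card = M) (hS' : S'.card = M) (hne : S ≠ S')
    (hc : ∀ i, M - r ≤ i → i < M →
      (∏ x ∈ S, (X - C x)).coeff i = (∏ x ∈ S', (X - C x)).coeff i) :
    r < (S \ S').card := by
  by_contra hle
  push_neg at hle
  set P := ∏ x ∈ S, (X - C x) with hP
  set Q := ∏ x ∈ S', (X - C x) with hQ
  have hPm : P.Monic := monic_prod_of_monic _ _ fun x _ => monic_X_sub_C x
  have hQm : Q.Monic := monic_prod_of_monic _ _ fun x _ => monic_X_sub_C x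
  have hPd : P.natDegree = M := by
    rw [hP, natDegree_prod_of_monic _ _ fun x _ => monic_X_sub_C x]
    simp [hS]
  have hQd : Q.natDegree = M := by
    rw [hQ, natDegree_prod_of_monic _ _ fun x _ => monic_X_sub_C x]
    simp [hS']
  -- P ≠ Q
  have hsd : (S \ S').Nonempty := by
    rw [Finset.sdiff_nonempty]
    intro hsub
    exact hne (Finset.eq_of_subset_of_card_le hsub (by omega))
  obtain ⟨x, hx⟩ := hsd
  obtain ⟨hxS, hxS'⟩ := Finset.mem_sdiff.mp hx
  have hPQ : P ≠ Q := by
    intro hEq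
    have h0 : P.eval x = 0 := by
      rw [hP, eval_prod]
      exact Finset.prod_eq_zero hxS (by simp)
    have h1 : Q.eval x ≠ 0 := by
      rw [hQ, eval_prod]
      rw [Finset.prod_ne_zero_iff]
      intro y hy
      simp only [eval_sub, eval_X, eval_C, sub_ne_zero]
      rintro rfl
      exact hxS' hy
    rw [hEq] at h0
    exact h1 h0
  have hsubne : P - Q ≠ 0 := sub_ne_zero.mpr hPQ
  have hDP : (∏ x ∈ S ∩ S', (X - C x)) ∣ P :=
    Finset.prod_dvd_prod_of_subset _ _ _ Finset.inter_subset_left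
  have hDQ : (∏ x ∈ S ∩ S', (X - C x)) ∣ Q :=
    Finset.prod_dvd_prod_of_subset _ _ _ Finset.inter_subset_right
  have hDd : (∏ x ∈ S ∩ S', (X - C x)).natDegree = (S ∩ S').card := by
    rw [natDegree_prod_of_monic _ _ fun x _ => monic_X_sub_C x]
    simp
  have hDdvd : (∏ x ∈ S ∩ S', (X - C x)) ∣ P - Q := dvd_sub hDP hDQ
  have hdeg : (∏ x ∈ S ∩ S', (X - C x)).natDegree ≤ (P - Q).natDegree :=
    natDegree_le_of_dvd hDdvd hsubne
  have hcard : (S ∩ S').card + (S \ S').card = S.card := Finset.card_inter_add_card_sdiff S S'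
  have hge : M - r ≤ (P - Q).natDegree := by omega
  have hzero : ∀ n, M - r ≤ n → (P - Q).coeff n = 0 := by
    intro n hn
    rw [coeff_sub]
    rcases lt_trichotomy n M with h | h | h
    · rw [hc n hn h, sub_self]
    · subst h
      have h1 : P.coeff P.natDegree = 1 := hPm.coeff_natDegree
      have h2 : Q.coeff Q.natDegree = 1 := hQm.coeff_natDegree
      rw [hPd] at h1; rw [hQd] at h2
      rw [h1, h2, sub_self]
    · rw [coeff_eq_zero_of_natDegree_lt (by omega : P.natDegree < n),
        coeff_eq_zero_of_natDegree_lt (by omega : Q.natDegree < n), sub_self]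
  have hlead : (P - Q).leadingCoeff ≠ 0 := leadingCoeff_ne_zero.mpr hsubne
  exact hlead (hzero _ hge)

/-- There exists an `(s,t,L)_H` error-correcting code `C ⊆ X_M^L` with
`|C| ≥ binom(2^L, M) / 2^{(s+2t)L}`, i.e., with redundancy at most `(s+2t)·L`. -/
theorem stmt_4 (L M s t : ℕ) (hL : 1 ≤ L) (hM : 1 ≤ M) (hML : M ≤ 2 ^ L) :
    ∃ C : Finset (Finset (Fin L → Bool)),
      (∀ S ∈ C, S.card = M) ∧ isHamCode L s t L ↑C ∧
      Nat.choose (2 ^ L) M ≤ C.card * 2 ^ ((s + 2 * t) * L) := by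
  classical
  set r := s + 2 * t with hr
  haveI : Fact (Nat.Prime 2) := ⟨Nat.prime_two⟩
  set F := GaloisField 2 L with hF
  haveI : Fintype F := Fintype.ofFinite F
  have hcardF : Fintype.card F = 2 ^ L := by
    rw [← Nat.card_eq_fintype_card]
    exact GaloisField.card 2 L (by omega)
  have hcardα : Fintype.card (Fin L → Bool) = 2 ^ L := by simp
  let ι : (Fin L → Bool) ≃ F := Fintype.equivOfCardEq (by rw [hcardα, hcardF])
  let color : Finset (Fin L → Bool) → (Fin r → F) :=
    fun S i => (∏ x ∈ S.image ι, (X - C x)).coeff (M - 1 - i)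
  set Xfam := Finset.powersetCard M (Finset.univ : Finset (Fin L → Bool)) with hXfam
  have hsum : Xfam.card = ∑ b : Fin r → F, (Xfam.filter fun S => color S = b).card :=
    Finset.card_eq_sum_card_fiberwise (fun S _ => Finset.mem_univ _)
  have hexists : ∃ b : Fin r → F,
      Xfam.card ≤ Fintype.card (Fin r → F) * (Xfam.filter fun S => color S = b).card := by
    obtain ⟨b, -, hb⟩ := Finset.exists_le_of_sum_le (s := (Finset.univ : Finset (Fin r → F)))
      (f := fun _ => Xfam.card)
      (g := fun b => Fintype.card (Fin r → F) * (Xfam.filter fun S => color S = b).card)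
      Finset.univ_nonempty
      (by rw [← Finset.mul_sum, ← hsum, Finset.sum_const, Finset.card_univ, smul_eq_mul])
    exact ⟨b, hb⟩
  obtain ⟨b, hb⟩ := hexists
  refine ⟨Xfam.filter fun S => color S = b, ?_, ?_, ?_⟩
  · intro S hS
    exact (Finset.mem_powersetCard_univ.mp (Finset.mem_filter.mp hS).1)
  · intro S₁ h1 S₂ h2 hne
    obtain ⟨hm1, hc1⟩ := Finset.mem_filter.mp h1
    obtain ⟨hm2, hc2⟩ := Finset.mem_filter.mp h2
    have hS1 : S₁.card = M := Finset.mem_powersetCard_univ.mp hm1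
    have hS2 : S₂.card = M := Finset.mem_powersetCard_univ.mp hm2
    have hT1 : (S₁.image ι).card = M := by
      rw [Finset.card_image_of_injective _ ι.injective, hS1]
    have hT2 : (S₂.image ι).card = M := by
      rw [Finset.card_image_of_injective _ ι.injective, hS2]
    have hTne : S₁.image ι ≠ S₂.image ι := by
      intro hEq
      exact hne (Finset.image_injective ι.injective hEq)
    have hcol : color S₁ = color S₂ := hc1.trans hc2.symm
    have hcoeff : ∀ i, M - r ≤ i → i < M →
        (∏ x ∈ S₁.image ι, (X - C x)).coeff i =
        (∏ x ∈ S₂.image ι, (X - C x)).coeff i := by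
      intro i hi1 hi2
      have hj : M - 1 - i < r := by omega
      have := congrFun hcol ⟨M - 1 - i, hj⟩
      simpa only [color, show M - 1 - (M - 1 - i) = i by omega] using this
    have hkey : r < ((S₁.image ι) \ (S₂.image ι)).card := poly_key hT1 hT2 hTne hcoeff
    have himg : (S₁.image ι) \ (S₂.image ι) = (S₁ \ S₂).image ι :=
      (Finset.image_sdiff _ _ ι.injective).symm
    rw [himg, Finset.card_image_of_injective _ ι.injective] at hkey
    exact hamBall_disjoint hkey
  · have hX : Xfam.card = Nat.choose (2 ^ L) M := by
      rw [hXfam, Finset.card_powersetCard, Finset.card_univ, hcardα]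
    have hcc : Fintype.card (Fin r → F) = 2 ^ (r * L) := by
      rw [Fintype.card_fun, hcardF, Fintype.card_fin, ← pow_mul, mul_comm]
    rw [← hX, mul_comm, ← hcc]
    exact hb
end

section
/- Let L = 4, M = 3, S₁ = {0000, 1111, 1000}, S₂ = {0000, 1111, 0111}, and C = {S₁, S₂} ⊆ X_3^4. Then: (i) C is (0,1,2) insertion-only correcting, i.e., I_{1,2}(S₁) ∩ I_{1,2}(S₂) = ∅; (ii) C is (0,1,2) deletion-only correcting, i.e., D_{1,2}(S₁) ∩ D_{1,2}(S₂) = ∅; but (iii) C is not a (0,1,2)_L error-correcting code, i.e., B^Lev_{0,1,2}(S₁) ∩ B^Lev_{0,1,2}(S₂) ≠ ∅. -/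
/-- The `t`-fold `ε`-insertion ball `I_{t,ε}(S)`. -/
def insBall (L t ε : ℕ) (S : Finset (List Bool)) : Set (Finset (List Bool)) :=
  { S' | ∃ (U F : Finset (List Bool)) (f : List Bool → List Bool),
      Disjoint U F ∧ U ∪ F = S ∧ F.card ≤ t ∧
      (∀ x ∈ F, x.Sublist (f x) ∧ (f x).length ≤ L + ε) ∧
      S' = U ∪ F.image f }

/-- The `t`-fold `ε`-deletion ball `D_{t,ε}(S)`. -/
def delBall (L t ε : ℕ) (S : Finset (List Bool)) : Set (Finset (List Bool)) :=
  { S' | ∃ (U F : Finset (List Bool)) (f : List Bool → List Bool),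
      Disjoint U F ∧ U ∪ F = S ∧ F.card ≤ t ∧
      (∀ x ∈ F, (f x).Sublist x ∧ L - ε ≤ (f x).length) ∧
      S' = U ∪ F.image f }


private lemma countLen (l : List Bool) : l.count true + l.count false = l.length := by
  induction l with
  | nil => simp
  | cons b t ih => cases b <;> simp [List.count_cons] <;> omega

private lemma lemA (y : List Bool) (h1 : [true,false,false,false].Sublist y)
    (h2 : [false,true,true,true].Sublist y) : 7 ≤ y.length := by
  match y with
  | [] => simp at h1
  | true :: ys =>
    have hb : [false,true,true,true].Sublist ys := by cases h2 with | cons _ h => exact h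
    have ha : [false,false,false].Sublist ys := by
      cases h1 with
      | cons _ h => exact (List.Sublist.cons true (List.Sublist.refl _)).trans h
      | cons_cons _ h => exact h
    have c1 := hb.count_le true
    have c2 := ha.count_le false
    have := countLen ys
    simp [List.count_cons] at c1 c2
    simp only [List.length_cons]
    omega
  | false :: ys =>
    have hb : [true,false,false,false].Sublist ys := by cases h1 with | cons _ h => exact h
    have ha : [true,true,true].Sublist ys := by
      cases h2 with
      | cons _ h => exact (List.Sublist.cons false (List.Sublist.refl _)).trans h
      | cons_cons _ h => exact h
    have c1 := hb.count_le false
    have c2 := ha.count_le true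
    have := countLen ys
    simp [List.count_cons] at c1 c2
    simp only [List.length_cons]
    omega

private lemma lemB (z : List Bool) (h1 : z.Sublist [true,false,false,false])
    (h2 : z.Sublist [false,true,true,true]) : z.length ≤ 1 := by
  have key : ∀ z ∈ List.sublists [true,false,false,false],
      z.Sublist [false,true,true,true] → z.length ≤ 1 := by decide
  exact key z (List.mem_sublists.2 h1) h2

private lemma ballStruct {S S' : Finset (List Bool)} {R : List Bool → List Bool → Prop}
    (h : ∃ (U F : Finset (List Bool)) (f : List Bool → List Bool),
      Disjoint U F ∧ U ∪ F = S ∧ F.card ≤ 1 ∧ (∀ x ∈ F, R x (f x)) ∧ S' = U ∪ F.image f) :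
    S' = S ∨ ∃ x ∈ S, ∃ y, R x y ∧ S' = insert y (S.erase x) := by
  obtain ⟨U, F, f, hd, hUF, hc, hR, hS'⟩ := h
  rcases F.eq_empty_or_nonempty with hF | ⟨x, hx⟩
  · left; subst hF; simpa using hS'.trans (by simpa using hUF)
  · have hFx : F = {x} := by
      apply Finset.eq_singleton_iff_unique_mem.2
      exact ⟨hx, fun b hb => Finset.card_le_one.1 hc b hb x hx⟩
    subst hFx
    right
    refine ⟨x, hUF ▸ Finset.mem_union_right _ hx, f x, hR x hx, ?_⟩
    have hU : U = S.erase x := by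
      ext a
      simp only [Finset.mem_erase]
      constructor
      · intro ha
        refine ⟨?_, hUF ▸ Finset.mem_union_left _ ha⟩
        intro h'
        exact (Finset.disjoint_left.1 hd) ha (h' ▸ hx)
      · rintro ⟨hne, haS⟩
        rcases Finset.mem_union.1 (hUF ▸ haS : a ∈ U ∪ {x}) with h' | h'
        · exact h'
        · exact absurd (Finset.mem_singleton.1 h') hne
    rw [hS', hU, Finset.image_singleton]
    ext a; simp [Finset.mem_insert, or_comm]

private lemma memCases {x y w : List Bool} {T : Finset (List Bool)}
    (hmem : w ∈ insert y (T.erase x)) : w = y ∨ w ∈ T := by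
  rcases Finset.mem_insert.1 hmem with h | h
  · exact Or.inl h
  · exact Or.inr (Finset.mem_of_mem_erase h)


/-- The code `C = {{0000,1111,1000}, {0000,1111,0111}}` is both `(0,1,2)` insertion-only
and `(0,1,2)` deletion-only correcting, but not `(0,1,2)_L` insertion-and-deletion
correcting. -/
theorem stmt_7 :
    let S₁ : Finset (List Bool) :=
      {[false, false, false, false], [true, true, true, true],
        [true, false, false, false]}
    let S₂ : Finset (List Bool) :=
      {[false, false, false, false], [true, true, true, true],
        [false, true, true, true]}
    insBall 4 1 2 S₁ ∩ insBall 4 1 2 S₂ = ∅ ∧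
    delBall 4 1 2 S₁ ∩ delBall 4 1 2 S₂ = ∅ ∧
    (levBall 0 1 2 S₁ ∩ levBall 0 1 2 S₂).Nonempty := by
  intro S₁ S₂
  refine ⟨?_, ?_, ?_⟩
  · -- insertion part
    simp only [S₁, S₂]
    apply Set.eq_empty_iff_forall_notMem.2
    rintro S' ⟨h1, h2⟩
    simp only [insBall, Set.mem_setOf_eq] at h1 h2
    have H1 := ballStruct (R := fun x y => x.Sublist y ∧ y.length ≤ 4 + 2) h1
    have H2 := ballStruct (R := fun x y => x.Sublist y ∧ y.length ≤ 4 + 2) h2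
    rcases H1 with hA | ⟨x1, hx1, y1, ⟨hs1, hl1⟩, hE1⟩
    · rcases H2 with hB | ⟨x2, hx2, y2, ⟨hs2, hl2⟩, hE2⟩
      · rw [hA] at hB; exact absurd hB (by decide)
      · have hm : [true, false, false, false] ∈ S' := by rw [hA]; decide
        rw [hE2] at hm
        rcases memCases hm with h | h
        · subst h; fin_cases hx2 <;> exact absurd hs2 (by decide)
        · exact absurd h (by decide)
    · rcases H2 with hB | ⟨x2, hx2, y2, ⟨hs2, hl2⟩, hE2⟩
      · have hm : [false, true, true, true] ∈ S' := by rw [hB]; decide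
        rw [hE1] at hm
        rcases memCases hm with h | h
        · subst h; fin_cases hx1 <;> exact absurd hs1 (by decide)
        · exact absurd h (by decide)
      · have hx1e : x1 = [true, false, false, false] := by
          by_contra hne
          have hm : [true, false, false, false] ∈ S' := by
            rw [hE1]
            exact Finset.mem_insert_of_mem
              (Finset.mem_erase.2 ⟨fun h => hne h.symm, by decide⟩)
          rw [hE2] at hm
          rcases memCases hm with h | h
          · subst h; fin_cases hx2 <;> exact absurd hs2 (by decide)
          · exact absurd h (by decide)
        have hx2e : x2 = [false, true, true, true] := by
          by_contra hne
          have hm : [false, true, true, true] ∈ S' := by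
            rw [hE2]
            exact Finset.mem_insert_of_mem
              (Finset.mem_erase.2 ⟨fun h => hne h.symm, by decide⟩)
          rw [hE1] at hm
          rcases memCases hm with h | h
          · subst h; fin_cases hx1 <;> exact absurd hs1 (by decide)
          · exact absurd h (by decide)
        subst hx1e; subst hx2e
        have hy1 : y1 ∈ S' := by rw [hE1]; exact Finset.mem_insert_self _ _
        rw [hE2] at hy1
        rcases memCases hy1 with h | h
        · subst h
          have := lemA y1 hs1 hs2
          omega
        · fin_cases h <;> exact absurd hs1 (by decide)
  · -- deletion part
    simp only [S₁, S₂]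
    apply Set.eq_empty_iff_forall_notMem.2
    rintro S' ⟨h1, h2⟩
    simp only [delBall, Set.mem_setOf_eq] at h1 h2
    have H1 := ballStruct (R := fun x y => y.Sublist x ∧ 4 - 2 ≤ y.length) h1
    have H2 := ballStruct (R := fun x y => y.Sublist x ∧ 4 - 2 ≤ y.length) h2
    rcases H1 with hA | ⟨x1, hx1, y1, ⟨hs1, hl1⟩, hE1⟩
    · rcases H2 with hB | ⟨x2, hx2, y2, ⟨hs2, hl2⟩, hE2⟩
      · rw [hA] at hB; exact absurd hB (by decide)
      · have hm : [true, false, false, false] ∈ S' := by rw [hA]; decide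
        rw [hE2] at hm
        rcases memCases hm with h | h
        · subst h; fin_cases hx2 <;> exact absurd hs2 (by decide)
        · exact absurd h (by decide)
    · rcases H2 with hB | ⟨x2, hx2, y2, ⟨hs2, hl2⟩, hE2⟩
      · have hm : [false, true, true, true] ∈ S' := by rw [hB]; decide
        rw [hE1] at hm
        rcases memCases hm with h | h
        · subst h; fin_cases hx1 <;> exact absurd hs1 (by decide)
        · exact absurd h (by decide)
      · have hx1e : x1 = [true, false, false, false] := by
          by_contra hne
          have hm : [true, false, false, false] ∈ S' := by
            rw [hE1]
            exact Finset.mem_insert_of_mem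
              (Finset.mem_erase.2 ⟨fun h => hne h.symm, by decide⟩)
          rw [hE2] at hm
          rcases memCases hm with h | h
          · subst h; fin_cases hx2 <;> exact absurd hs2 (by decide)
          · exact absurd h (by decide)
        have hx2e : x2 = [false, true, true, true] := by
          by_contra hne
          have hm : [false, true, true, true] ∈ S' := by
            rw [hE2]
            exact Finset.mem_insert_of_mem
              (Finset.mem_erase.2 ⟨fun h => hne h.symm, by decide⟩)
          rw [hE1] at hm
          rcases memCases hm with h | h
          · subst h; fin_cases hx1 <;> exact absurd hs1 (by decide)
          · exact absurd h (by decide)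
        subst hx1e; subst hx2e
        have hy1 : y1 ∈ S' := by rw [hE1]; exact Finset.mem_insert_self _ _
        rw [hE2] at hy1
        rcases memCases hy1 with h | h
        · subst h
          have := lemB y1 hs1 hs2
          omega
        · fin_cases h <;> exact absurd hs1 (by decide)
  · -- Levenshtein part
    refine ⟨{[false, false, false, false], [true, true, true, true]}, ?_, ?_⟩
    · simp only [S₁, levBall, Set.mem_setOf_eq]
      refine ⟨{[false, false, false, false], [true, true, true, true]}, ∅,
        {[true, false, false, false]}, fun _ => [false, false, false, false],
        by simp, by decide, by simp, by decide, by simp, by decide, ?_, by decide⟩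
      intro x hx
      have : x = [true, false, false, false] := by simpa using hx
      subst this
      exact ⟨[false, false, false], by decide, by decide, by decide⟩
    · simp only [S₂, levBall, Set.mem_setOf_eq]
      refine ⟨{[false, false, false, false], [true, true, true, true]}, ∅,
        {[false, true, true, true]}, fun _ => [true, true, true, true],
        by simp, by decide, by simp, by decide, by simp, by decide, ?_, by decide⟩
      intro x hx
      have : x = [false, true, true, true] := by simpa using hx
      subst this
      exact ⟨[true, true, true], by decide, by decide, by decide⟩
end

section
/- For every a ∈ {0, 1, …, L}, the code C₄(M,L,a) = { S ∈ X_M^L : Σ_{x ∈ S} s_L(x) ≡ a (mod L+1) } is a (0,1,1)_L error-correcting code. -/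
/-- The (unreduced) Varshamov–Tenengolts checksum `Σ_{i=1}^{|x|} i · x_i`. -/
def vtSum (x : List Bool) : ℕ :=
  ∑ i ∈ Finset.range x.length, (i + 1) * (if x.getD i false then 1 else 0)


lemma count_true_eq (x : List Bool) :
    (∑ i ∈ Finset.range x.length, (if x.getD i false then 1 else 0)) = x.count true := by
  induction x with
  | nil => simp
  | cons a x ih =>
    rw [List.length_cons, Finset.sum_range_succ']
    simp only [List.getD_cons_succ, List.getD_cons_zero, ih, List.count_cons]
    cases a <;> simp [Nat.add_comm]

lemma vtSum_cons (a : Bool) (x : List Bool) :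
    vtSum (a :: x) = (if a then 1 else 0) + vtSum x + x.count true := by
  unfold vtSum
  rw [List.length_cons, Finset.sum_range_succ']
  simp only [List.getD_cons_succ, List.getD_cons_zero]
  rw [← count_true_eq x]
  have : ∀ i ∈ Finset.range x.length, (i + 1 + 1) * (if x.getD i false then 1 else 0)
      = (i + 1) * (if x.getD i false then 1 else 0) + (if x.getD i false then 1 else 0) := by
    intro i _; ring
  rw [Finset.sum_congr rfl this, Finset.sum_add_distrib]
  cases a <;> simp <;> ring

lemma vtSum_append (u w : List Bool) :
    vtSum (u ++ w) = vtSum u + vtSum w + u.length * w.count true := by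
  induction u with
  | nil => simp [vtSum]
  | cons a u ih =>
    rw [List.cons_append, vtSum_cons, ih, vtSum_cons, List.count_append, List.length_cons]
    ring

/-- VT-checksum increment when inserting bit `b` after prefix `u`. -/
def dl (b : Bool) (u v : List Bool) : ℕ :=
  (if b then u.length + 1 else 0) + v.count true

lemma vtSum_insert (u v : List Bool) (b : Bool) :
    vtSum (u ++ b :: v) = vtSum (u ++ v) + dl b u v := by
  rw [vtSum_append, vtSum_append, vtSum_cons, List.count_cons, dl]
  cases b <;> simp <;> ring

lemma dl_le (b : Bool) (u v : List Bool) : dl b u v ≤ u.length + v.length + 1 := by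
  have := (List.count_le_length (a := true) (l := v))
  cases b <;> simp [dl] <;> omega

lemma all_false_of_count (m : List Bool) (h : m.count true = 0) :
    m = List.replicate m.length false := by
  rw [List.eq_replicate_iff]
  refine ⟨rfl, fun b hb => ?_⟩
  cases b
  · rfl
  · exact absurd (List.count_eq_zero.mp h) (by simp [hb])

lemma all_true_of_count (m : List Bool) (h : m.count true = m.length) :
    m = List.replicate m.length true := by
  rw [List.eq_replicate_iff]
  refine ⟨rfl, fun b hb => ?_⟩
  cases b
  · exact absurd ((List.count_eq_length).mp h false hb) (by simp)
  · rfl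

lemma repl_shift (n : ℕ) (b : Bool) :
    b :: List.replicate n b = List.replicate n b ++ [b] := by
  rw [← List.replicate_succ, List.replicate_succ']

lemma helper_short (u m v : List Bool) (b₁ b₂ : Bool)
    (hd : dl b₁ u (m ++ v) = dl b₂ (u ++ m) v) :
    u ++ b₁ :: (m ++ v) = (u ++ m) ++ b₂ :: v := by
  simp only [dl, List.count_append, List.length_append] at hd
  have hc := (List.count_le_length (a := true) (l := m))
  cases b₂
  · -- b₂ = false: b₁ = false and m all false
    have hb₁ : b₁ = false := by cases b₁ <;> simp_all <;> omega
    subst hb₁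
    simp at hd
    have hm0 : m.count true = 0 := by omega
    have hm := all_false_of_count m hm0
    rw [hm]
    simp only [List.append_assoc, List.cons_append]
    rw [show (false :: (List.replicate m.length false ++ v))
        = (List.replicate m.length false ++ [false]) ++ v by
      rw [← repl_shift]; simp]
    simp
  · -- b₂ = true
    have hb₁ : b₁ = true := by cases b₁ <;> simp_all <;> omega
    subst hb₁
    simp at hd
    have hm1 : m.count true = m.length := by omega
    have hm := all_true_of_count m hm1
    rw [hm]
    simp only [List.append_assoc, List.cons_append]
    rw [show (true :: (List.replicate m.length true ++ v))
        = (List.replicate m.length true ++ [true]) ++ v by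
      rw [← repl_shift]; simp]
    simp

lemma short_eq (u₁ v₁ u₂ v₂ : List Bool) (b₁ b₂ : Bool)
    (h : u₁ ++ v₁ = u₂ ++ v₂) (hd : dl b₁ u₁ v₁ = dl b₂ u₂ v₂) :
    u₁ ++ b₁ :: v₁ = u₂ ++ b₂ :: v₂ := by
  rcases List.append_eq_append_iff.mp h with ⟨m, hm1, hm2⟩ | ⟨m, hm1, hm2⟩
  · subst hm1; subst hm2
    exact helper_short u₁ m v₂ b₁ b₂ hd
  · subst hm1; subst hm2
    exact (helper_short u₂ m v₁ b₂ b₁ hd.symm).symm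

lemma helper_long (u m v : List Bool) (b₁ b₂ : Bool)
    (hd : dl b₁ u (m ++ b₂ :: v) = dl b₂ (u ++ b₁ :: m) v) :
    u ++ (m ++ b₂ :: v) = (u ++ b₁ :: m) ++ v := by
  simp only [dl, List.count_append, List.count_cons, List.length_append,
    List.length_cons] at hd
  have hc := (List.count_le_length (a := true) (l := m))
  cases b₂
  · have hb₁ : b₁ = false := by cases b₁ <;> simp_all <;> omega
    subst hb₁
    simp at hd
    have hm0 : m.count true = 0 := by omega
    have hm := all_false_of_count m hm0
    rw [hm]
    simp only [List.append_assoc, List.cons_append]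
    rw [show (List.replicate m.length false ++ false :: v)
        = (List.replicate m.length false ++ [false]) ++ v by simp]
    rw [← repl_shift]
    simp
  · have hb₁ : b₁ = true := by cases b₁ <;> simp_all <;> omega
    subst hb₁
    simp at hd
    have hm1 : m.count true = m.length := by omega
    have hm := all_true_of_count m hm1
    rw [hm]
    simp only [List.append_assoc, List.cons_append]
    rw [show (List.replicate m.length true ++ true :: v)
        = (List.replicate m.length true ++ [true]) ++ v by simp]
    rw [← repl_shift]
    simp

lemma long_eq (u₁ v₁ u₂ v₂ : List Bool) (b₁ b₂ : Bool)
    (h : u₁ ++ b₁ :: v₁ = u₂ ++ b₂ :: v₂) (hd : dl b₁ u₁ v₁ = dl b₂ u₂ v₂) :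
    u₁ ++ v₁ = u₂ ++ v₂ := by
  rcases List.append_eq_append_iff.mp h with ⟨m, hm1, hm2⟩ | ⟨m, hm1, hm2⟩
  · subst hm1
    cases m with
    | nil =>
      simp only [List.nil_append] at hm2
      rw [List.cons_eq_cons] at hm2
      rw [hm2.2]; simp
    | cons c m =>
      simp only [List.cons_append, List.cons_eq_cons] at hm2
      obtain ⟨hc, hv₁⟩ := hm2
      subst hc; subst hv₁
      exact helper_long u₁ m v₂ b₁ b₂ hd
  · subst hm1
    cases m with
    | nil =>
      simp only [List.nil_append] at hm2
      rw [List.cons_eq_cons] at hm2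
      rw [hm2.2]; simp
    | cons c m =>
      simp only [List.cons_append, List.cons_eq_cons] at hm2
      obtain ⟨hc, hv₂⟩ := hm2
      subst hc; subst hv₂
      exact (helper_long u₂ m v₁ b₂ b₁ hd.symm).symm

lemma sublist_succ {y x : List Bool} (h : y.Sublist x) (hl : x.length = y.length + 1) :
    ∃ (u : List Bool) (b : Bool) (v : List Bool), x = u ++ b :: v ∧ y = u ++ v := by
  induction h with
  | slnil => simp at hl
  | @cons l₁ l₂ b h ih =>
    simp only [List.length_cons] at hl
    have : l₁ = l₂ := h.eq_of_length (by omega)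
    subst this
    exact ⟨[], b, l₁, rfl, rfl⟩
  | @cons_cons l₁ l₂ a h ih =>
    simp only [List.length_cons] at hl
    obtain ⟨u, b, v, h1, h2⟩ := ih (by omega)
    exact ⟨a :: u, b, v, by rw [h1]; rfl, by rw [h2]; rfl⟩

/-- VT uniqueness, deletion direction. -/
lemma vt_del {x₁ x₂ y : List Bool} (h₁ : y.Sublist x₁) (h₂ : y.Sublist x₂)
    (hl₁ : x₁.length = y.length + 1) (hl₂ : x₂.length = y.length + 1)
    (hmod : vtSum x₁ % (y.length + 2) = vtSum x₂ % (y.length + 2)) : x₁ = x₂ := by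
  obtain ⟨u₁, b₁, v₁, e₁, f₁⟩ := sublist_succ h₁ hl₁
  obtain ⟨u₂, b₂, v₂, e₂, f₂⟩ := sublist_succ h₂ hl₂
  have hy : u₁ ++ v₁ = u₂ ++ v₂ := f₁.symm.trans f₂
  have hv₁ : vtSum x₁ = vtSum y + dl b₁ u₁ v₁ := by rw [e₁, vtSum_insert, ← f₁]
  have hv₂ : vtSum x₂ = vtSum y + dl b₂ u₂ v₂ := by rw [e₂, vtSum_insert, ← f₂]
  have hb₁ : dl b₁ u₁ v₁ ≤ y.length + 1 := by
    have := dl_le b₁ u₁ v₁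
    have : u₁.length + v₁.length = y.length := by rw [f₁]; simp
    have := dl_le b₁ u₁ v₁; omega
  have hb₂ : dl b₂ u₂ v₂ ≤ y.length + 1 := by
    have : u₂.length + v₂.length = y.length := by rw [f₂]; simp
    have := dl_le b₂ u₂ v₂; omega
  have hdd : dl b₁ u₁ v₁ = dl b₂ u₂ v₂ := by
    rw [hv₁, hv₂] at hmod
    have := (Nat.ModEq.add_left_cancel' (vtSum y) hmod)
    rwa [Nat.ModEq, Nat.mod_eq_of_lt (by omega), Nat.mod_eq_of_lt (by omega)] at this
  rw [e₁, e₂]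
  exact short_eq u₁ v₁ u₂ v₂ b₁ b₂ hy hdd

lemma dl_eq_zero {b : Bool} {u v : List Bool} (h : dl b u v = 0) :
    b = false ∧ v.count true = 0 := by
  cases b <;> simp [dl] at h <;> simp_all

lemma dl_eq_max {b : Bool} {u v : List Bool} (h : dl b u v = u.length + v.length + 1) :
    b = true ∧ v.count true = v.length := by
  have hle := (List.count_le_length (a := true) (l := v))
  cases b
  · exfalso; simp [dl] at h; omega
  · simp [dl] at h; simp; omega

/-- The extremal case for insertion: cannot have one deletion with delta 0
and another with maximal delta on the same word. -/
lemma extremal_absurd {u₁ v₁ u₂ v₂ : List Bool}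
    (h : u₁ ++ true :: v₁ = u₂ ++ false :: v₂)
    (h₁ : v₁.count true = v₁.length) (h₂ : v₂.count true = 0) : False := by
  rcases List.append_eq_append_iff.mp h with ⟨m, hm1, hm2⟩ | ⟨m, hm1, hm2⟩
  · cases m with
    | nil => simp at hm2
    | cons c m =>
      simp only [List.cons_append, List.cons_eq_cons] at hm2
      obtain ⟨hc, hv⟩ := hm2
      have : (false : Bool) ∈ v₁ := by rw [hv]; simp
      have := (List.count_eq_length.mp h₁) false this
      simp at this
  · cases m with
    | nil => simp at hm2
    | cons c m =>
      simp only [List.cons_append, List.cons_eq_cons] at hm2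
      obtain ⟨hc, hv⟩ := hm2
      have : (true : Bool) ∈ v₂ := by rw [hv]; simp
      exact absurd (List.count_eq_zero.mp h₂) (by simp [this])

/-- VT uniqueness, insertion direction. -/
lemma vt_ins {x₁ x₂ y : List Bool} (h₁ : x₁.Sublist y) (h₂ : x₂.Sublist y)
    (hl₁ : y.length = x₁.length + 1) (hl₂ : y.length = x₂.length + 1)
    (hmod : vtSum x₁ % y.length = vtSum x₂ % y.length) : x₁ = x₂ := by
  obtain ⟨u₁, b₁, v₁, e₁, f₁⟩ := sublist_succ h₁ hl₁
  obtain ⟨u₂, b₂, v₂, e₂, f₂⟩ := sublist_succ h₂ hl₂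
  have hy : u₁ ++ b₁ :: v₁ = u₂ ++ b₂ :: v₂ := e₁.symm.trans e₂
  have hv₁ : vtSum y = vtSum x₁ + dl b₁ u₁ v₁ := by rw [e₁, vtSum_insert, ← f₁]
  have hv₂ : vtSum y = vtSum x₂ + dl b₂ u₂ v₂ := by rw [e₂, vtSum_insert, ← f₂]
  have hlen₁ : u₁.length + v₁.length + 1 = y.length := by rw [e₁]; simp; omega
  have hlen₂ : u₂.length + v₂.length + 1 = y.length := by rw [e₂]; simp; omega
  have hb₁ : dl b₁ u₁ v₁ ≤ y.length := by have := dl_le b₁ u₁ v₁; omega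
  have hb₂ : dl b₂ u₂ v₂ ≤ y.length := by have := dl_le b₂ u₂ v₂; omega
  set n := y.length with hn
  have hpos : 0 < n := by omega
  have hdd : dl b₁ u₁ v₁ % n = dl b₂ u₂ v₂ % n := by
    have c1 : (vtSum x₁ + dl b₁ u₁ v₁) % n = (vtSum x₂ + dl b₂ u₂ v₂) % n := by
      rw [← hv₁, ← hv₂]
    have c2 : (vtSum x₁ + dl b₁ u₁ v₁) % n = (vtSum x₂ + dl b₁ u₁ v₁) % n :=
      Nat.ModEq.add_right _ hmod
    have := (Nat.ModEq.add_left_cancel' (vtSum x₂) (c2.symm.trans c1))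
    exact this
  -- either deltas equal, or one is 0 and the other is n
  by_cases hcase : dl b₁ u₁ v₁ = dl b₂ u₂ v₂
  · rw [f₁, f₂]
    exact long_eq u₁ v₁ u₂ v₂ b₁ b₂ hy hcase
  · exfalso
    have w₁ : dl b₁ u₁ v₁ = n ∨ dl b₁ u₁ v₁ % n = dl b₁ u₁ v₁ := by
      rcases eq_or_lt_of_le hb₁ with q | q
      · exact Or.inl q
      · exact Or.inr (Nat.mod_eq_of_lt q)
    have w₂ : dl b₂ u₂ v₂ = n ∨ dl b₂ u₂ v₂ % n = dl b₂ u₂ v₂ := by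
      rcases eq_or_lt_of_le hb₂ with q | q
      · exact Or.inl q
      · exact Or.inr (Nat.mod_eq_of_lt q)
    have h0n : (dl b₁ u₁ v₁ = 0 ∧ dl b₂ u₂ v₂ = n) ∨ (dl b₁ u₁ v₁ = n ∧ dl b₂ u₂ v₂ = 0) := by
      rcases w₁ with q₁ | q₁ <;> rcases w₂ with q₂ | q₂
      · omega
      · rw [q₁, Nat.mod_self] at hdd; omega
      · rw [q₂, Nat.mod_self] at hdd; omega
      · omega
    rcases h0n with ⟨ha, hb⟩ | ⟨ha, hb⟩
    · obtain ⟨hbf, hcf⟩ := dl_eq_zero ha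
      obtain ⟨hbt, hct⟩ := dl_eq_max (by omega : dl b₂ u₂ v₂ = u₂.length + v₂.length + 1)
      subst hbf; subst hbt
      exact extremal_absurd hy.symm hct hcf
    · obtain ⟨hbf, hcf⟩ := dl_eq_zero hb
      obtain ⟨hbt, hct⟩ := dl_eq_max (by omega : dl b₁ u₁ v₁ = u₁.length + v₁.length + 1)
      subst hbf; subst hbt
      exact extremal_absurd hy hct hcf

lemma withinLev_one_cases {x y : List Bool} (h : withinLev 1 x y) :
    (y.Sublist x ∧ x.length ≤ y.length + 1) ∨ (x.Sublist y ∧ y.length ≤ x.length + 1) := by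
  obtain ⟨z, hzx, hzy, hle⟩ := h
  have l1 := hzx.length_le
  have l2 := hzy.length_le
  rcases (by omega : x.length = z.length ∨ y.length = z.length) with he | he
  · have : z = x := hzx.eq_of_length he.symm
    subst this
    exact Or.inr ⟨hzy, by omega⟩
  · have : z = y := hzy.eq_of_length he.symm
    subst this
    exact Or.inl ⟨hzx, by omega⟩

lemma ball_cases {L : ℕ} {S S' : Finset (List Bool)}
    (hlen : ∀ x ∈ S, x.length = L) (h : S' ∈ levBall 0 1 1 S) :
    S' = S ∨ ∃ x y : List Bool, x ∈ S ∧ y.length ≠ L ∧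
      ((y.Sublist x ∧ x.length = y.length + 1) ∨ (x.Sublist y ∧ y.length = x.length + 1)) ∧
      S' = insert y (S.erase x) := by
  obtain ⟨U, Lo, F, f, hUL, hUF, hLF, hunion, hLo, hF, hf, hS'⟩ := h
  have hLoe : Lo = ∅ := Finset.card_eq_zero.mp (Nat.le_zero.mp hLo)
  subst hLoe
  rw [Finset.union_empty] at hunion
  rcases Nat.le_one_iff_eq_zero_or_eq_one.mp hF with h0 | h1
  · have : F = ∅ := Finset.card_eq_zero.mp h0
    subst this
    left
    rw [hS', Finset.image_empty, Finset.union_empty, ← hunion, Finset.union_empty]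
  · obtain ⟨x, hx⟩ := Finset.card_eq_one.mp h1
    subst hx
    have hxS : x ∈ S := by rw [← hunion]; simp
    have hxU : x ∉ U := Finset.disjoint_left.mp hUF.symm (by simp)
    have hxL : x.length = L := hlen x hxS
    have hw := hf x (by simp)
    set y := f x with hy
    have himg : ({x} : Finset (List Bool)).image f = {y} := by simp [hy]
    rw [himg] at hS'
    have herase : S.erase x = U := by
      rw [← hunion, Finset.union_comm, ← Finset.insert_eq, Finset.erase_insert hxU]
    by_cases hyL : y.length = L
    · -- y = x, so S' = S
      left
      have hxy : y = x := by
        rcases withinLev_one_cases hw with ⟨hs, _⟩ | ⟨hs, _⟩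
        · exact hs.eq_of_length (by omega)
        · exact (hs.eq_of_length (by omega)).symm
      rw [hS', hxy, ← hunion]
    · right
      refine ⟨x, y, hxS, hyL, ?_, ?_⟩
      · rcases withinLev_one_cases hw with ⟨hs, hl⟩ | ⟨hs, hl⟩
        · exact Or.inl ⟨hs, by have := hs.length_le; omega⟩
        · exact Or.inr ⟨hs, by have := hs.length_le; omega⟩
      · rw [hS', herase, Finset.union_comm, ← Finset.insert_eq]


/-- Construction 4: for every `0 ≤ a ≤ L`, the code
`C₄(M,L,a) = { S ∈ X_M^L : Σ_{x ∈ S} s_L(x) ≡ a (mod L+1) }` is a `(0,1,1)_L`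
error-correcting code. -/
theorem stmt_8 (L M : ℕ) (hL : 1 ≤ L) (hM : 1 ≤ M) (hML : M ≤ 2 ^ L)
    (a : ℕ) (ha : a ≤ L) :
    isLevCode 0 1 1
      { S | S.card = M ∧ (∀ x ∈ S, x.length = L) ∧
            (∑ x ∈ S, vtSum x % (L + 1)) % (L + 1) = a } := by
  intro S₁ h₁ S₂ h₂ hne
  rw [Set.eq_empty_iff_forall_notMem]
  rintro S' ⟨m₁, m₂⟩
  obtain ⟨hc₁, hl₁, hs₁⟩ := h₁
  obtain ⟨hc₂, hl₂, hs₂⟩ := h₂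
  rcases ball_cases hl₁ m₁ with e₁ | ⟨x₁, y₁, hx₁, hy₁L, hrel₁, e₁⟩ <;>
    rcases ball_cases hl₂ m₂ with e₂ | ⟨x₂, y₂, hx₂, hy₂L, hrel₂, e₂⟩
  · exact hne (e₁.symm.trans e₂)
  · have hmem : y₂ ∈ S₁ := by
      rw [← e₁, e₂]; exact Finset.mem_insert_self _ _
    exact hy₂L (hl₁ _ hmem)
  · have hmem : y₁ ∈ S₂ := by
      rw [← e₂, e₁]; exact Finset.mem_insert_self _ _
    exact hy₁L (hl₂ _ hmem)
  · -- main case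
    have hyne₁ : y₁ ∉ S₁.erase x₁ := fun h => hy₁L (hl₁ _ (Finset.mem_of_mem_erase h))
    have hyne₂ : y₂ ∉ S₂.erase x₂ := fun h => hy₂L (hl₂ _ (Finset.mem_of_mem_erase h))
    have hyy : y₁ = y₂ := by
      have h1 : y₁ ∈ insert y₂ (S₂.erase x₂) := by
        rw [← e₂, e₁]; exact Finset.mem_insert_self _ _
      rcases Finset.mem_insert.mp h1 with h | h
      · exact h
      · exact absurd (hl₂ _ (Finset.mem_of_mem_erase h)) hy₁L
    subst hyy
    have hEE : S₁.erase x₁ = S₂.erase x₂ := by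
      calc S₁.erase x₁ = (insert y₁ (S₁.erase x₁)).erase y₁ :=
            (Finset.erase_insert hyne₁).symm
        _ = (insert y₁ (S₂.erase x₂)).erase y₁ := by rw [← e₁, ← e₂]
        _ = S₂.erase x₂ := Finset.erase_insert hyne₂
    have hx12 : x₁ ≠ x₂ := by
      intro h
      exact hne (by rw [← Finset.insert_erase hx₁, ← Finset.insert_erase hx₂, hEE, h])
    have hxl₁ : x₁.length = L := hl₁ _ hx₁
    have hxl₂ : x₂.length = L := hl₂ _ hx₂
    have key₁ : vtSum x₁ % (L + 1) + ∑ x ∈ S₁.erase x₁, vtSum x % (L + 1)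
        = ∑ x ∈ S₁, vtSum x % (L + 1) :=
      Finset.add_sum_erase S₁ (fun x => vtSum x % (L + 1)) hx₁
    have key₂ : vtSum x₂ % (L + 1) + ∑ x ∈ S₂.erase x₂, vtSum x % (L + 1)
        = ∑ x ∈ S₂, vtSum x % (L + 1) :=
      Finset.add_sum_erase S₂ (fun x => vtSum x % (L + 1)) hx₂
    have hsum₁ : (vtSum x₁ % (L + 1) + ∑ x ∈ S₁.erase x₁, vtSum x % (L + 1)) % (L + 1) = a := by
      rw [key₁]; exact hs₁
    have hsum₂ : (vtSum x₂ % (L + 1) + ∑ x ∈ S₁.erase x₁, vtSum x % (L + 1)) % (L + 1) = a := by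
      rw [hEE, key₂]; exact hs₂
    have hmm : vtSum x₁ % (L + 1) = vtSum x₂ % (L + 1) := by
      have h0 := hsum₁.trans hsum₂.symm
      have h2 := Nat.ModEq.add_right_cancel' _ (h0 : Nat.ModEq (L+1) _ _)
      have hA : vtSum x₁ % (L + 1) < L + 1 := Nat.mod_lt _ (by omega)
      have hB : vtSum x₂ % (L + 1) < L + 1 := Nat.mod_lt _ (by omega)
      rwa [Nat.ModEq, Nat.mod_eq_of_lt hA, Nat.mod_eq_of_lt hB] at h2
    rcases hrel₁ with ⟨hs, hl⟩ | ⟨hs, hl⟩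
    · rcases hrel₂ with ⟨hs', hl'⟩ | ⟨hs', hl'⟩
      · refine hx12 (vt_del hs hs' hl hl' ?_)
        rw [show y₁.length + 2 = L + 1 by omega]
        exact hmm
      · omega
    · rcases hrel₂ with ⟨hs', hl'⟩ | ⟨hs', hl'⟩
      · omega
      · refine hx12 (vt_ins hs hs' hl hl' ?_)
        rw [show y₁.length = L + 1 by omega]
        exact hmm
end

section
/- For every a ∈ {0, 1, …, L}, the code C₅(M,L,a) = { S ∈ X_M^L : s_L(x) ≡ a (mod L+1) for every x ∈ S } is a (0,M,1)_L error-correcting code. -/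
namespace VTHelp

/-- numeric value of a bit -/
def bnat (b : Bool) : ℕ := if b then 1 else 0

lemma bnat_true : bnat true = 1 := rfl
lemma bnat_false : bnat false = 0 := rfl

lemma bnat_le_one (b : Bool) : bnat b ≤ 1 := by cases b <;> simp [bnat]

lemma bnat_eq_zero {b : Bool} (h : bnat b = 0) : b = false := by
  cases b <;> simp [bnat] at h ⊢

lemma bnat_pos {b : Bool} (h : 1 ≤ bnat b) : b = true := by
  cases b <;> simp [bnat] at h ⊢

lemma count_true_cons (b : Bool) (y : List Bool) :
    (b :: y).count true = bnat b + y.count true := by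
  cases b <;> simp [List.count_cons, bnat] <;> omega

lemma sum_getD (y : List Bool) :
    ∑ i ∈ Finset.range y.length, (if y.getD i false then 1 else 0) = y.count true := by
  induction y with
  | nil => simp
  | cons b t ih =>
    rw [List.length_cons, Finset.sum_range_succ']
    simp only [List.getD_cons_succ, List.getD_cons_zero]
    rw [ih, count_true_cons]
    cases b <;> simp [bnat] <;> omega

lemma vtSum_cons (b : Bool) (y : List Bool) :
    vtSum (b :: y) = bnat b + vtSum y + y.count true := by
  unfold vtSum
  rw [List.length_cons, Finset.sum_range_succ']
  simp only [List.getD_cons_succ, List.getD_cons_zero]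
  have h : ∀ i ∈ Finset.range y.length, (i + 1 + 1) * (if y.getD i false then 1 else 0)
      = (i + 1) * (if y.getD i false then 1 else 0) + (if y.getD i false then 1 else 0) := by
    intro i _; ring
  rw [Finset.sum_congr rfl h, Finset.sum_add_distrib, sum_getD]
  cases b <;> simp [bnat] <;> omega

lemma count_insertIdx (b : Bool) : ∀ (y : List Bool) (i : ℕ), i ≤ y.length →
    (y.insertIdx i b).count true = y.count true + bnat b := by
  intro y
  induction y with
  | nil =>
    intro i hi
    have : i = 0 := by simpa using hi
    subst this
    simp [List.insertIdx, count_true_cons]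
  | cons a t ih =>
    intro i hi
    cases i with
    | zero =>
      show ((b :: a :: t).count true) = _
      rw [count_true_cons, count_true_cons]
      omega
    | succ k =>
      rw [List.insertIdx_succ_cons, count_true_cons, count_true_cons,
        ih k (by simpa using hi)]
      omega

lemma vtSum_insertIdx (b : Bool) : ∀ (y : List Bool) (i : ℕ), i ≤ y.length →
    vtSum (y.insertIdx i b) = vtSum y + (i + 1) * bnat b + (y.drop i).count true := by
  intro y
  induction y with
  | nil =>
    intro i hi
    have : i = 0 := by simpa using hi
    subst this
    show vtSum [b] = _
    rw [vtSum_cons]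
    simp [vtSum]
  | cons a t ih =>
    intro i hi
    cases i with
    | zero =>
      show vtSum (b :: a :: t) = _
      rw [vtSum_cons, count_true_cons]
      simp only [List.drop_zero]
      rw [count_true_cons]
      ring
    | succ k =>
      have hk : k ≤ t.length := by simpa using hi
      rw [List.insertIdx_succ_cons, vtSum_cons, ih k hk, count_insertIdx b t k hk,
        vtSum_cons, List.drop_succ_cons]
      ring

lemma count_eraseIdx : ∀ (y : List Bool) (i : ℕ), i < y.length →
    (y.eraseIdx i).count true + bnat (y.getD i false) = y.count true := by
  intro y
  induction y with
  | nil => intro i hi; simp at hi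
  | cons a t ih =>
    intro i hi
    cases i with
    | zero =>
      show t.count true + _ = _
      rw [count_true_cons]
      simp only [List.getD_cons_zero]
      omega
    | succ k =>
      rw [List.eraseIdx_cons_succ, count_true_cons, count_true_cons, List.getD_cons_succ]
      have := ih k (by simpa using hi)
      omega

lemma vtSum_eraseIdx : ∀ (y : List Bool) (i : ℕ), i < y.length →
    vtSum (y.eraseIdx i) + (i + 1) * bnat (y.getD i false)
      + (y.drop (i + 1)).count true = vtSum y := by
  intro y
  induction y with
  | nil => intro i hi; simp at hi
  | cons a t ih =>
    intro i hi
    cases i with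
    | zero =>
      show vtSum t + _ + _ = _
      rw [vtSum_cons]
      simp only [List.getD_cons_zero, List.drop_succ_cons, List.drop_zero]
      ring
    | succ k =>
      have hk : k < t.length := by simpa using hi
      rw [List.eraseIdx_cons_succ, vtSum_cons, vtSum_cons, List.getD_cons_succ,
        List.drop_succ_cons]
      have h1 := ih k hk
      have h2 := count_eraseIdx t k hk
      have h3 : (k + 1 + 1) * bnat (t.getD k false)
          = (k + 1) * bnat (t.getD k false) + bnat (t.getD k false) := by ring
      omega

lemma exists_insertIdx {z x : List Bool} (h : z.Sublist x) :
    z.length + 1 = x.length → ∃ i b, i ≤ z.length ∧ x = z.insertIdx i b := by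
  induction h with
  | slnil => intro h; simp at h
  | @cons l₁ l₂ a h ih =>
    intro hl
    have hz : l₁ = l₂ := h.eq_of_length (by simpa using hl)
    subst hz
    exact ⟨0, a, Nat.zero_le _, rfl⟩
  | @cons_cons l₁ l₂ a h ih =>
    intro hl
    obtain ⟨i, b, hi, hx⟩ := ih (by simpa using hl)
    exact ⟨i + 1, b, by simpa using hi, by rw [List.insertIdx_succ_cons, ← hx]⟩

lemma exists_eraseIdx {x y : List Bool} (h : x.Sublist y) :
    x.length + 1 = y.length → ∃ i, i < y.length ∧ x = y.eraseIdx i := by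
  induction h with
  | slnil => intro h; simp at h
  | @cons l₁ l₂ a h ih =>
    intro hl
    have hz : l₁ = l₂ := h.eq_of_length (by simpa using hl)
    subst hz
    exact ⟨0, by simp, rfl⟩
  | @cons_cons l₁ l₂ a h ih =>
    intro hl
    obtain ⟨i, hi, hx⟩ := ih (by simpa using hl)
    exact ⟨i + 1, by simpa using hi, by rw [List.eraseIdx_cons_succ, ← hx]⟩

/-- `cnt y i` counts the `true`s from position `i` on. -/
def cnt (y : List Bool) (i : ℕ) : ℕ := (y.drop i).count true

lemma cnt_cons {y : List Bool} {i : ℕ} (h : i < y.length) :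
    cnt y i = bnat (y.getD i false) + cnt y (i + 1) := by
  unfold cnt
  rw [List.drop_eq_getElem_cons h, count_true_cons, List.getD_eq_getElem _ _ h]

lemma cnt_le_len (y : List Bool) (i : ℕ) : cnt y i ≤ y.length - i := by
  have : (y.drop i).count true ≤ (y.drop i).length := List.count_le_length
  simpa [cnt] using this

lemma cnt_mono (y : List Bool) {i j : ℕ} (h : i ≤ j) : cnt y j ≤ cnt y i := by
  have hd : y.drop j = (y.drop i).drop (j - i) := by
    rw [List.drop_drop]; congr 1; omega
  unfold cnt
  rw [hd]
  exact (List.drop_sublist _ _).count_le true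

lemma cnt_succ_le (y : List Bool) (j : ℕ) : cnt y j ≤ cnt y (j + 1) + 1 := by
  by_cases h : j < y.length
  · rw [cnt_cons h]; have := bnat_le_one (y.getD j false); omega
  · unfold cnt
    rw [List.drop_eq_nil_of_le (by omega)]
    simp

lemma cnt_bound (y : List Bool) {i j : ℕ} (h : i ≤ j) : cnt y i ≤ cnt y j + (j - i) := by
  induction j, h using Nat.le_induction with
  | base => simp
  | succ n hn ih =>
    have := cnt_succ_le y n
    omega

lemma seg_false {y : List Bool} {i j : ℕ} (hij : i ≤ j) (h : cnt y i = cnt y j) :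
    ∀ k, i ≤ k → k < j → y.getD k false = false := by
  intro k hik hkj
  by_cases hk : k < y.length
  · have h1 : cnt y k ≤ cnt y i := cnt_mono y hik
    have h2 : cnt y j ≤ cnt y (k + 1) := cnt_mono y (by omega)
    have h3 := cnt_cons hk
    exact bnat_eq_zero (by omega)
  · exact List.getD_eq_default _ _ (by omega)

lemma seg_true {y : List Bool} {i j : ℕ} (hij : i ≤ j)
    (h : cnt y i = cnt y j + (j - i)) :
    ∀ k, i ≤ k → k < j → y.getD k false = true := by
  intro k hik hkj
  by_cases hk : k < y.length
  · have h1 : cnt y i ≤ cnt y k + (k - i) := cnt_bound y hik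
    have h2 : cnt y (k + 1) ≤ cnt y j + (j - (k + 1)) := cnt_bound y (by omega)
    have h3 := cnt_cons hk
    have h4 : cnt y j ≤ cnt y i := cnt_mono y hij
    exact bnat_pos (by omega)
  · exfalso
    have h1 : cnt y i ≤ y.length - i := cnt_le_len y i
    have h2 : cnt y j ≤ cnt y i := cnt_mono y hij
    have h5 : cnt y j ≤ y.length - j := cnt_le_len y j
    omega

lemma insert_step : ∀ (y : List Bool) (i : ℕ) (b : Bool), i < y.length →
    y.getD i false = b → y.insertIdx i b = y.insertIdx (i + 1) b := by
  intro y
  induction y with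
  | nil => intro i b h; simp at h
  | cons a t ih =>
    intro i b h hb
    cases i with
    | zero =>
      simp only [List.getD_cons_zero] at hb
      subst hb
      simp [List.insertIdx]
    | succ k =>
      rw [List.insertIdx_succ_cons, List.insertIdx_succ_cons,
        ih k b (by simpa using h) (by simpa using hb)]

lemma insert_chain (y : List Bool) (b : Bool) {i j : ℕ} (hij : i ≤ j)
    (hj : j ≤ y.length) (hseg : ∀ k, i ≤ k → k < j → y.getD k false = b) :
    y.insertIdx i b = y.insertIdx j b := by
  induction j, hij using Nat.le_induction with
  | base => rfl
  | succ n hn ih =>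
    rw [ih (by omega) (fun k h1 h2 => hseg k h1 (by omega))]
    exact insert_step y n b (by omega) (hseg n hn (by omega))

lemma erase_step : ∀ (y : List Bool) (i : ℕ), i + 1 < y.length →
    y.getD i false = y.getD (i + 1) false → y.eraseIdx i = y.eraseIdx (i + 1) := by
  intro y
  induction y with
  | nil => intro i h; simp at h
  | cons a t ih =>
    intro i h hb
    cases i with
    | zero =>
      cases t with
      | nil => simp at h
      | cons c t' =>
        simp only [List.getD_cons_zero, List.getD_cons_succ] at hb
        simp [List.eraseIdx, hb]
    | succ k =>
      rw [List.eraseIdx_cons_succ, List.eraseIdx_cons_succ,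
        ih k (by simpa using h) (by simpa using hb)]

lemma erase_chain (y : List Bool) (b : Bool) {i j : ℕ} (hij : i ≤ j)
    (hj : j < y.length) (hseg : ∀ k, i ≤ k → k ≤ j → y.getD k false = b) :
    y.eraseIdx i = y.eraseIdx j := by
  induction j, hij using Nat.le_induction with
  | base => rfl
  | succ n hn ih =>
    rw [ih (by omega) (fun k h1 h2 => hseg k h1 (by omega))]
    exact erase_step y n (by omega)
      ((hseg n hn (by omega)).trans (hseg (n + 1) (by omega) (by omega)).symm)

lemma insert_eq (y : List Bool) {i j : ℕ} (b c : Bool) (hij : i ≤ j) (hj : j ≤ y.length)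
    (h : (i + 1) * bnat b + cnt y i = (j + 1) * bnat c + cnt y j) :
    y.insertIdx i b = y.insertIdx j c := by
  have hmono : cnt y j ≤ cnt y i := cnt_mono y hij
  have hbound : cnt y i ≤ cnt y j + (j - i) := cnt_bound y hij
  cases b <;> cases c <;>
    simp only [bnat, if_true, if_false, Bool.false_eq_true, mul_one, mul_zero,
      zero_add, add_zero] at h
  · exact insert_chain y false hij hj (seg_false hij h)
  · omega
  · omega
  · exact insert_chain y true hij hj (seg_true hij (by omega))

lemma erase_eq (y : List Bool) {i j : ℕ} (hij : i ≤ j) (hj : j < y.length)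
    (h : (i + 1) * bnat (y.getD i false) + cnt y (i + 1)
       = (j + 1) * bnat (y.getD j false) + cnt y (j + 1)) :
    y.eraseIdx i = y.eraseIdx j := by
  have hmono : cnt y (j + 1) ≤ cnt y (i + 1) := cnt_mono y (by omega)
  have hbound : cnt y (i + 1) ≤ cnt y (j + 1) + ((j + 1) - (i + 1)) :=
    cnt_bound y (by omega)
  rcases Bool.eq_false_or_eq_true (y.getD i false) with hbi | hbi <;>
    rcases Bool.eq_false_or_eq_true (y.getD j false) with hbj | hbj <;>
      rw [hbi, hbj] at h <;>
        simp only [bnat, if_true, if_false, Bool.false_eq_true, mul_one, mul_zero,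
          zero_add, add_zero] at h
  · -- both true
    have hseg := seg_true (y := y) (i := i + 1) (j := j + 1) (by omega) (by omega)
    refine erase_chain y true hij hj ?_
    intro k h1 h2
    rcases Nat.eq_or_lt_of_le h1 with rfl | h1'
    · exact hbi
    · exact hseg k (by omega) (by omega)
  · omega
  · omega
  · -- both false
    have hseg := seg_false (y := y) (i := i + 1) (j := j + 1) (by omega) (by omega)
    refine erase_chain y false hij hj ?_
    intro k h1 h2
    rcases Nat.eq_or_lt_of_le h1 with rfl | h1'
    · exact hbi
    · exact hseg k (by omega) (by omega)

lemma del_case {L : ℕ} {x₁ x₂ y : List Bool} (h₁ : x₁.length = L) (h₂ : x₂.length = L)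
    (hy : y.length + 1 = L) (hs₁ : y.Sublist x₁) (hs₂ : y.Sublist x₂)
    (hmod : vtSum x₁ % (L + 1) = vtSum x₂ % (L + 1)) : x₁ = x₂ := by
  obtain ⟨i, b, hi, rfl⟩ := exists_insertIdx hs₁ (by omega)
  obtain ⟨j, c, hj, rfl⟩ := exists_insertIdx hs₂ (by omega)
  rw [vtSum_insertIdx b y i hi, vtSum_insertIdx c y j hj] at hmod
  have e₁ : vtSum y + (i + 1) * bnat b + (y.drop i).count true
      = vtSum y + ((i + 1) * bnat b + cnt y i) := by unfold cnt; ring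
  have e₂ : vtSum y + (j + 1) * bnat c + (y.drop j).count true
      = vtSum y + ((j + 1) * bnat c + cnt y j) := by unfold cnt; ring
  rw [e₁, e₂] at hmod
  have hc₁ : cnt y i ≤ y.length - i := cnt_le_len y i
  have hc₂ : cnt y j ≤ cnt y j := le_refl _
  have hc₂' : cnt y j ≤ y.length - j := cnt_le_len y j
  have hgl₁ : (i + 1) * bnat b + cnt y i ≤ L := by
    rcases Bool.eq_false_or_eq_true b with hb | hb <;> rw [hb] <;>
      simp only [bnat, if_true, if_false, Bool.false_eq_true, mul_one, mul_zero,
        zero_add] <;> omega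
  have hgl₂ : (j + 1) * bnat c + cnt y j ≤ L := by
    rcases Bool.eq_false_or_eq_true c with hb | hb <;> rw [hb] <;>
      simp only [bnat, if_true, if_false, Bool.false_eq_true, mul_one, mul_zero,
        zero_add] <;> omega
  have hgg : (i + 1) * bnat b + cnt y i = (j + 1) * bnat c + cnt y j := by
    have h' : (i + 1) * bnat b + cnt y i ≡ (j + 1) * bnat c + cnt y j [MOD L + 1] :=
      Nat.ModEq.add_left_cancel' (vtSum y) hmod
    unfold Nat.ModEq at h'
    rwa [Nat.mod_eq_of_lt (by omega), Nat.mod_eq_of_lt (by omega)] at h'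
  rcases le_total i j with hij | hij
  · exact insert_eq y b c hij (by omega) hgg
  · exact (insert_eq y c b hij (by omega) hgg.symm).symm

lemma g_zero {y : List Bool} {L i : ℕ} (hy : y.length = L + 1) (hi : i < y.length)
    (h : (i + 1) * bnat (y.getD i false) + cnt y (i + 1) = 0) :
    y.getD L false = false := by
  have hb0 : bnat (y.getD i false) = 0 := by
    rcases Nat.eq_zero_or_pos (bnat (y.getD i false)) with h' | h'
    · exact h'
    · exfalso
      have : i + 1 ≤ (i + 1) * bnat (y.getD i false) := Nat.le_mul_of_pos_right _ h'
      omega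
  have h1 : cnt y i = 0 := by
    rw [cnt_cons hi, hb0]; omega
  have h2 : cnt y L ≤ cnt y i := cnt_mono y (by omega)
  have h3 : cnt y L = bnat (y.getD L false) + cnt y (L + 1) := cnt_cons (by omega)
  exact bnat_eq_zero (by omega)

lemma g_top {y : List Bool} {L i : ℕ} (hy : y.length = L + 1) (hi : i < y.length)
    (h : (i + 1) * bnat (y.getD i false) + cnt y (i + 1) = L + 1) :
    y.getD L false = true := by
  rcases Bool.eq_false_or_eq_true (y.getD i false) with hb | hb
  case inr =>
    rw [hb] at h
    rw [bnat_false, mul_zero, zero_add] at h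
    have := cnt_le_len y (i + 1)
    omega
  case inl =>
    rw [hb] at h
    rw [bnat_true, mul_one] at h
    rcases Nat.eq_or_lt_of_le (by omega : i ≤ L) with rfl | hiL
    · exact hb
    · have h2 : cnt y (i + 1) ≤ cnt y L + (L - (i + 1)) := cnt_bound y (by omega)
      have h3 : cnt y L = bnat (y.getD L false) + cnt y (L + 1) := cnt_cons (by omega)
      have h4 : cnt y (L + 1) ≤ y.length - (L + 1) := cnt_le_len y (L + 1)
      exact bnat_pos (by omega)

lemma ins_case {L : ℕ} {x₁ x₂ y : List Bool} (h₁ : x₁.length = L) (h₂ : x₂.length = L)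
    (hy : y.length = L + 1) (hs₁ : x₁.Sublist y) (hs₂ : x₂.Sublist y)
    (hmod : vtSum x₁ % (L + 1) = vtSum x₂ % (L + 1)) : x₁ = x₂ := by
  obtain ⟨i, hi, rfl⟩ := exists_eraseIdx hs₁ (by omega)
  obtain ⟨j, hj, rfl⟩ := exists_eraseIdx hs₂ (by omega)
  have hv₁ := vtSum_eraseIdx y i hi
  have hv₂ := vtSum_eraseIdx y j hj
  have hv₁' : vtSum (y.eraseIdx i)
      + ((i + 1) * bnat (y.getD i false) + cnt y (i + 1)) = vtSum y := by
    rw [← hv₁]; unfold cnt; ring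
  have hv₂' : vtSum (y.eraseIdx j)
      + ((j + 1) * bnat (y.getD j false) + cnt y (j + 1)) = vtSum y := by
    rw [← hv₂]; unfold cnt; ring
  set g₁ := (i + 1) * bnat (y.getD i false) + cnt y (i + 1) with hg₁def
  set g₂ := (j + 1) * bnat (y.getD j false) + cnt y (j + 1) with hg₂def
  -- bounds g ≤ L + 1
  have hc₁ : cnt y (i + 1) ≤ y.length - (i + 1) := cnt_le_len y (i + 1)
  have hc₂ : cnt y (j + 1) ≤ y.length - (j + 1) := cnt_le_len y (j + 1)
  have hgl₁ : g₁ ≤ L + 1 := by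
    rw [hg₁def]
    rcases Bool.eq_false_or_eq_true (y.getD i false) with hb | hb <;>
      rw [hb] <;>
        simp only [bnat, if_true, if_false, Bool.false_eq_true, mul_one, mul_zero,
          zero_add] <;> omega
  have hgl₂ : g₂ ≤ L + 1 := by
    rw [hg₂def]
    rcases Bool.eq_false_or_eq_true (y.getD j false) with hb | hb <;>
      rw [hb] <;>
        simp only [bnat, if_true, if_false, Bool.false_eq_true, mul_one, mul_zero,
          zero_add] <;> omega
  -- congruence of g₁ and g₂
  have hmm : g₁ % (L + 1) = g₂ % (L + 1) := by
    have h1 : (vtSum (y.eraseIdx i) + g₁) % (L + 1)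
        = (vtSum (y.eraseIdx i) + g₂) % (L + 1) := by
      rw [hv₁']
      conv_lhs => rw [← hv₂']
      rw [Nat.add_mod, ← hmod, ← Nat.add_mod]
    exact Nat.ModEq.add_left_cancel' (vtSum (y.eraseIdx i)) h1
  have hgg : g₁ = g₂ := by
    rcases Nat.lt_or_ge g₁ (L + 1) with c₁ | c₁ <;>
      rcases Nat.lt_or_ge g₂ (L + 1) with c₂ | c₂
    · rwa [Nat.mod_eq_of_lt c₁, Nat.mod_eq_of_lt c₂] at hmm
    · exfalso
      have hg2 : g₂ = L + 1 := by omega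
      have h0 : g₁ = 0 := by
        rw [hg2, Nat.mod_self, Nat.mod_eq_of_lt c₁] at hmm; exact hmm
      have t1 : y.getD L false = false := g_zero hy hi (by rw [← hg₁def]; exact h0)
      have t2 : y.getD L false = true := g_top hy hj (by rw [← hg₂def]; exact hg2)
      rw [t1] at t2; exact Bool.false_ne_true t2
    · exfalso
      have hg1 : g₁ = L + 1 := by omega
      have h0 : g₂ = 0 := by
        rw [hg1, Nat.mod_self, Nat.mod_eq_of_lt c₂] at hmm; exact hmm.symm
      have t1 : y.getD L false = false := g_zero hy hj (by rw [← hg₂def]; exact h0)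
      have t2 : y.getD L false = true := g_top hy hi (by rw [← hg₁def]; exact hg1)
      rw [t1] at t2; exact Bool.false_ne_true t2
    · omega
  rcases le_total i j with hij | hij
  · exact erase_eq y hij hj (by rw [← hg₁def, ← hg₂def]; exact hgg)
  · exact (erase_eq y hij hi (by rw [← hg₁def, ← hg₂def]; exact hgg.symm)).symm

lemma single_edit {L : ℕ} {x₁ x₂ y : List Bool}
    (h₁ : x₁.length = L) (h₂ : x₂.length = L)
    (hmod : vtSum x₁ % (L + 1) = vtSum x₂ % (L + 1))
    (w₁ : withinLev 1 x₁ y) (w₂ : withinLev 1 x₂ y) : x₁ = x₂ := by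
  obtain ⟨z₁, hz₁x, hz₁y, hb₁⟩ := w₁
  obtain ⟨z₂, hz₂x, hz₂y, hb₂⟩ := w₂
  have l₁x := hz₁x.length_le
  have l₁y := hz₁y.length_le
  have l₂x := hz₂x.length_le
  have l₂y := hz₂y.length_le
  have hcase : y.length + 1 = L ∨ y.length = L ∨ y.length = L + 1 := by omega
  rcases hcase with hc | hc | hc
  · refine del_case h₁ h₂ hc ?_ ?_ hmod
    · have : z₁ = y := hz₁y.eq_of_length (by omega)
      rw [← this]; exact hz₁x
    · have : z₂ = y := hz₂y.eq_of_length (by omega)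
      rw [← this]; exact hz₂x
  · have e₁ : z₁ = x₁ := hz₁x.eq_of_length (by omega)
    have e₂ : z₁ = y := hz₁y.eq_of_length (by omega)
    have e₃ : z₂ = x₂ := hz₂x.eq_of_length (by omega)
    have e₄ : z₂ = y := hz₂y.eq_of_length (by omega)
    rw [← e₁, ← e₃, e₂, e₄]
  · refine ins_case h₁ h₂ hc ?_ ?_ hmod
    · have : z₁ = x₁ := hz₁x.eq_of_length (by omega)
      rw [← this]; exact hz₁y
    · have : z₂ = x₂ := hz₂x.eq_of_length (by omega)
      rw [← this]; exact hz₂y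

lemma withinLev_refl (x : List Bool) : withinLev 1 x x :=
  ⟨x, List.Sublist.refl x, List.Sublist.refl x, by simp⟩

lemma subset_of_mem_balls {L M a : ℕ} {S₁ S₂ S' : Finset (List Bool)}
    (hS₁ : ∀ x ∈ S₁, x.length = L ∧ vtSum x % (L + 1) = a)
    (hS₂ : ∀ x ∈ S₂, x.length = L ∧ vtSum x % (L + 1) = a)
    (m₁ : S' ∈ levBall 0 M 1 S₁) (m₂ : S' ∈ levBall 0 M 1 S₂) : S₁ ⊆ S₂ := by
  obtain ⟨U₁, Lo₁, F₁, f₁, -, -, -, hU₁, hLo₁, -, hf₁, hS'₁⟩ := m₁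
  obtain ⟨U₂, Lo₂, F₂, f₂, -, -, -, hU₂, hLo₂, -, hf₂, hS'₂⟩ := m₂
  have hLo₁' : Lo₁ = ∅ := Finset.card_eq_zero.mp (Nat.le_zero.mp hLo₁)
  have hLo₂' : Lo₂ = ∅ := Finset.card_eq_zero.mp (Nat.le_zero.mp hLo₂)
  subst hLo₁' hLo₂'
  intro x hx
  have hx' : x ∈ U₁ ∪ F₁ := by
    rw [← hU₁] at hx
    simpa using hx
  obtain ⟨y, hyS', hxy⟩ : ∃ y ∈ S', withinLev 1 x y := by
    rcases Finset.mem_union.mp hx' with h | h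
    · exact ⟨x, by rw [hS'₁]; exact Finset.mem_union_left _ h, withinLev_refl x⟩
    · refine ⟨f₁ x, ?_, hf₁ x h⟩
      rw [hS'₁]
      exact Finset.mem_union_right _ (Finset.mem_image_of_mem _ h)
  obtain ⟨x₂, hx₂S, hx₂y⟩ : ∃ x₂ ∈ S₂, withinLev 1 x₂ y := by
    rw [hS'₂] at hyS'
    rcases Finset.mem_union.mp hyS' with h | h
    · refine ⟨y, ?_, withinLev_refl y⟩
      rw [← hU₂]
      simp only [Finset.union_empty]
      exact Finset.mem_union_left _ h
    · obtain ⟨x₂, hx₂, rfl⟩ := Finset.mem_image.mp h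
      refine ⟨x₂, ?_, hf₂ x₂ hx₂⟩
      rw [← hU₂]
      simp only [Finset.union_empty]
      exact Finset.mem_union_right _ hx₂
  obtain ⟨hl₁, hv₁⟩ := hS₁ x hx
  obtain ⟨hl₂, hv₂⟩ := hS₂ x₂ hx₂S
  have : x = x₂ := single_edit hl₁ hl₂ (hv₁.trans hv₂.symm) hxy hx₂y
  rwa [this]

end VTHelp

/-- Construction 5: for every `0 ≤ a ≤ L`, the code
`C₅(M,L,a) = { S ∈ X_M^L : s_L(x) ≡ a (mod L+1) for every x ∈ S }` is a
`(0,M,1)_L` error-correcting code. -/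
theorem stmt_10 (L M : ℕ) (hL : 1 ≤ L) (hM : 1 ≤ M) (hML : M ≤ 2 ^ L)
    (a : ℕ) (ha : a ≤ L) :
    isLevCode 0 M 1
      { S | S.card = M ∧
            ∀ x ∈ S, x.length = L ∧ vtSum x % (L + 1) = a } := by
  intro S₁ hS₁ S₂ hS₂ hne
  rw [Set.eq_empty_iff_forall_notMem]
  rintro S' ⟨m₁, m₂⟩
  exact hne (Finset.Subset.antisymm
    (VTHelp.subset_of_mem_balls hS₁.2 hS₂.2 m₁ m₂)
    (VTHelp.subset_of_mem_balls hS₂.2 hS₁.2 m₂ m₁))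
end

section
/- For natural numbers M, K, N with M < K ≤ N, the binomial coefficients satisfy log₂ binom(N, M) − log₂ binom(K, M) ≤ M·log₂(N/K) + M²·log₂(e)/(K − M). -/
open Finset Real Nat

/-- For natural numbers `M < K ≤ N`:
`log₂ binom(N,M) − log₂ binom(K,M) ≤ M·log₂(N/K) + M²·log₂(e)/(K − M)`. -/
theorem stmt_11 (M K N : ℕ) (h1 : M < K) (h2 : K ≤ N) :
    Real.logb 2 (N.choose M) - Real.logb 2 (K.choose M) ≤
      M * Real.logb 2 ((N : ℝ) / K) +
        M ^ 2 * Real.logb 2 (Real.exp 1) / ((K : ℝ) - M) := by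
  have hK0 : 0 < K := lt_of_le_of_lt (Nat.zero_le M) h1
  have hN0 : 0 < N := lt_of_lt_of_le hK0 h2
  have hKR : (0:ℝ) < K := by exact_mod_cast hK0
  have hNR : (0:ℝ) < N := by exact_mod_cast hN0
  have hKM : (M:ℝ) < K := by exact_mod_cast h1
  have hKMpos : (0:ℝ) < (K:ℝ) - M := by linarith
  have hNK : (K:ℝ) ≤ N := by exact_mod_cast h2
  set c : ℝ := (M:ℝ)^2 / ((K:ℝ) - M) with hc
  -- cast products
  have hMK : M ≤ K := h1.le
  have hMN : M ≤ N := le_trans hMK h2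
  have castdesc : ∀ n : ℕ, M ≤ n → (n.descFactorial M : ℝ) = ∏ i ∈ range M, ((n:ℝ) - i) := by
    intro n hn
    rw [Nat.descFactorial_eq_prod_range, Nat.cast_prod]
    refine Finset.prod_congr rfl fun i hi => ?_
    rw [Finset.mem_range] at hi
    rw [Nat.cast_sub (le_trans hi.le hn)]
  -- per-factor bound
  have factor : ∀ i ∈ range M,
      ((N:ℝ) - i) ≤ ((K:ℝ) - i) * ((N:ℝ)/K) * Real.exp ((M:ℝ)/((K:ℝ)-M)) := by
    intro i hi
    rw [Finset.mem_range] at hi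
    have hiM : (i:ℝ) < M := by exact_mod_cast hi
    have hKi : (0:ℝ) < (K:ℝ) - i := by linarith
    have h3 : ((N:ℝ) - i) ≤ ((K:ℝ) - i) * ((N:ℝ)/K) * (1 + (M:ℝ)/((K:ℝ)-M)) := by
      have heq : ((K:ℝ) - i) * ((N:ℝ)/K) * (1 + (M:ℝ)/((K:ℝ)-M))
          = ((K:ℝ) - i) * N / ((K:ℝ)-M) := by
        field_simp
        ring
      rw [heq, le_div_iff₀ hKMpos]
      nlinarith [mul_nonneg (sub_nonneg.2 hiM.le) (sub_nonneg.2 hNK),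
        mul_nonneg (Nat.cast_nonneg M : (0:ℝ) ≤ (M:ℝ)) (sub_nonneg.2 (by linarith : (i:ℝ) ≤ K))]
    refine h3.trans ?_
    have h4 : (1:ℝ) + (M:ℝ)/((K:ℝ)-M) ≤ Real.exp ((M:ℝ)/((K:ℝ)-M)) := by
      have := Real.add_one_le_exp ((M:ℝ)/((K:ℝ)-M)); linarith
    have hpos : (0:ℝ) ≤ ((K:ℝ) - i) * ((N:ℝ)/K) := by positivity
    nlinarith
  -- product bound
  have prodbound : (N.descFactorial M : ℝ) ≤ (K.descFactorial M : ℝ) * ((N:ℝ)/K)^M * Real.exp c := by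
    rw [castdesc N hMN, castdesc K hMK]
    have := Finset.prod_le_prod (f := fun i : ℕ => ((N:ℝ) - i))
      (g := fun i : ℕ => ((K:ℝ) - i) * ((N:ℝ)/K) * Real.exp ((M:ℝ)/((K:ℝ)-M)))
      (s := range M)
      (fun i hi => by
        rw [Finset.mem_range] at hi
        have : (i:ℝ) < M := by exact_mod_cast hi
        linarith [hNK, hKM])
      factor
    refine this.trans_eq ?_
    rw [Finset.prod_mul_distrib, Finset.prod_mul_distrib, Finset.prod_const, Finset.prod_const,
      Finset.card_range, ← Real.exp_nat_mul]
    have : (M:ℝ) * ((M:ℝ)/((K:ℝ)-M)) = c := by rw [hc]; ring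
    rw [this]
  -- choose bound
  have key : (N.choose M : ℝ) ≤ (K.choose M : ℝ) * ((N:ℝ)/K)^M * Real.exp c := by
    have eN : (N.descFactorial M : ℝ) = (M ! : ℝ) * (N.choose M : ℝ) := by
      exact_mod_cast congrArg (Nat.cast : ℕ → ℝ) (Nat.descFactorial_eq_factorial_mul_choose N M)
    have eK : (K.descFactorial M : ℝ) = (M ! : ℝ) * (K.choose M : ℝ) := by
      exact_mod_cast congrArg (Nat.cast : ℕ → ℝ) (Nat.descFactorial_eq_factorial_mul_choose K M)
    have hf : (0:ℝ) < (M ! : ℝ) := by exact_mod_cast Nat.factorial_pos M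
    rw [eN, eK] at prodbound
    have := (mul_le_mul_iff_right₀ hf).mp (by linarith [prodbound] : (M ! : ℝ) * (N.choose M : ℝ) ≤ (M ! : ℝ) * ((K.choose M : ℝ) * ((N:ℝ)/K)^M * Real.exp c))
    exact this
  -- take logs
  have hCN : (0:ℝ) < (N.choose M : ℝ) := by exact_mod_cast Nat.choose_pos hMN
  have hCK : (0:ℝ) < (K.choose M : ℝ) := by exact_mod_cast Nat.choose_pos hMK
  have hlog := Real.logb_le_logb_of_le (b := 2) (by norm_num) hCN key
  have expand : Real.logb 2 ((K.choose M : ℝ) * ((N:ℝ)/K)^M * Real.exp c)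
      = Real.logb 2 (K.choose M) + M * Real.logb 2 ((N:ℝ)/K) + c * Real.logb 2 (Real.exp 1) := by
    rw [Real.logb_mul (by positivity) (Real.exp_ne_zero c),
        Real.logb_mul (ne_of_gt hCK) (by positivity), Real.logb_pow]
    simp only [Real.logb, Real.log_exp]
    ring
  rw [expand] at hlog
  have : c * Real.logb 2 (Real.exp 1) = (M:ℝ)^2 * Real.logb 2 (Real.exp 1) / ((K:ℝ) - M) := by
    rw [hc]; ring
  linarith [hlog, this.symm.le, this.le]
end

section
/- Suppose M < 2^L/(L+1), and let C₅(M,L,0) = { S ∈ X_M^L : s_L(x) ≡ 0 (mod L+1) for every x ∈ S }. Then the redundancy of C₅(M,L,0) satisfies log₂ binom(2^L, M) − log₂ |C₅(M,L,0)| ≤ M·( log₂(L+1) + M·log₂(e)/(2^L/(L+1) − M) ). -/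
/-- The Varshamov–Tenengolts checksum `s_L(x) = (Σ_{i=1}^L i·x_i) mod (L+1)`. -/
def vtChecksum (L : ℕ) (x : Fin L → Bool) : ℕ :=
  (∑ i : Fin L, ((i : ℕ) + 1) * (if x i then 1 else 0)) % (L + 1)

lemma conj_fact (m j i : ℕ) (hm : m ≠ 0) (hi : i ≤ m) :
    (starRingEnd ℂ) (1 + Complex.exp (2 * Real.pi * Complex.I / m) ^ (j * i)) =
      1 + Complex.exp (2 * Real.pi * Complex.I / m) ^ (j * (m - i)) := by
  set ω := Complex.exp (2 * Real.pi * Complex.I / m) with hω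
  have hprim : IsPrimitiveRoot ω m := Complex.isPrimitiveRoot_exp m hm
  have habs : ‖ω‖ = 1 := by
    rw [hω, Complex.norm_exp]
    norm_num [Complex.div_re, Complex.mul_I_re]
  have habs' : ‖ω ^ (j * i)‖ = 1 := by
    rw [norm_pow, habs, one_pow]
  have hmul : ω ^ (j * (m - i)) * ω ^ (j * i) = 1 := by
    rw [← pow_add, ← Nat.mul_add, Nat.sub_add_cancel hi, mul_comm j m, pow_mul,
      hprim.pow_eq_one, one_pow]
  have hinv : (ω ^ (j * i))⁻¹ = ω ^ (j * (m - i)) :=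
    inv_eq_of_mul_eq_one_right (by rw [mul_comm]; exact hmul)
  rw [map_add, map_one, ← Complex.inv_eq_conj habs', hinv]

lemma prod_eq_nonneg_real (m j : ℕ) (hm : m ≠ 0) :
    ∃ r : ℝ, 0 ≤ r ∧
      (∏ i ∈ Finset.Ico 1 m, (1 + Complex.exp (2 * Real.pi * Complex.I / m) ^ (j * i)))
        = (r : ℂ) := by
  set ω := Complex.exp (2 * Real.pi * Complex.I / m) with hωdef
  set g : ℕ → ℂ := fun i => 1 + ω ^ (j * i) with hg
  have hprim : IsPrimitiveRoot ω m := Complex.isPrimitiveRoot_exp m hm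
  -- generic pairing step: for any k with the ranges matching
  have pair : ∀ k : ℕ, k + k ≤ m →
      (∏ i ∈ Finset.Ico 1 (k+1), g i) * (∏ i ∈ Finset.Ico (m-k) m, g i)
        = ((∏ i ∈ Finset.Ico 1 (k+1), Complex.normSq (g i) : ℝ) : ℂ) := by
    intro k hk
    have hre : (∏ i ∈ Finset.Ico (m-k) m, g i) = ∏ i ∈ Finset.Ico 1 (k+1), g (m - i) := by
      apply Finset.prod_nbij' (fun i => m - i) (fun i => m - i)
      · intro a ha
        simp only [Finset.mem_Ico] at ha ⊢
        omega
      · intro a ha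
        simp only [Finset.mem_Ico] at ha ⊢
        omega
      · intro a ha
        simp only [Finset.mem_Ico] at ha
        omega
      · intro a ha
        simp only [Finset.mem_Ico] at ha
        omega
      · intro a ha
        simp only [Finset.mem_Ico] at ha
        congr 1
        omega
    rw [hre, ← Finset.prod_mul_distrib]
    rw [Complex.ofReal_prod]
    apply Finset.prod_congr rfl
    intro i hi
    simp only [Finset.mem_Ico] at hi
    have : g (m - i) = (starRingEnd ℂ) (g i) := by
      rw [hg]
      exact (conj_fact m j i hm (by omega)).symm
    rw [this, Complex.mul_conj]
  rcases Nat.even_or_odd m with ⟨k, hk⟩ | ⟨k, hk⟩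
  · -- m = k + k, even; middle element k
    have hk1 : 1 ≤ k := by omega
    have hmid : ω ^ k = -1 := by
      have h2 : (ω ^ k) ^ 2 = 1 := by
        rw [← pow_mul]
        have : k * 2 = m := by omega
        rw [this, hprim.pow_eq_one]
      have hne : ω ^ k ≠ 1 := hprim.pow_ne_one_of_pos_of_lt (by omega) (by omega)
      have hfac : (ω ^ k - 1) * (ω ^ k + 1) = 0 := by ring_nf; linear_combination h2
      rcases mul_eq_zero.mp hfac with h | h
      · exact absurd (by linear_combination h) hne
      · linear_combination h
    obtain ⟨r₁, hr₁, hr₁eq⟩ : ∃ r₁ : ℝ, 0 ≤ r₁ ∧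
        (∏ i ∈ Finset.Ico 1 k, g i) * (∏ i ∈ Finset.Ico (k+1) m, g i) = (r₁ : ℂ) := by
      have := pair (k - 1) (by omega)
      have e1 : k - 1 + 1 = k := by omega
      have e2 : m - (k - 1) = k + 1 := by omega
      rw [e1, e2] at this
      exact ⟨_, Finset.prod_nonneg fun i _ => Complex.normSq_nonneg _, this⟩
    have hsplit : (∏ i ∈ Finset.Ico 1 m, g i)
        = ((∏ i ∈ Finset.Ico 1 k, g i) * (∏ i ∈ Finset.Ico (k+1) m, g i)) * g k := by
      rw [← Finset.prod_Ico_consecutive g (by omega : 1 ≤ k) (by omega : k ≤ m)]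
      have : (∏ i ∈ Finset.Ico k m, g i) = g k * ∏ i ∈ Finset.Ico (k+1) m, g i := by
        rw [← Finset.prod_Ico_consecutive g (by omega : k ≤ k+1) (by omega : k+1 ≤ m)]
        congr 1
        rw [show Finset.Ico k (k+1) = {k} by simp, Finset.prod_singleton]
      rw [this]; ring
    have hgk : g k = ((1 + (-1 : ℝ) ^ j : ℝ) : ℂ) := by
      rw [hg]
      simp only [mul_comm j k, pow_mul, hmid]
      push_cast
      ring
    refine ⟨r₁ * (1 + (-1 : ℝ) ^ j), ?_, ?_⟩
    · apply mul_nonneg hr₁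
      rcases Nat.even_or_odd j with hj | hj
      · rw [hj.neg_one_pow]; norm_num
      · rw [hj.neg_one_pow]; norm_num
    · rw [hsplit, hr₁eq, hgk]
      push_cast
      ring
  · -- m = 2k + 1, odd
    obtain ⟨r₁, hr₁, hr₁eq⟩ : ∃ r₁ : ℝ, 0 ≤ r₁ ∧
        (∏ i ∈ Finset.Ico 1 (k+1), g i) * (∏ i ∈ Finset.Ico (k+1) m, g i) = (r₁ : ℂ) := by
      have := pair k (by omega)
      have e2 : m - k = k + 1 := by omega
      rw [e2] at this
      exact ⟨_, Finset.prod_nonneg fun i _ => Complex.normSq_nonneg _, this⟩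
    refine ⟨r₁, hr₁, ?_⟩
    rw [← Finset.prod_Ico_consecutive g (by omega : 1 ≤ k+1) (by omega : k+1 ≤ m)]
    exact hr₁eq

lemma vt_count (L : ℕ) :
    (2:ℝ)^L ≤ ((L:ℝ)+1) *
      ((Finset.univ.filter (fun x : Fin L → Bool => vtChecksum L x = 0)).card) := by
  set m := L + 1 with hmdef
  set ω := Complex.exp (2 * Real.pi * Complex.I / m) with hωdef
  have hm : m ≠ 0 := Nat.succ_ne_zero L
  have hprim : IsPrimitiveRoot ω m := Complex.isPrimitiveRoot_exp m hm
  set w : (Fin L → Bool) → ℕ :=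
    fun x => ∑ i : Fin L, ((i:ℕ)+1) * (if x i then 1 else 0) with hw
  have step1 : ∀ x : Fin L → Bool,
      (∑ j ∈ Finset.range m, ω ^ (j * w x)) = if vtChecksum L x = 0 then (m:ℂ) else 0 := by
    intro x
    have hpm : ∀ j : ℕ, ω ^ (j * w x) = (ω ^ w x) ^ j := fun j => by
      rw [← pow_mul, mul_comm]
    simp_rw [hpm]
    have hvk : vtChecksum L x = w x % m := rfl
    by_cases hdvd : vtChecksum L x = 0
    · have h1 : ω ^ w x = 1 :=
        (hprim.pow_eq_one_iff_dvd (w x)).mpr (Nat.dvd_of_mod_eq_zero (hvk ▸ hdvd))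
      simp [h1, hdvd]
    · have hne : ω ^ w x ≠ 1 := by
        intro h1
        exact hdvd (by
          rw [hvk]
          exact (Nat.dvd_iff_mod_eq_zero).mp
            ((hprim.pow_eq_one_iff_dvd _).mp h1))
      rw [geom_sum_eq hne]
      have h2 : (ω ^ w x) ^ m = 1 := by
        rw [← pow_mul, mul_comm, pow_mul, hprim.pow_eq_one, one_pow]
      rw [h2]
      simp [hdvd]
  have step2 : ∀ j : ℕ, (∑ x : Fin L → Bool, ω ^ (j * w x))
      = ∏ i ∈ Finset.Ico 1 m, (1 + ω ^ (j * i)) := by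
    intro j
    have h1 : ∀ x : Fin L → Bool, ω ^ (j * w x)
        = ∏ i : Fin L, (if x i then ω ^ (j * ((i:ℕ)+1)) else 1) := by
      intro x
      rw [hw]
      simp only [Finset.mul_sum, ← Finset.prod_pow_eq_pow_sum]
      apply Finset.prod_congr rfl
      intro i _
      by_cases h : x i
      · simp only [h, if_true, mul_one]
      · simp [h]
    simp_rw [h1]
    have h2 : (∑ x ∈ Fintype.piFinset (fun _ : Fin L => (Finset.univ : Finset Bool)),
          ∏ i : Fin L, (if x i then ω ^ (j * ((i:ℕ)+1)) else 1))
        = ∏ i : Fin L, ∑ b ∈ (Finset.univ : Finset Bool),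
            (if b then ω ^ (j * ((i:ℕ)+1)) else 1) :=
      (Finset.prod_univ_sum (fun _ : Fin L => (Finset.univ : Finset Bool))
        (fun i b => if b then ω ^ (j * ((i:ℕ)+1)) else 1)).symm
    rw [← Fintype.piFinset_univ] at *
    rw [h2]
    have h3 : ∀ i : Fin L, (∑ b ∈ (Finset.univ : Finset Bool),
        (if b then ω ^ (j * ((i:ℕ)+1)) else 1)) = 1 + ω ^ (j * ((i:ℕ)+1)) := by
      intro i
      simp [Fintype.sum_bool, add_comm]
    simp_rw [h3]
    rw [Finset.prod_Ico_eq_prod_range]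
    have : m - 1 = L := by omega
    rw [this, ← Fin.prod_univ_eq_prod_range (fun i => 1 + ω ^ (j * (1 + i))) L]
    apply Finset.prod_congr rfl
    intro i _
    rw [add_comm 1 (i:ℕ)]
  -- combine
  have key : ((Finset.univ.filter (fun x : Fin L → Bool => vtChecksum L x = 0)).card : ℂ) * m
      = ∑ j ∈ Finset.range m, ∏ i ∈ Finset.Ico 1 m, (1 + ω ^ (j * i)) := by
    have lhs : (∑ x : Fin L → Bool, if vtChecksum L x = 0 then (m:ℂ) else 0)
        = ((Finset.univ.filter (fun x : Fin L → Bool => vtChecksum L x = 0)).card : ℂ) * m := by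
      rw [Finset.sum_ite, Finset.sum_const_zero, add_zero, Finset.sum_const, nsmul_eq_mul]
    rw [← lhs]
    simp_rw [← step1]
    rw [Finset.sum_comm]
    exact Finset.sum_congr rfl fun j _ => step2 j
  -- take real parts
  have hT0 : (∏ i ∈ Finset.Ico 1 m, (1 + ω ^ (0 * i))) = Complex.ofReal ((2:ℝ)^L) := by
    simp only [zero_mul, pow_zero]
    rw [Finset.prod_const, Nat.card_Ico, hmdef]
    push_cast
    norm_num
  have hre : ∀ j ∈ Finset.range m,
      0 ≤ (∏ i ∈ Finset.Ico 1 m, (1 + ω ^ (j * i))).re := by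
    intro j _
    obtain ⟨r, hr, hreq⟩ := prod_eq_nonneg_real m j hm
    have hreq' : (∏ i ∈ Finset.Ico 1 m, (1 + ω ^ (j * i))) = (r : ℂ) := hreq
    rw [hreq', Complex.ofReal_re]
    exact hr
  have hmono : (Complex.ofReal ((2:ℝ)^L)).re
      ≤ (∑ j ∈ Finset.range m, ∏ i ∈ Finset.Ico 1 m, (1 + ω ^ (j * i))).re := by
    rw [Complex.re_sum]
    rw [← hT0]
    exact Finset.single_le_sum hre (Finset.mem_range.mpr (Nat.pos_of_ne_zero hm))
  rw [← key] at hmono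
  simp only [Complex.ofReal_re] at hmono
  have : ((((Finset.univ.filter (fun x : Fin L → Bool => vtChecksum L x = 0)).card : ℂ)) * (m:ℂ)).re
      = ((Finset.univ.filter (fun x : Fin L → Bool => vtChecksum L x = 0)).card : ℝ) * m := by
    push_cast
    simp
  rw [this] at hmono
  calc (2:ℝ)^L ≤ _ := hmono
    _ = ((L:ℝ)+1) * ((Finset.univ.filter (fun x : Fin L → Bool => vtChecksum L x = 0)).card) := by
        rw [hmdef]; push_cast; ring

lemma choose_ratio (N K M : ℕ) (mR : ℝ) (hMK : M < K) (hKN : K ≤ N) (hm1 : 1 ≤ mR)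
    (hNK : (N : ℝ) ≤ mR * K) :
    (N.choose M : ℝ) ≤ (K.choose M : ℝ) *
      (mR ^ M * Real.exp ((M:ℝ)^2 / ((K:ℝ) - M))) := by
  have hKM : (0:ℝ) < (K:ℝ) - M := by
    have : (M:ℝ) < K := by exact_mod_cast hMK
    linarith
  set c : ℝ := (M:ℝ) / ((K:ℝ) - M) with hc
  have hc0 : 0 ≤ c := div_nonneg (Nat.cast_nonneg M) hKM.le
  have hexp : (K:ℝ) / ((K:ℝ) - M) ≤ Real.exp c := by
    have h1 : c + 1 ≤ Real.exp c := Real.add_one_le_exp c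
    have h2 : (K:ℝ) / ((K:ℝ) - M) = c + 1 := by
      rw [hc]; field_simp; ring
    linarith
  -- per-factor inequality
  have hfac : ∀ i ∈ Finset.range M,
      ((N - i : ℕ) : ℝ) ≤ (mR * ((K - i : ℕ) : ℝ)) * Real.exp c := by
    intro i hi
    have hiM : i < M := Finset.mem_range.mp hi
    have hiK : i < K := lt_of_lt_of_le hiM hMK.le
    have hiN : i < N := lt_of_lt_of_le hiK hKN
    have e1 : ((N - i : ℕ) : ℝ) = (N:ℝ) - i := by
      push_cast [Nat.cast_sub hiN.le]; ring
    have e2 : ((K - i : ℕ) : ℝ) = (K:ℝ) - i := by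
      push_cast [Nat.cast_sub hiK.le]; ring
    rw [e1, e2]
    have hKi : (0:ℝ) < (K:ℝ) - i := by
      have : (i:ℝ) < K := by exact_mod_cast hiK
      linarith
    have hiM' : (i:ℝ) ≤ (M:ℝ) := by exact_mod_cast hiM.le
    have step1 : (K:ℝ) / ((K:ℝ) - i) ≤ (K:ℝ) / ((K:ℝ) - M) := by
      apply div_le_div_of_nonneg_left (Nat.cast_nonneg K) hKM
      linarith
    have step2 : (K:ℝ) / ((K:ℝ) - i) ≤ Real.exp c := le_trans step1 hexp
    have step3 : (K:ℝ) ≤ ((K:ℝ) - i) * Real.exp c := by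
      rw [div_le_iff₀ hKi] at step2
      linarith [step2]
    calc (N:ℝ) - i ≤ (N:ℝ) := by linarith [Nat.cast_nonneg (α := ℝ) i]
      _ ≤ mR * K := hNK
      _ ≤ mR * (((K:ℝ) - i) * Real.exp c) := by
          apply mul_le_mul_of_nonneg_left step3 (by linarith)
      _ = (mR * ((K:ℝ) - i)) * Real.exp c := by ring
  -- product inequality on descending factorials
  have hprod : (N.descFactorial M : ℝ) ≤ (K.descFactorial M : ℝ) *
      (mR ^ M * Real.exp ((M:ℝ)^2 / ((K:ℝ) - M))) := by
    have hL : (N.descFactorial M : ℝ) = ∏ i ∈ Finset.range M, ((N - i : ℕ) : ℝ) := by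
      rw [Nat.descFactorial_eq_prod_range]; push_cast; rfl
    have hR : ∏ i ∈ Finset.range M, ((mR * ((K - i : ℕ) : ℝ)) * Real.exp c)
        = (K.descFactorial M : ℝ) * (mR ^ M * Real.exp ((M:ℝ)^2 / ((K:ℝ) - M))) := by
      rw [Finset.prod_mul_distrib, Finset.prod_mul_distrib, Finset.prod_const,
        Finset.prod_const, Finset.card_range, ← Real.exp_nat_mul,
        Nat.descFactorial_eq_prod_range]
      have : (M:ℝ) * c = (M:ℝ)^2 / ((K:ℝ) - M) := by rw [hc]; ring
      rw [this]
      push_cast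
      ring
    rw [hL, ← hR]
    apply Finset.prod_le_prod
    · intro i _; positivity
    · exact hfac
  -- divide by M!
  have hfact : (0:ℝ) < (Nat.factorial M : ℝ) := by positivity
  have hNc : (N.choose M : ℝ) * (Nat.factorial M : ℝ) = (N.descFactorial M : ℝ) := by
    rw [Nat.descFactorial_eq_factorial_mul_choose]; push_cast; ring
  have hKc : (K.choose M : ℝ) * (Nat.factorial M : ℝ) = (K.descFactorial M : ℝ) := by
    rw [Nat.descFactorial_eq_factorial_mul_choose]; push_cast; ring
  rw [← hNc, ← hKc] at hprod
  have := (mul_le_mul_iff_of_pos_right hfact).mp (by linarith [hprod] : (N.choose M : ℝ) * (Nat.factorial M)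
      ≤ ((K.choose M : ℝ) * (mR ^ M * Real.exp ((M:ℝ)^2 / ((K:ℝ) - M)))) * (Nat.factorial M))
  exact this

lemma card_code (L M : ℕ) :
    ((Finset.univ : Finset (Finset (Fin L → Bool))).filter
        (fun S => S.card = M ∧ ∀ x ∈ S, vtChecksum L x = 0)).card
      = ((Finset.univ.filter (fun x : Fin L → Bool => vtChecksum L x = 0)).card).choose M := by
  rw [← Finset.card_powersetCard]
  congr 1
  ext S
  simp only [Finset.mem_filter, Finset.mem_univ, true_and, Finset.mem_powersetCard,
    Finset.subset_iff]
  tauto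

/-- If `M < 2^L/(L+1)`, the redundancy of
`C₅(M,L,0) = { S ∈ X_M^L : s_L(x) ≡ 0 (mod L+1) for every x ∈ S }` is at most
`M·(log₂(L+1) + M·log₂(e)/(2^L/(L+1) − M))`. -/
theorem stmt_12 (L M : ℕ) (hL : 1 ≤ L) (hM : 1 ≤ M)
    (hML : (M : ℝ) < 2 ^ L / (L + 1)) :
    Real.logb 2 ((2 ^ L).choose M) -
      Real.logb 2
        (((Finset.univ : Finset (Finset (Fin L → Bool))).filter
          (fun S => S.card = M ∧ ∀ x ∈ S, vtChecksum L x = 0)).card) ≤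
      M * (Real.logb 2 (L + 1) +
        M * Real.logb 2 (Real.exp 1) / ((2 : ℝ) ^ L / (L + 1) - M)) := by
  set K : ℕ := (Finset.univ.filter (fun x : Fin L → Bool => vtChecksum L x = 0)).card with hK
  set N : ℕ := 2 ^ L with hN
  have hmPos : (0:ℝ) < (L:ℝ) + 1 := by positivity
  have hcount : (2:ℝ)^L ≤ ((L:ℝ)+1) * K := vt_count L
  have hKlow : (2:ℝ)^L / ((L:ℝ)+1) ≤ K := by
    rw [div_le_iff₀ hmPos]
    linarith [hcount]
  have hMKr : (M:ℝ) < K := lt_of_lt_of_le hML hKlow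
  have hMK : M < K := by exact_mod_cast hMKr
  have hKN : K ≤ N := by
    calc K ≤ (Finset.univ : Finset (Fin L → Bool)).card := Finset.card_filter_le _ _
      _ = N := by simp [hN, Finset.card_univ]
  have hNr : (N:ℝ) = (2:ℝ)^L := by rw [hN]; push_cast; ring
  have hratio := choose_ratio N K M ((L:ℝ)+1) hMK hKN (by linarith [Nat.cast_nonneg (α := ℝ) L])
    (by rw [hNr]; exact hcount)
  -- monotone in the exponent denominator
  have hD : (0:ℝ) < (2:ℝ)^L / ((L:ℝ)+1) - M := by linarith
  have hKM : (0:ℝ) < (K:ℝ) - M := by linarith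
  have hDK : (2:ℝ)^L / ((L:ℝ)+1) - M ≤ (K:ℝ) - M := by linarith
  have hexpmono : Real.exp ((M:ℝ)^2 / ((K:ℝ) - M))
      ≤ Real.exp ((M:ℝ)^2 / ((2:ℝ)^L / ((L:ℝ)+1) - M)) := by
    apply Real.exp_le_exp.mpr
    apply div_le_div_of_nonneg_left (by positivity) hD hDK
  set R : ℝ := ((L:ℝ)+1) ^ M * Real.exp ((M:ℝ)^2 / ((2:ℝ)^L / ((L:ℝ)+1) - M)) with hR
  have hRpos : 0 < R := by positivity
  have hmain : (N.choose M : ℝ) ≤ (K.choose M : ℝ) * R := by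
    calc (N.choose M : ℝ) ≤ (K.choose M : ℝ) *
          (((L:ℝ)+1) ^ M * Real.exp ((M:ℝ)^2 / ((K:ℝ) - M))) := hratio
      _ ≤ (K.choose M : ℝ) * R := by
          apply mul_le_mul_of_nonneg_left _ (Nat.cast_nonneg _)
          rw [hR]
          apply mul_le_mul_of_nonneg_left hexpmono (by positivity)
  have hKc0 : (0:ℝ) < (K.choose M : ℝ) := by
    exact_mod_cast Nat.choose_pos hMK.le
  have hNc0 : (0:ℝ) < (N.choose M : ℝ) := by
    exact_mod_cast Nat.choose_pos (le_trans hMK.le hKN)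
  rw [card_code L M, ← hK]
  have hlog1 : Real.logb 2 (N.choose M : ℝ) ≤ Real.logb 2 ((K.choose M : ℝ) * R) :=
    Real.logb_le_logb_of_le (by norm_num) hNc0 hmain
  have hlog2 : Real.logb 2 ((K.choose M : ℝ) * R)
      = Real.logb 2 (K.choose M : ℝ) + Real.logb 2 R :=
    Real.logb_mul (ne_of_gt hKc0) (ne_of_gt hRpos)
  have hlog3 : Real.logb 2 R = M * Real.logb 2 ((L:ℝ)+1)
      + ((M:ℝ)^2 / ((2:ℝ)^L / ((L:ℝ)+1) - M)) * Real.logb 2 (Real.exp 1) := by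
    rw [hR, Real.logb_mul (by positivity) (by positivity), Real.logb_pow]
    congr 1
    simp only [Real.logb, Real.log_exp]
    ring
  have goal1 : Real.logb 2 (N.choose M : ℝ) - Real.logb 2 (K.choose M : ℝ)
      ≤ M * (Real.logb 2 ((L:ℝ)+1) +
        M * Real.logb 2 (Real.exp 1) / ((2:ℝ)^L / ((L:ℝ)+1) - M)) := by
    rw [hlog2] at hlog1
    have : Real.logb 2 (N.choose M : ℝ) - Real.logb 2 (K.choose M : ℝ) ≤ Real.logb 2 R := by
      linarith
    rw [hlog3] at this
    calc Real.logb 2 (N.choose M : ℝ) - Real.logb 2 (K.choose M : ℝ) ≤ _ := this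
      _ = M * (Real.logb 2 ((L:ℝ)+1) +
          M * Real.logb 2 (Real.exp 1) / ((2:ℝ)^L / ((L:ℝ)+1) - M)) := by ring
  convert goal1 using 3 <;> push_cast <;> ring
end

section
/- Let ε ∈ ℕ and let D ⊆ {0,1}^L be a set such that any two distinct elements of D have Hamming distance at least 2ε+1, and suppose M ≤ |D|. Then C₆ = { S ∈ X_M^L : S ⊆ D } is a (0,M,ε)_H error-correcting code. -/
lemma decode_eq (L M ε : ℕ) (D S S' : Finset (Fin L → Bool))
    (hD : ∀ x ∈ D, ∀ y ∈ D, x ≠ y → 2 * ε + 1 ≤ hammingDist x y)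
    (hSD : S ⊆ D) (hball : S' ∈ hamBall L 0 M ε S) :
    S = D.filter (fun x => ∃ y ∈ S', hammingDist x y ≤ ε) := by
  obtain ⟨U, Lo, F, f, _, _, _, hUnion, hLo, _, hf, hS'⟩ := hball
  have hLo0 : Lo = ∅ := Finset.card_eq_zero.mp (Nat.le_zero.mp hLo)
  subst hLo0
  rw [Finset.union_empty] at hUnion
  ext x
  simp only [Finset.mem_filter]
  constructor
  · intro hx
    refine ⟨hSD hx, ?_⟩
    rw [← hUnion] at hx
    rcases Finset.mem_union.mp hx with h | h
    · exact ⟨x, by simp [hS', Finset.mem_union, h], by simp⟩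
    · exact ⟨f x, by simp [hS', Finset.mem_union]; right; exact ⟨x, h, rfl⟩, hf x h⟩
  · rintro ⟨hxD, y, hy, hxy⟩
    rw [hS'] at hy
    rcases Finset.mem_union.mp hy with h | h
    · have hyS : y ∈ S := hUnion ▸ Finset.mem_union_left _ h
      by_contra hxS
      have hne : x ≠ y := fun he => hxS (he ▸ hyS)
      have := hD x hxD y (hSD hyS) hne
      omega
    · obtain ⟨z, hz, rfl⟩ := Finset.mem_image.mp h
      have hzS : z ∈ S := hUnion ▸ Finset.mem_union_right _ hz
      by_contra hxS
      have hne : x ≠ z := fun he => hxS (he ▸ hzS)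
      have h1 := hD x hxD z (hSD hzS) hne
      have h2 : hammingDist x z ≤ hammingDist x (f z) + hammingDist (f z) z :=
        hammingDist_triangle _ _ _
      have h3 : hammingDist (f z) z = hammingDist z (f z) := hammingDist_comm _ _
      have h4 := hf z hz
      omega

/-- Construction 6: if `D ⊆ {0,1}^L` has minimum Hamming distance at least `2ε+1`
and `M ≤ |D|`, then `C₆ = { S ∈ X_M^L : S ⊆ D }` is a `(0,M,ε)_H` error-correcting
code. -/
theorem stmt_13 (L M ε : ℕ) (hL : 1 ≤ L) (hM : 1 ≤ M) (hML : M ≤ 2 ^ L)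
    (D : Finset (Fin L → Bool))
    (hD : ∀ x ∈ D, ∀ y ∈ D, x ≠ y → 2 * ε + 1 ≤ hammingDist x y)
    (hMD : M ≤ D.card) :
    isHamCode L 0 M ε { S | S.card = M ∧ S ⊆ D } := by
  intro S₁ hS₁ S₂ hS₂ hne
  rw [Set.eq_empty_iff_forall_notMem]
  rintro S' ⟨h1, h2⟩
  exact hne ((decode_eq L M ε D S₁ S' hD hS₁.2 h1).trans
    (decode_eq L M ε D S₂ S' hD hS₂.2 h2).symm)
end

section
/- Let t, ε be integers with 1 ≤ t ≤ M and ε ≥ 1, and set B = Σ_{i=1}^{ε} binom(L, i) and N = Σ_{i=0}^{ε−1} binom(L−1, i). If B > (t−1)·N, then every (0,t,ε)_H error-correcting code C ⊆ X_M^L satisfies |C| · (B − (t−1)·N)^t ≤ Σ_{i=M−t}^{M} binom(2^L, i). -/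
open Finset in
private lemma card_filter_powerset {α : Type*} [DecidableEq α] (s : Finset α) (I : Finset ℕ) :
    ((s.powerset).filter (fun u => u.card ∈ I)).card = ∑ i ∈ I, (s.card).choose i := by
  have h : (s.powerset).filter (fun u => u.card ∈ I) = I.biUnion (fun i => s.powersetCard i) := by
    ext u
    simp only [mem_filter, mem_powerset, mem_biUnion, Finset.mem_powersetCard]
    constructor
    · rintro ⟨hsub, hc⟩; exact ⟨u.card, hc, hsub, rfl⟩
    · rintro ⟨i, hi, hsub, rfl⟩; exact ⟨hsub, hi⟩
  rw [h, Finset.card_biUnion]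
  · exact Finset.sum_congr rfl fun i _ => Finset.card_powersetCard i s
  · intro i hi j hj hij
    simp only [Function.onFun]; rw [Finset.disjoint_left]
    intro u hu hu'
    rw [Finset.mem_powersetCard] at hu hu'
    exact hij (hu.2.symm.trans hu'.2)

private lemma card_ball_ge {L : ℕ} (x : Fin L → Bool) (ε : ℕ) :
    (∑ i ∈ Finset.Icc 1 ε, L.choose i) ≤
      ((Finset.univ : Finset (Fin L → Bool)).filter
        (fun z => z ≠ x ∧ hammingDist z x ≤ ε)).card := by
  classical
  set P := ((Finset.univ : Finset (Fin L)).powerset).filter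
      (fun u => u.card ∈ Finset.Icc 1 ε) with hPdef
  have hP : P.card = ∑ i ∈ Finset.Icc 1 ε, L.choose i := by
    have := card_filter_powerset (Finset.univ : Finset (Fin L)) (Finset.Icc 1 ε)
    rwa [Finset.card_univ, Fintype.card_fin] at this
  rw [← hP]
  set ι : Finset (Fin L) → (Fin L → Bool) := fun u c => if c ∈ u then !(x c) else x c with hι
  have hdiff : ∀ u : Finset (Fin L),
      (Finset.univ.filter (fun c => ι u c ≠ x c)) = u := by
    intro u; ext c
    simp only [Finset.mem_filter, Finset.mem_univ, true_and, hι]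
    by_cases h : c ∈ u <;> simp [h]
  have hd : ∀ u, hammingDist (ι u) x = u.card := by
    intro u
    have : hammingDist (ι u) x = (Finset.univ.filter (fun c => ι u c ≠ x c)).card := rfl
    rw [this, hdiff]
  refine Finset.card_le_card_of_injOn ι ?_ ?_
  · intro u hu
    simp only [Finset.mem_coe, hPdef, Finset.mem_filter, Finset.mem_powerset, Finset.mem_Icc] at hu
    obtain ⟨-, h1, h2⟩ := hu
    simp only [Finset.mem_coe, Finset.mem_filter, Finset.mem_univ, true_and]
    refine ⟨?_, by rw [hd]; exact h2⟩
    intro hzx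
    have : u.card = 0 := by rw [← hd u, hzx, hammingDist_self]
    omega
  · intro u _ v _ huv
    rw [← hdiff u, ← hdiff v, huv]

private lemma card_H_le {L : ℕ} (x : Fin L → Bool) (c : Fin L) (ε : ℕ) :
    ((Finset.univ : Finset (Fin L → Bool)).filter
        (fun z => hammingDist z x ≤ ε ∧ z c ≠ x c)).card ≤
      ∑ i ∈ Finset.range ε, (L - 1).choose i := by
  classical
  set P := (((Finset.univ : Finset (Fin L)).erase c).powerset).filter
      (fun u => u.card ∈ Finset.range ε) with hPdef
  have hP : P.card = ∑ i ∈ Finset.range ε, (L - 1).choose i := by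
    have h1 : ((Finset.univ : Finset (Fin L)).erase c).card = L - 1 := by
      rw [Finset.card_erase_of_mem (Finset.mem_univ c)]
      simp
    have := card_filter_powerset ((Finset.univ : Finset (Fin L)).erase c) (Finset.range ε)
    rw [h1] at this
    exact this
  rw [← hP]
  have hbne : ∀ b d : Bool, b ≠ d → b = !d := by decide
  set D : (Fin L → Bool) → Finset (Fin L) :=
    fun z => Finset.univ.filter (fun a => z a ≠ x a) with hDdef
  have hdcard : ∀ z, hammingDist z x = (D z).card := fun z => rfl
  refine Finset.card_le_card_of_injOn (fun z => (D z).erase c) ?_ ?_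
  · intro z hz
    simp only [Finset.mem_coe, Finset.mem_filter, Finset.mem_univ, true_and] at hz
    obtain ⟨h1, h2⟩ := hz
    have hcD : c ∈ D z := Finset.mem_filter.mpr ⟨Finset.mem_univ c, h2⟩
    simp only [Finset.mem_coe, hPdef, Finset.mem_filter, Finset.mem_powerset, Finset.mem_range]
    constructor
    · exact Finset.erase_subset_erase c (Finset.subset_univ _)
    · have := Finset.card_erase_of_mem hcD
      have hc1 : 1 ≤ (D z).card := Finset.card_pos.mpr ⟨c, hcD⟩
      rw [this]
      rw [hdcard] at h1
      omega
  · intro z hz z' hz' h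
    simp only [Finset.coe_filter, Finset.mem_univ, Set.mem_setOf_eq, true_and] at hz hz'
    have hcz : c ∈ D z := Finset.mem_filter.mpr ⟨Finset.mem_univ c, hz.2⟩
    have hcz' : c ∈ D z' := Finset.mem_filter.mpr ⟨Finset.mem_univ c, hz'.2⟩
    have hDD : D z = D z' := by
      rw [← Finset.insert_erase hcz, ← Finset.insert_erase hcz']
      simp only at h
      rw [h]
    funext a
    by_cases ha : a ∈ D z
    · have ha' : a ∈ D z' := hDD ▸ ha
      simp only [hDdef, Finset.mem_filter, Finset.mem_univ, true_and] at ha ha'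
      rw [hbne _ _ ha, hbne _ _ ha']
    · have ha' : a ∉ D z' := hDD ▸ ha
      simp only [hDdef, Finset.mem_filter, Finset.mem_univ, true_and, not_not] at ha ha'
      rw [ha, ha']

private lemma ball_packing (L M t ε : ℕ) (hL : 1 ≤ L) (ht : 1 ≤ t) (htM : t ≤ M)
    (S : Finset (Fin L → Bool)) (hS : S.card = M) :
    ∃ Im : Finset (Finset (Fin L → Bool)),
      (((∑ i ∈ Finset.Icc 1 ε, L.choose i) -
          (t - 1) * ∑ i ∈ Finset.range ε, (L - 1).choose i) ^ t ≤ Im.card) ∧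
      (∀ S' ∈ Im, S' ∈ hamBall L 0 t ε S ∧ M - t ≤ S'.card ∧ S'.card ≤ M) := by
  classical
  haveI : Nonempty (Fin t) := ⟨⟨0, ht⟩⟩
  obtain ⟨F₀, hF₀S, hF₀card⟩ := Finset.exists_subset_card_eq (show t ≤ S.card by omega)
  let e := F₀.equivFinOfCardEq hF₀card
  set x : Fin t → (Fin L → Bool) := fun j => (e.symm j : Fin L → Bool) with hxdef
  have hxS : ∀ j, x j ∈ S := fun j => hF₀S (e.symm j).2
  have hxinj : Function.Injective x := fun i j h => by
    have := e.symm.injective (Subtype.ext h); exact this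
  -- a coordinate where x i and x j differ, symmetric in i j
  set cc : Fin t → Fin t → Fin L := fun i j =>
    if h : (Finset.univ.filter (fun a => x i a ≠ x j a)).Nonempty
    then (Finset.univ.filter (fun a => x i a ≠ x j a)).min' h else ⟨0, hL⟩ with hccdef
  have hcc : ∀ i j, x i ≠ x j → x i (cc i j) ≠ x j (cc i j) := by
    intro i j hne
    have hne' : (Finset.univ.filter (fun a => x i a ≠ x j a)).Nonempty := by
      by_contra hcon
      apply hne
      funext a
      by_contra ha
      exact hcon ⟨a, Finset.mem_filter.mpr ⟨Finset.mem_univ a, ha⟩⟩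
    have hmem := Finset.min'_mem _ hne'
    rw [Finset.mem_filter] at hmem
    simpa only [hccdef, dif_pos hne'] using hmem.2
  set c : Fin t → Fin t → Fin L := fun i j => cc (min i j) (max i j) with hcdef
  have hcsymm : ∀ i j, c i j = c j i := by
    intro i j; simp only [hcdef, min_comm, max_comm]
  have hc : ∀ i j, i ≠ j → x i (c i j) ≠ x j (c i j) := by
    intro i j hij
    have hne : x i ≠ x j := fun h => hij (hxinj h)
    rcases le_total i j with h | h
    · have h1 : min i j = i := min_eq_left h
      have h2 : max i j = j := max_eq_right h
      simpa only [hcdef, h1, h2] using hcc i j hne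
    · have h1 : min i j = j := min_eq_right h
      have h2 : max i j = i := max_eq_left h
      have := hcc j i hne.symm
      simp only [hcdef, h1, h2]
      exact fun hcon => this hcon.symm
  -- the candidate sets
  set A : Fin t → Finset (Fin L → Bool) := fun j =>
    (Finset.univ.filter (fun z => z ≠ x j ∧ hammingDist z (x j) ≤ ε)) \
    ((Finset.univ.filter (fun i => i ≠ j)).biUnion (fun i =>
       Finset.univ.filter (fun z => hammingDist z (x j) ≤ ε ∧ z (c i j) ≠ x j (c i j))))
    with hAdef
  have hA1 : ∀ j z, z ∈ A j → z ≠ x j ∧ hammingDist z (x j) ≤ ε := by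
    intro j z hz
    have := (Finset.mem_sdiff.mp hz).1
    rw [Finset.mem_filter] at this
    exact this.2
  have hA2 : ∀ j z, z ∈ A j → ∀ i, i ≠ j → z (c i j) = x j (c i j) := by
    intro j z hz i hij
    have h2 := (Finset.mem_sdiff.mp hz).2
    have hd := (hA1 j z hz).2
    by_contra hne
    apply h2
    rw [Finset.mem_biUnion]
    exact ⟨i, Finset.mem_filter.mpr ⟨Finset.mem_univ i, hij⟩,
      Finset.mem_filter.mpr ⟨Finset.mem_univ z, hd, hne⟩⟩
  have hAdisj : ∀ i j, i ≠ j → Disjoint (A i) (A j) := by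
    intro i j hij
    rw [Finset.disjoint_left]
    intro z hzi hzj
    have h1 := hA2 j z hzj i hij
    have h2 := hA2 i z hzi j hij.symm
    rw [hcsymm j i] at h2
    exact hc i j hij (h2 ▸ h1 ▸ rfl)
  have hxA : ∀ i j, x i ∉ A j := by
    intro i j hx
    by_cases hij : i = j
    · subst hij; exact (hA1 i (x i) hx).1 rfl
    · have hd := (hA1 j (x i) hx).2
      have heq := hA2 j (x i) hx i hij
      exact hc i j hij heq
  have hAcard : ∀ j, ((∑ i ∈ Finset.Icc 1 ε, L.choose i) -
      (t - 1) * ∑ i ∈ Finset.range ε, (L - 1).choose i) ≤ (A j).card := by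
    intro j
    have hball := card_ball_ge (x j) ε
    have hbi : (((Finset.univ.filter (fun i => i ≠ j))).biUnion (fun i =>
        Finset.univ.filter (fun z => hammingDist z (x j) ≤ ε ∧ z (c i j) ≠ x j (c i j)))).card ≤
        (t - 1) * ∑ i ∈ Finset.range ε, (L - 1).choose i := by
      refine (Finset.card_biUnion_le).trans ?_
      have hcardfilter : (Finset.univ.filter (fun i => i ≠ j)).card = t - 1 := by
        rw [Finset.filter_ne', Finset.card_erase_of_mem (Finset.mem_univ j)]
        simp
      calc ∑ i ∈ Finset.univ.filter (fun i => i ≠ j),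
            (Finset.univ.filter (fun z => hammingDist z (x j) ≤ ε ∧
              z (c i j) ≠ x j (c i j))).card
          ≤ ∑ _i ∈ Finset.univ.filter (fun i => i ≠ j),
            (∑ i ∈ Finset.range ε, (L - 1).choose i) :=
            Finset.sum_le_sum (fun i _ => card_H_le (x j) (c i j) ε)
        _ = (t - 1) * ∑ i ∈ Finset.range ε, (L - 1).choose i := by
            rw [Finset.sum_const, hcardfilter, smul_eq_mul]
    have hsd := Finset.card_le_card_sdiff_add_card (s :=
      (Finset.univ.filter (fun z => z ≠ x j ∧ hammingDist z (x j) ≤ ε)))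
      (t := ((Finset.univ.filter (fun i => i ≠ j))).biUnion (fun i =>
        Finset.univ.filter (fun z => hammingDist z (x j) ≤ ε ∧ z (c i j) ≠ x j (c i j))))
    simp only [hAdef]
    exact Nat.sub_le_iff_le_add.mpr (hball.trans (hsd.trans (Nat.add_le_add_left hbi _)))
  -- substitution machinery
  set zf : (Fin t → (Fin L → Bool)) → Fin t → (Fin L → Bool) :=
    fun g j => if g j ∈ S then g j else x j with hzfdef
  set wf : (Fin t → (Fin L → Bool)) → Fin t → (Fin L → Bool) :=
    fun g j => if g j ∈ S then x j else g j with hwfdef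
  set Phi : (Fin t → (Fin L → Bool)) → Finset (Fin L → Bool) :=
    fun g => (S \ (Finset.univ.image (zf g))) ∪ (Finset.univ.image (wf g)) with hPhidef
  set D := Fintype.piFinset A with hDdef
  have hg_of : ∀ g ∈ D, ∀ j, g j ∈ A j := fun g hg => Fintype.mem_piFinset.mp hg
  have hzf_inj : ∀ g, (∀ j, g j ∈ A j) → Function.Injective (zf g) := by
    intro g hg i j h
    by_contra hij
    simp only [hzfdef] at h
    by_cases hgi : g i ∈ S <;> by_cases hgj : g j ∈ S
    · rw [if_pos hgi, if_pos hgj] at h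
      have : g i ∈ A j := by rw [h]; exact hg j
      exact (Finset.disjoint_left.mp (hAdisj i j hij)) (hg i) this
    · rw [if_pos hgi, if_neg hgj] at h
      have : x j ∈ A i := by rw [← h]; exact hg i
      exact hxA j i this
    · rw [if_neg hgi, if_pos hgj] at h
      have : x i ∈ A j := by rw [h]; exact hg j
      exact hxA i j this
    · rw [if_neg hgi, if_neg hgj] at h
      exact hij (hxinj h)
  have hFS : ∀ g, (∀ j, g j ∈ A j) → (Finset.univ.image (zf g)) ⊆ S := by
    intro g hg v hv
    obtain ⟨j, -, rfl⟩ := Finset.mem_image.mp hv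
    simp only [hzfdef]
    split
    · assumption
    · exact hxS j
  have hfz : ∀ g, (∀ j, g j ∈ A j) → ∀ j,
      (fun v => wf g (Function.invFun (zf g) v)) (zf g j) = wf g j := by
    intro g hg j
    simp only
    rw [Function.leftInverse_invFun (hzf_inj g hg) j]
  have hmem : ∀ g, (∀ j, g j ∈ A j) → Phi g ∈ hamBall L 0 t ε S := by
    intro g hg
    refine ⟨S \ (Finset.univ.image (zf g)), ∅, Finset.univ.image (zf g),
      fun v => wf g (Function.invFun (zf g) v), ?_, ?_, ?_, ?_, ?_, ?_, ?_, ?_⟩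
    · exact Finset.disjoint_empty_right _
    · exact Finset.sdiff_disjoint
    · exact Finset.disjoint_empty_left _
    · rw [Finset.union_empty]
      exact Finset.sdiff_union_of_subset (hFS g hg)
    · simp
    · exact (Finset.card_image_le).trans (by simp)
    · intro v hv
      obtain ⟨j, -, rfl⟩ := Finset.mem_image.mp hv
      rw [hfz g hg j]
      simp only [hzfdef, hwfdef]
      by_cases hgj : g j ∈ S
      · rw [if_pos hgj, if_pos hgj]
        exact (hA1 j (g j) (hg j)).2
      · rw [if_neg hgj, if_neg hgj]
        rw [hammingDist_comm]
        exact (hA1 j (g j) (hg j)).2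
    · simp only [hPhidef]
      congr 1
      rw [Finset.image_image]
      refine Finset.image_congr ?_
      intro j _
      exact (hfz g hg j).symm
  have hcards : ∀ g, (∀ j, g j ∈ A j) → M - t ≤ (Phi g).card ∧ (Phi g).card ≤ M := by
    intro g hg
    have hFcard : (Finset.univ.image (zf g)).card = t := by
      rw [Finset.card_image_of_injective _ (hzf_inj g hg)]
      simp
    have hUcard : (S \ Finset.univ.image (zf g)).card = M - t := by
      rw [Finset.card_sdiff_of_subset (hFS g hg), hS, hFcard]
    constructor
    · rw [← hUcard]
      refine Finset.card_le_card ?_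
      simp only [hPhidef]
      exact Finset.subset_union_left
    · have h1 := Finset.card_union_le (S \ Finset.univ.image (zf g)) (Finset.univ.image (wf g))
      have h2 : (Finset.univ.image (wf g)).card ≤ t := (Finset.card_image_le).trans (by simp)
      simp only [hPhidef]
      refine h1.trans ?_
      rw [hUcard]
      calc M - t + (Finset.univ.image (wf g)).card ≤ M - t + t := Nat.add_le_add_left h2 _
        _ = M := Nat.sub_add_cancel htM
  have helperA : ∀ g, (∀ j, g j ∈ A j) → ∀ j, (x j ∈ Phi g ↔ g j ∈ S) := by
    intro g hg j
    constructor
    · intro hx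
      by_contra hgj
      rcases Finset.mem_union.mp hx with h | h
      · apply (Finset.mem_sdiff.mp h).2
        refine Finset.mem_image.mpr ⟨j, Finset.mem_univ j, ?_⟩
        simp only [hzfdef, if_neg hgj]
      · obtain ⟨i, -, hwi⟩ := Finset.mem_image.mp h
        by_cases hgi : g i ∈ S
        · simp only [hwfdef, if_pos hgi] at hwi
          have : i = j := hxinj hwi
          exact hgj (this ▸ hgi)
        · simp only [hwfdef, if_neg hgi] at hwi
          have : x j ∈ A i := by rw [← hwi]; exact hg i
          exact hxA j i this
    · intro hgj
      apply Finset.mem_union_right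
      exact Finset.mem_image.mpr ⟨j, Finset.mem_univ j, by simp only [hwfdef, if_pos hgj]⟩
  have helperB : ∀ g, (∀ j, g j ∈ A j) → ∀ j, g j ∉ S →
      (g j ∈ Phi g ∧ ∀ v ∈ Phi g, v ∈ A j → v ∉ S → v = g j) := by
    intro g hg j hgj
    constructor
    · apply Finset.mem_union_right
      exact Finset.mem_image.mpr ⟨j, Finset.mem_univ j, by simp only [hwfdef, if_neg hgj]⟩
    · intro v hv hvA hvS
      rcases Finset.mem_union.mp hv with h | h
      · exact absurd (Finset.mem_sdiff.mp h).1 hvS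
      · obtain ⟨i, -, hwi⟩ := Finset.mem_image.mp h
        by_cases hgi : g i ∈ S
        · simp only [hwfdef, if_pos hgi] at hwi
          rw [← hwi] at hvA
          exact absurd hvA (hxA i j)
        · simp only [hwfdef, if_neg hgi] at hwi
          by_cases hij : i = j
          · rw [hij] at hwi; exact hwi.symm
          · rw [← hwi] at hvA
            exact absurd hvA (fun hmem =>
              (Finset.disjoint_left.mp (hAdisj i j hij)) (hg i) hmem)
  have helperC : ∀ g, (∀ j, g j ∈ A j) → ∀ j, g j ∈ S →
      (g j ∉ Phi g ∧ ∀ v, v ∈ A j → v ∈ S → v ∉ Phi g → v = g j) := by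
    intro g hg j hgj
    constructor
    · intro h
      rcases Finset.mem_union.mp h with h | h
      · apply (Finset.mem_sdiff.mp h).2
        exact Finset.mem_image.mpr ⟨j, Finset.mem_univ j, by simp only [hzfdef, if_pos hgj]⟩
      · obtain ⟨i, -, hwi⟩ := Finset.mem_image.mp h
        by_cases hgi : g i ∈ S
        · simp only [hwfdef, if_pos hgi] at hwi
          have : x i ∈ A j := by rw [hwi]; exact hg j
          exact hxA i j this
        · simp only [hwfdef, if_neg hgi] at hwi
          rw [hwi] at hgi
          exact hgi hgj
    · intro v hvA hvS hvn
      by_contra hne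
      apply hvn
      apply Finset.mem_union_left
      refine Finset.mem_sdiff.mpr ⟨hvS, ?_⟩
      intro hvF
      obtain ⟨i, -, hzi⟩ := Finset.mem_image.mp hvF
      by_cases hgi : g i ∈ S
      · simp only [hzfdef, if_pos hgi] at hzi
        by_cases hij : i = j
        · rw [hij] at hzi; exact hne hzi.symm
        · rw [← hzi] at hvA
          exact (Finset.disjoint_left.mp (hAdisj i j hij)) (hg i) hvA
      · simp only [hzfdef, if_neg hgi] at hzi
        rw [← hzi] at hvA
        exact hxA i j hvA
  have hPhiInj : Set.InjOn Phi (D : Set (Fin t → (Fin L → Bool))) := by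
    intro g hgD g' hgD' hPhieq
    have hg : ∀ j, g j ∈ A j := hg_of g (Finset.mem_coe.mp hgD)
    have hg' : ∀ j, g' j ∈ A j := hg_of g' (Finset.mem_coe.mp hgD')
    funext j
    by_cases hgj : g j ∈ S
    · have hg'j : g' j ∈ S := by
        refine (helperA g' hg' j).mp ?_
        rw [← hPhieq]
        exact (helperA g hg j).mpr hgj
      have h1 : g' j ∉ Phi g := by
        rw [hPhieq]
        exact (helperC g' hg' j hg'j).1
      exact ((helperC g hg j hgj).2 (g' j) (hg' j) hg'j h1).symm
    · have hg'j : g' j ∉ S := by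
        intro hcon
        apply hgj
        refine (helperA g hg j).mp ?_
        rw [hPhieq]
        exact (helperA g' hg' j).mpr hcon
      have h1 : g' j ∈ Phi g := by
        rw [hPhieq]
        exact (helperB g' hg' j hg'j).1
      exact ((helperB g hg j hgj).2 (g' j) h1 (hg' j) hg'j).symm
  refine ⟨D.image Phi, ?_, ?_⟩
  · rw [Finset.card_image_of_injOn hPhiInj, hDdef, Fintype.card_piFinset]
    calc ((∑ i ∈ Finset.Icc 1 ε, L.choose i) -
          (t - 1) * ∑ i ∈ Finset.range ε, (L - 1).choose i) ^ t
        = ∏ _j : Fin t, ((∑ i ∈ Finset.Icc 1 ε, L.choose i) -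
          (t - 1) * ∑ i ∈ Finset.range ε, (L - 1).choose i) := by
          rw [Finset.prod_const, Finset.card_univ, Fintype.card_fin]
      _ ≤ ∏ j : Fin t, (A j).card := Finset.prod_le_prod' (fun j _ => hAcard j)
  · intro S' hS'
    obtain ⟨g, hgD, rfl⟩ := Finset.mem_image.mp hS'
    have hg := hg_of g hgD
    exact ⟨hmem g hg, (hcards g hg).1, (hcards g hg).2⟩

/-- Sphere-packing bound for `(0,t,ε)_H` codes: with `B = Σ_{i=1}^ε binom(L,i)` and
`N = Σ_{i=0}^{ε-1} binom(L-1,i)`, if `B > (t-1)·N` then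
`|C| · (B − (t−1)N)^t ≤ Σ_{i=M−t}^{M} binom(2^L, i)`. -/
theorem stmt_14 (L M t ε : ℕ) (hL : 1 ≤ L) (hM : 1 ≤ M) (hML : M ≤ 2 ^ L)
    (ht : 1 ≤ t) (htM : t ≤ M) (hε : 1 ≤ ε)
    (C : Finset (Finset (Fin L → Bool))) (hcard : ∀ S ∈ C, S.card = M)
    (hcode : isHamCode L 0 t ε ↑C)
    (hBN : (t - 1) * (∑ i ∈ Finset.range ε, (L - 1).choose i) <
      ∑ i ∈ Finset.Icc 1 ε, L.choose i) :
    C.card * ((∑ i ∈ Finset.Icc 1 ε, L.choose i) -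
        (t - 1) * ∑ i ∈ Finset.range ε, (L - 1).choose i) ^ t ≤
      ∑ i ∈ Finset.Icc (M - t) M, (2 ^ L).choose i := by
  classical
  have key : ∀ S ∈ C, ∃ Im : Finset (Finset (Fin L → Bool)),
      (((∑ i ∈ Finset.Icc 1 ε, L.choose i) -
          (t - 1) * ∑ i ∈ Finset.range ε, (L - 1).choose i) ^ t ≤ Im.card) ∧
      (∀ S' ∈ Im, S' ∈ hamBall L 0 t ε S ∧ M - t ≤ S'.card ∧ S'.card ≤ M) :=
    fun S hSC => ball_packing L M t ε hL ht htM S (hcard S hSC)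
  choose! Im hIm1 hIm2 using key
  set T := ((Finset.univ : Finset (Fin L → Bool)).powerset).filter
      (fun u => u.card ∈ Finset.Icc (M - t) M) with hTdef
  have hT : T.card = ∑ i ∈ Finset.Icc (M - t) M, (2 ^ L).choose i := by
    have h1 := card_filter_powerset (Finset.univ : Finset (Fin L → Bool))
      (Finset.Icc (M - t) M)
    have h2 : (Finset.univ : Finset (Fin L → Bool)).card = 2 ^ L := by
      rw [Finset.card_univ]
      simp [Fintype.card_fun]
    rw [h2] at h1
    exact h1
  have hdisj : ∀ S₁ ∈ C, ∀ S₂ ∈ C, S₁ ≠ S₂ → Disjoint (Im S₁) (Im S₂) := by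
    intro S₁ h₁ S₂ h₂ hne
    rw [Finset.disjoint_left]
    intro v hv1 hv2
    have hb1 := (hIm2 S₁ h₁ v hv1).1
    have hb2 := (hIm2 S₂ h₂ v hv2).1
    have := hcode S₁ (Finset.mem_coe.mpr h₁) S₂ (Finset.mem_coe.mpr h₂) hne
    exact Set.eq_empty_iff_forall_notMem.mp this v ⟨hb1, hb2⟩
  have hsub : C.biUnion Im ⊆ T := by
    intro v hv
    obtain ⟨S, hSC, hvIm⟩ := Finset.mem_biUnion.mp hv
    obtain ⟨-, hc1, hc2⟩ := hIm2 S hSC v hvIm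
    refine Finset.mem_filter.mpr ⟨Finset.mem_powerset.mpr (Finset.subset_univ v), ?_⟩
    exact Finset.mem_Icc.mpr ⟨hc1, hc2⟩
  have h1 : C.card * ((∑ i ∈ Finset.Icc 1 ε, L.choose i) -
      (t - 1) * ∑ i ∈ Finset.range ε, (L - 1).choose i) ^ t ≤ ∑ S ∈ C, (Im S).card := by
    rw [← smul_eq_mul, ← Finset.sum_const]
    exact Finset.sum_le_sum hIm1
  have h2 : ∑ S ∈ C, (Im S).card = (C.biUnion Im).card := (Finset.card_biUnion hdisj).symm
  have h3 : (C.biUnion Im).card ≤ T.card := Finset.card_le_card hsub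
  rw [← hT]
  exact h1.trans (h2.le.trans h3)
end

section
/- Let t, ε be integers with 1 ≤ t ≤ M and ε ≥ 1, and set S_I = Σ_{i=0}^{ε} binom(L+ε, i) and N_I = Σ_{i=0}^{ε−1} binom(L+ε, i)·(1 − (−1)^{ε−i}). If S_I > (t−1)·N_I, then every (0,t,ε)_L error-correcting code C ⊆ X_M^L satisfies |C| · binom(M, t) · (S_I − (t−1)·N_I)^t ≤ binom(2^L, M−t) · binom(2^{L+ε}, t). -/
/-- The size `S_I = Σ_{i=0}^{ε} binom(L+ε, i)` of the `ε`-insertion sphere. -/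
def SI (L ε : ℕ) : ℤ := ∑ i ∈ Finset.range (ε + 1), ((L + ε).choose i : ℤ)

/-- The maximum intersection `N_I = Σ_{i=0}^{ε−1} binom(L+ε, i)·(1 − (−1)^{ε−i})`
of two `ε`-insertion spheres of two distinct words. -/
def NI (L ε : ℕ) : ℤ :=
  ∑ i ∈ Finset.range ε, ((L + ε).choose i : ℤ) * (1 - (-1) ^ (ε - i))

/-- All binary words of length `n`. -/
def allB : ℕ → Finset (List Bool)
  | 0 => {[]}
  | n+1 => ((allB n).image (List.cons true)) ∪ ((allB n).image (List.cons false))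

lemma mem_allB : ∀ n (x : List Bool), x ∈ allB n ↔ x.length = n := by
  intro n
  induction n with
  | zero => intro x; simp [allB, List.length_eq_zero_iff]
  | succ n ih =>
    intro x
    simp only [allB, Finset.mem_union, Finset.mem_image]
    constructor
    · rintro (⟨a, ha, rfl⟩ | ⟨a, ha, rfl⟩) <;> simp [(ih a).1 ha]
    · intro hx
      cases x with
      | nil => simp at hx
      | cons c x' =>
        simp at hx
        cases c
        · exact Or.inr ⟨x', (ih x').2 hx, rfl⟩
        · exact Or.inl ⟨x', (ih x').2 hx, rfl⟩

lemma card_allB : ∀ n, (allB n).card = 2 ^ n := by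
  intro n
  induction n with
  | zero => rfl
  | succ n ih =>
    rw [allB, Finset.card_union_of_disjoint, Finset.card_image_of_injective _ (by intro a b h; simpa using h), Finset.card_image_of_injective _ (by intro a b h; simpa using h), ih]
    · ring
    · simp only [Finset.disjoint_left, Finset.mem_image]
      rintro x ⟨a, _, rfl⟩ ⟨b, _, h⟩
      simp at h

/-- supersequences of `x` of length `n` -/
def ssph (n : ℕ) (x : List Bool) : Finset (List Bool) :=
  (allB n).filter (x.Sublist ·)

lemma ssph_empty (n : ℕ) (x : List Bool) (h : n < x.length) : ssph n x = ∅ := by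
  ext z
  simp only [ssph, Finset.mem_filter, mem_allB, Finset.notMem_empty, iff_false]
  rintro ⟨rfl, hs⟩
  exact absurd hs.length_le (by omega)

lemma ssph_self (x : List Bool) : ssph x.length x = {x} := by
  ext z
  simp only [ssph, Finset.mem_filter, mem_allB, Finset.mem_singleton]
  constructor
  · rintro ⟨h, hs⟩; exact (hs.eq_of_length h.symm).symm
  · rintro rfl; exact ⟨rfl, List.Sublist.refl z⟩

lemma pascalSum (n k : ℕ) :
    ∑ i ∈ Finset.range (k+1), (n+1).choose i
      = ∑ i ∈ Finset.range (k+1), n.choose i + ∑ i ∈ Finset.range k, n.choose i := by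
  induction k with
  | zero => simp
  | succ k ih =>
    rw [Finset.sum_range_succ, ih, Nat.choose_succ_succ',
      Finset.sum_range_succ (f := fun i => n.choose i) (n := k+1),
      Finset.sum_range_succ (f := fun i => n.choose i) (n := k)]
    ring

lemma card_filter_succ (n : ℕ) (P : List Bool → Prop) [DecidablePred P] :
    ((allB (n+1)).filter P).card
      = ((allB n).filter (fun z => P (true::z))).card
      + ((allB n).filter (fun z => P (false::z))).card := by
  have hinj : ∀ c : Bool, Function.Injective (List.cons c) := by
    intro c a b h; simpa using h
  rw [show allB (n+1) = ((allB n).image (List.cons true)) ∪ ((allB n).image (List.cons false)) from rfl,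
    Finset.filter_union, Finset.filter_image, Finset.filter_image,
    Finset.card_union_of_disjoint, Finset.card_image_of_injective _ (hinj true),
    Finset.card_image_of_injective _ (hinj false)]
  simp only [Finset.disjoint_left, Finset.mem_image]
  rintro x ⟨a, _, rfl⟩ ⟨b, _, h⟩
  simp at h

lemma filter_cons_sublist (n : ℕ) (a c : Bool) (x' : List Bool) :
    (allB n).filter (fun z => (a::x').Sublist (c::z))
      = if a = c then ssph n x' else ssph n (a::x') := by
  split_ifs with h
  · subst h
    ext z
    simp [ssph, List.cons_sublist_cons]
  · ext z
    simp only [ssph, Finset.mem_filter, and_congr_right_iff]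
    intro _
    rw [List.cons_sublist_cons']
    constructor
    · rintro (h1 | ⟨rfl, _⟩); exact h1; exact absurd rfl h
    · exact Or.inl

lemma card_ssph_succ (n : ℕ) (a : Bool) (x' : List Bool) :
    (ssph (n+1) (a::x')).card = (ssph n x').card + (ssph n (a::x')).card := by
  rw [show ssph (n+1) (a::x') = (allB (n+1)).filter ((a::x').Sublist ·) from rfl,
    card_filter_succ]
  rw [filter_cons_sublist, filter_cons_sublist]
  cases a <;> simp [Nat.add_comm]

lemma card_ssph : ∀ (n : ℕ) (x : List Bool), x.length ≤ n →
    (ssph n x).card = ∑ i ∈ Finset.range (n - x.length + 1), n.choose i := by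
  intro n
  induction n with
  | zero =>
    intro x hx
    rw [List.length_eq_zero_iff.mp (Nat.le_zero.mp hx)]
    simp [ssph, allB]
  | succ n ih =>
    intro x hx
    cases x with
    | nil =>
      have : ssph (n+1) [] = allB (n+1) := by
        simp [ssph, Finset.filter_true_of_mem, List.nil_sublist]
      rw [this, card_allB]
      simp [Nat.sum_range_choose]
    | cons a x' =>
      rw [card_ssph_succ]
      rcases Nat.lt_or_ge x'.length n with hlt | hge
      · -- x'.length < n, so (a::x').length ≤ n
        rw [ih x' (by omega), ih (a::x') (by simpa using hlt)]
        have h1 : n - x'.length + 1 = (n - (a::x').length + 1) + 1 := by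
          simp only [List.length_cons]; omega
        have h2 : n + 1 - (a::x').length + 1 = (n - (a::x').length + 1) + 1 := by
          simp only [List.length_cons]; omega
        rw [h1, h2, pascalSum]
      · -- x'.length = n
        have hx' : x'.length = n := by simp at hx; omega
        rw [ih x' (le_of_eq hx'), ssph_empty n (a::x') (by simp [hx'])]
        simp [hx']

lemma ssph_inter_eq_filter (n : ℕ) (x y : List Bool) :
    ssph n x ∩ ssph n y = (allB n).filter (fun z => x.Sublist z ∧ y.Sublist z) := by
  simp [ssph, Finset.filter_and]

lemma card_inter_ssph_le : ∀ (n : ℕ) (x y : List Bool), x.length = y.length → x ≠ y →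
    (ssph n x ∩ ssph n y).card ≤ 2 * ∑ i ∈ Finset.range (n - x.length), (n-1).choose i := by
  intro n
  induction n with
  | zero =>
    intro x y hlen hne
    have : ssph 0 x ∩ ssph 0 y = ∅ := by
      rw [ssph_inter_eq_filter]
      ext z
      simp only [allB, Finset.filter_singleton]
      split_ifs with h
      · simp only [Finset.mem_singleton, Finset.notMem_empty, iff_false]
        rintro rfl
        exact hne ((List.sublist_nil.mp h.1).trans (List.sublist_nil.mp h.2).symm)
      · simp
    simp [this]
  | succ n ih =>
    intro x y hlen hne
    match x, y with
    | [], [] => exact absurd rfl hne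
    | [], b::y' => simp at hlen
    | a::x', [] => simp at hlen
    | a::x', b::y' =>
      by_cases hm : (a::x').length ≤ n
      · -- main recursive case
        have hm' : (b::y').length ≤ n := hlen ▸ hm
        rw [ssph_inter_eq_filter, card_filter_succ, Finset.filter_and, Finset.filter_and,
          filter_cons_sublist n a true x', filter_cons_sublist n b true y',
          filter_cons_sublist n a false x', filter_cons_sublist n b false y']
        have hlen' : x'.length = y'.length := by simpa using hlen
        by_cases hab : a = b
        · subst hab
          have hne' : x' ≠ y' := fun h => hne (by rw [h])
          have key1 := ih x' y' hlen' hne'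
          have key2 := ih (a::x') (a::y') hlen hne
          -- resolve ifs
          cases a
          · simp only [if_neg (by decide : ¬ (false = true)), if_pos rfl]
            have heq : n - x'.length = n - (false::x').length + 1 := by
              simp only [List.length_cons]; simp only [List.length_cons] at hm; omega
            rw [heq] at key1
            calc (ssph n (false::x') ∩ ssph n (false::y')).card
                  + (ssph n x' ∩ ssph n y').card
                ≤ 2 * ∑ i ∈ Finset.range (n - (false::x').length), (n-1).choose i
                  + 2 * ∑ i ∈ Finset.range (n - (false::x').length + 1), (n-1).choose i := by
                  omega
              _ ≤ 2 * ∑ i ∈ Finset.range (n + 1 - (false::x').length), (n+1-1).choose i := by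
                  obtain ⟨n', rfl⟩ : ∃ n', n = n' + 1 := ⟨n - 1, by
                    simp only [List.length_cons] at hm; omega⟩
                  have h2 : n' + 1 + 1 - (false::x').length = (n' + 1 - (false::x').length) + 1 := by
                    simp only [List.length_cons] at hm ⊢; omega
                  rw [h2, show n' + 1 + 1 - 1 = n' + 1 from rfl, show n' + 1 - 1 = n' from rfl,
                    pascalSum n' (n' + 1 - (false::x').length)]
                  omega
          · simp only [if_pos rfl, if_neg (by decide : ¬ (true = false))]
            have heq : n - x'.length = n - (true::x').length + 1 := by
              simp only [List.length_cons]; simp only [List.length_cons] at hm; omega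
            rw [heq] at key1
            calc (ssph n x' ∩ ssph n y').card
                  + (ssph n (true::x') ∩ ssph n (true::y')).card
                ≤ 2 * ∑ i ∈ Finset.range (n - (true::x').length + 1), (n-1).choose i
                  + 2 * ∑ i ∈ Finset.range (n - (true::x').length), (n-1).choose i := by
                  omega
              _ ≤ 2 * ∑ i ∈ Finset.range (n + 1 - (true::x').length), (n+1-1).choose i := by
                  obtain ⟨n', rfl⟩ : ∃ n', n = n' + 1 := ⟨n - 1, by
                    simp only [List.length_cons] at hm; omega⟩
                  have h2 : n' + 1 + 1 - (true::x').length = (n' + 1 - (true::x').length) + 1 := by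
                    simp only [List.length_cons] at hm ⊢; omega
                  rw [h2, show n' + 1 + 1 - 1 = n' + 1 from rfl, show n' + 1 - 1 = n' from rfl,
                    pascalSum n' (n' + 1 - (true::x').length)]
                  omega
        · -- a ≠ b : bound each term by the sphere of the longer word
          have hcx := card_ssph n (a::x') hm
          have hcy := card_ssph n (b::y') hm'
          have hb1 : ((if a = true then ssph n x' else ssph n (a::x'))
              ∩ (if b = true then ssph n y' else ssph n (b::y'))).card
              ≤ ∑ i ∈ Finset.range (n - (a::x').length + 1), n.choose i := by
            cases a
            · have hb : b = true := by cases b; exact absurd rfl hab; rfl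
              subst hb
              simp only [if_neg (by decide : ¬ (false = true)), if_pos rfl]
              calc (ssph n (false::x') ∩ ssph n y').card ≤ (ssph n (false::x')).card :=
                    Finset.card_le_card Finset.inter_subset_left
                _ = _ := hcx
            · have hb : b = false := by cases b; rfl; exact absurd rfl hab
              subst hb
              simp only [if_pos rfl, if_neg (by decide : ¬ (false = true))]
              calc (ssph n x' ∩ ssph n (false::y')).card ≤ (ssph n (false::y')).card :=
                    Finset.card_le_card Finset.inter_subset_right
                _ = _ := by rw [hcy]; simp only [List.length_cons, hlen']
          have hb2 : ((if a = false then ssph n x' else ssph n (a::x'))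
              ∩ (if b = false then ssph n y' else ssph n (b::y'))).card
              ≤ ∑ i ∈ Finset.range (n - (a::x').length + 1), n.choose i := by
            cases a
            · have hb : b = true := by cases b; exact absurd rfl hab; rfl
              subst hb
              simp only [if_pos rfl, if_neg (by decide : ¬ (true = false))]
              calc (ssph n x' ∩ ssph n (true::y')).card ≤ (ssph n (true::y')).card :=
                    Finset.card_le_card Finset.inter_subset_right
                _ = _ := by rw [hcy]; simp only [List.length_cons, hlen']
            · have hb : b = false := by cases b; rfl; exact absurd rfl hab
              subst hb
              simp only [if_neg (by decide : ¬ (true = false)), if_pos rfl]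
              calc (ssph n (true::x') ∩ ssph n y').card ≤ (ssph n (true::x')).card :=
                    Finset.card_le_card Finset.inter_subset_left
                _ = _ := hcx
          have htarget : n + 1 - (a::x').length = n - (a::x').length + 1 := by
            simp only [List.length_cons] at hm ⊢; omega
          rw [htarget, show n + 1 - 1 = n from rfl]
          omega
      · -- n + 1 ≤ length : intersection is empty
        have : ssph (n+1) (a::x') ∩ ssph (n+1) (b::y') = ∅ := by
          rw [Finset.eq_empty_iff_forall_notMem]
          intro z hz
          rw [Finset.mem_inter] at hz
          obtain ⟨hzx, hzy⟩ := hz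
          simp only [ssph, Finset.mem_filter, mem_allB] at hzx hzy
          have e1 : (a::x') = z := hzx.2.eq_of_length (by
            have := hzx.2.length_le; omega)
          have e2 : (b::y') = z := hzy.2.eq_of_length (by
            have := hzy.2.length_le
            rw [← hlen] at *; omega)
          exact hne (e1.trans e2.symm)
        simp [this]

lemma nid (n : ℕ) (e : ℕ) :
    (∑ i ∈ Finset.range e, ((n+1).choose i : ℤ) * (1 - (-1)^(e - i)))
      = 2 * ∑ i ∈ Finset.range e, (n.choose i : ℤ) := by
  induction e with
  | zero => simp
  | succ e ih =>
    have h1 : ∀ i ∈ Finset.range (e+1),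
        ((n+1).choose i : ℤ) * (1 - (-1)^(e+1-i))
          = 2*((n+1).choose i : ℤ) - ((n+1).choose i : ℤ)*(1 - (-1)^(e-i)) := by
      intro i hi
      rw [Finset.mem_range] at hi
      rw [show e + 1 - i = (e - i) + 1 by omega, pow_succ]
      ring
    rw [Finset.sum_congr rfl h1, Finset.sum_sub_distrib,
      Finset.sum_range_succ (f := fun i => ((n+1).choose i : ℤ)*(1-(-1)^(e-i))), ih]
    have hp := pascalSum n e
    have hp' : (∑ i ∈ Finset.range (e+1), ((n+1).choose i : ℤ))
        = ∑ i ∈ Finset.range (e+1), (n.choose i : ℤ) + ∑ i ∈ Finset.range e, (n.choose i : ℤ) := by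
      exact_mod_cast congrArg (Nat.cast : ℕ → ℤ) hp
    rw [← Finset.mul_sum, hp']
    simp
    ring

/-- candidate images for `x` within `F`. -/
def CSet (n : ℕ) (F : Finset (List Bool)) (x : List Bool) : Finset (List Bool) :=
  ssph n x \ (F.erase x).biUnion (fun y => ssph n y)

lemma card_CSet_ge (L e tt : ℕ) (F : Finset (List Bool)) (x : List Bool)
    (hx : x ∈ F) (hF : F.card = tt) (hlen : ∀ w ∈ F, w.length = L) :
    ∑ i ∈ Finset.range (e+1), (L+e).choose i
      - (tt - 1) * (2 * ∑ i ∈ Finset.range e, (L+e-1).choose i)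
      ≤ (CSet (L+e) F x).card := by
  set n := L + e with hn
  set s := ssph n x with hs
  set B := (F.erase x).biUnion (fun y => ssph n y) with hB
  have hxlen : x.length = L := hlen x hx
  have hcs : s.card = ∑ i ∈ Finset.range (e+1), n.choose i := by
    have := card_ssph n x (by omega)
    rwa [hxlen, show n - L + 1 = e + 1 by omega] at this
  have hsub : s ∩ B ⊆ (F.erase x).biUnion (fun y => s ∩ ssph n y) := by
    intro z hz
    rw [Finset.mem_inter] at hz
    obtain ⟨y, hy, hzy⟩ := Finset.mem_biUnion.mp hz.2
    exact Finset.mem_biUnion.mpr ⟨y, hy, Finset.mem_inter.mpr ⟨hz.1, hzy⟩⟩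
  have hib : (s ∩ B).card ≤ (tt - 1) * (2 * ∑ i ∈ Finset.range e, (L+e-1).choose i) := by
    calc (s ∩ B).card ≤ ((F.erase x).biUnion (fun y => s ∩ ssph n y)).card :=
          Finset.card_le_card hsub
      _ ≤ ∑ y ∈ F.erase x, (s ∩ ssph n y).card := Finset.card_biUnion_le
      _ ≤ ∑ _y ∈ F.erase x, (2 * ∑ i ∈ Finset.range e, (L+e-1).choose i) := by
          apply Finset.sum_le_sum
          intro y hy
          rw [Finset.mem_erase] at hy
          have := card_inter_ssph_le n x y
            (by rw [hxlen, hlen y hy.2]) (fun h => hy.1 h.symm)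
          rwa [hxlen, show n - L = e by omega] at this
      _ = (F.erase x).card * (2 * ∑ i ∈ Finset.range e, (L+e-1).choose i) := by
          rw [Finset.sum_const, smul_eq_mul]
      _ = (tt - 1) * (2 * ∑ i ∈ Finset.range e, (L+e-1).choose i) := by
          rw [Finset.card_erase_of_mem hx, hF]
  have hsd : (s ∩ B).card + (s \ B).card = s.card := Finset.card_inter_add_card_sdiff s B
  have hcc : (CSet n F x).card = (s \ B).card := rfl
  have hgoal : ∑ i ∈ Finset.range (e+1), (L+e).choose i = ∑ i ∈ Finset.range (e+1), n.choose i := rfl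
  have hgoal2 : (2 * ∑ i ∈ Finset.range e, (L+e-1).choose i) = (2 * ∑ i ∈ Finset.range e, (n-1).choose i) := rfl
  rw [hgoal, hgoal2] at *
  omega

def imgOf (F : Finset (List Bool)) (g : ∀ a ∈ F, List Bool) : Finset (List Bool) :=
  F.attach.image (fun a => g a.1 a.2)

def Dom (n t : ℕ) (S : Finset (List Bool)) :
    Finset (Σ F : Finset (List Bool), ∀ a ∈ F, List Bool) :=
  (S.powersetCard t).sigma (fun F => F.pi (fun x => CSet n F x))

def Phi (S : Finset (List Bool)) (p : Σ F : Finset (List Bool), ∀ a ∈ F, List Bool) :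
    Finset (List Bool) × Finset (List Bool) :=
  (S \ p.1, imgOf p.1 p.2)

lemma dom_spec {n t : ℕ} {S : Finset (List Bool)}
    {p : Σ F : Finset (List Bool), ∀ a ∈ F, List Bool} (hp : p ∈ Dom n t S) :
    p.1 ⊆ S ∧ p.1.card = t ∧
      (∀ a (ha : a ∈ p.1), p.2 a ha ∈ ssph n a ∧
        ∀ b ∈ p.1, b ≠ a → p.2 a ha ∉ ssph n b) := by
  obtain ⟨F, g⟩ := p
  rw [Dom, Finset.mem_sigma, Finset.mem_powersetCard] at hp
  refine ⟨hp.1.1, hp.1.2, ?_⟩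
  intro a ha
  have := Finset.mem_pi.mp hp.2 a ha
  rw [CSet, Finset.mem_sdiff] at this
  refine ⟨this.1, ?_⟩
  intro b hb hba hmem
  exact this.2 (Finset.mem_biUnion.mpr ⟨b, Finset.mem_erase.mpr ⟨hba, hb⟩, hmem⟩)

lemma imgOf_vals_ne {n t : ℕ} {S : Finset (List Bool)}
    {p : Σ F : Finset (List Bool), ∀ a ∈ F, List Bool} (hp : p ∈ Dom n t S)
    {a b : List Bool} (ha : a ∈ p.1) (hb : b ∈ p.1) (hab : a ≠ b) :
    p.2 a ha ≠ p.2 b hb := by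
  obtain ⟨-, -, hspec⟩ := dom_spec hp
  intro h
  exact ((hspec b hb).2 a ha hab) (h ▸ (hspec a ha).1)

lemma card_imgOf {n t : ℕ} {S : Finset (List Bool)}
    {p : Σ F : Finset (List Bool), ∀ a ∈ F, List Bool} (hp : p ∈ Dom n t S) :
    (imgOf p.1 p.2).card = t := by
  rw [imgOf, Finset.card_image_of_injOn, Finset.card_attach, (dom_spec hp).2.1]
  intro a _ b _ h
  by_contra hab
  exact imgOf_vals_ne hp a.2 b.2 (fun e => hab (Subtype.ext e)) h

lemma phi_injOn {n t : ℕ} {S : Finset (List Bool)} :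
    Set.InjOn (Phi S) (Dom n t S : Set (Σ F : Finset (List Bool), ∀ a ∈ F, List Bool)) := by
  intro p hp q hq hpq
  rw [Finset.mem_coe] at hp hq
  rw [Phi, Phi, Prod.mk.injEq] at hpq
  obtain ⟨h1, h2⟩ := hpq
  have hF : p.1 = q.1 := by
    have hps := (dom_spec hp).1
    have hqs := (dom_spec hq).1
    have := congrArg (fun X => S \ X) h1
    simpa [Finset.sdiff_sdiff_self_left, Finset.inter_eq_right.mpr hps,
      Finset.inter_eq_right.mpr hqs] using this
  obtain ⟨F, g⟩ := p
  obtain ⟨F', g'⟩ := q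
  simp only at hF
  subst hF
  have hg : g = g' := by
    funext a ha
    have hmem : g a ha ∈ imgOf F g' := by
      rw [← h2, imgOf]
      exact Finset.mem_image.mpr ⟨⟨a, ha⟩, Finset.mem_attach _ _, rfl⟩
    rw [imgOf, Finset.mem_image] at hmem
    obtain ⟨⟨b, hb⟩, -, hba⟩ := hmem
    by_cases hab : b = a
    · subst hab; exact hba.symm
    · exfalso
      have h1' := (dom_spec hp).2.2 a ha |>.1
      have h2' := (dom_spec hq).2.2 b hb |>.2 a ha (fun e => hab e.symm)
      apply h2'
      show g' b hb ∈ ssph n a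
      rw [show g' b hb = g a ha from hba]
      exact h1'
  rw [hg]

lemma card_Dom {n t : ℕ} {S : Finset (List Bool)} :
    (Dom n t S).card = ∑ F ∈ S.powersetCard t, ∏ x ∈ F, (CSet n F x).card := by
  rw [Dom, Finset.card_sigma]
  exact Finset.sum_congr rfl (fun F _ => Finset.card_pi _ _)

lemma phi_mem_levBall {L e t : ℕ} {S : Finset (List Bool)}
    (hSlen : ∀ x ∈ S, x.length = L)
    {p : Σ F : Finset (List Bool), ∀ a ∈ F, List Bool} (hp : p ∈ Dom (L+e) t S) :
    (Phi S p).1 ∪ (Phi S p).2 ∈ levBall 0 t e S := by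
  classical
  obtain ⟨hFS, hFcard, hspec⟩ := dom_spec hp
  obtain ⟨F, g⟩ := p
  refine ⟨S \ F, ∅, F, fun x => if h : x ∈ F then g x h else [], ?_, ?_, ?_, ?_, ?_, ?_, ?_, ?_⟩
  · exact Finset.disjoint_empty_right _
  · exact Finset.sdiff_disjoint
  · exact Finset.disjoint_empty_left _
  · rw [Finset.union_empty, Finset.sdiff_union_of_subset hFS]
  · simp
  · exact le_of_eq hFcard
  · intro x hx
    have hmem := (hspec x hx).1
    rw [ssph, Finset.mem_filter, mem_allB] at hmem
    refine ⟨x, List.Sublist.refl x, ?_, ?_⟩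
    · show x.Sublist (if h : x ∈ F then g x h else [])
      rw [dif_pos hx]; exact hmem.2
    · show (x.length - x.length) + ((if h : x ∈ F then g x h else []).length - x.length) ≤ e
      rw [dif_pos hx, hmem.1, hSlen x (hFS hx)]
      omega
  · show (S \ F) ∪ imgOf F g = (S \ F) ∪ F.image _
    congr 1
    ext y
    rw [imgOf, Finset.mem_image, Finset.mem_image]
    constructor
    · rintro ⟨⟨a, ha⟩, -, rfl⟩
      exact ⟨a, ha, by rw [dif_pos ha]⟩
    · rintro ⟨a, ha, rfl⟩
      exact ⟨⟨a, ha⟩, Finset.mem_attach _ _, by rw [dif_pos ha]⟩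

lemma phi_mem_W {L e t M : ℕ} {S : Finset (List Bool)}
    (hScard : S.card = M) (hSlen : ∀ x ∈ S, x.length = L)
    {p : Σ F : Finset (List Bool), ∀ a ∈ F, List Bool} (hp : p ∈ Dom (L+e) t S) :
    Phi S p ∈ ((allB L).powersetCard (M - t)) ×ˢ ((allB (L+e)).powersetCard t) := by
  obtain ⟨hFS, hFcard, hspec⟩ := dom_spec hp
  rw [Finset.mem_product, Finset.mem_powersetCard, Finset.mem_powersetCard]
  refine ⟨⟨?_, ?_⟩, ?_, ?_⟩
  · intro u hu
    rw [mem_allB]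
    exact hSlen u (Finset.mem_sdiff.mp hu).1
  · rw [show (Phi S p).1 = S \ p.1 from rfl, Finset.card_sdiff_of_subset hFS, hScard, hFcard]
  · intro y hy
    rw [show (Phi S p).2 = imgOf p.1 p.2 from rfl, imgOf, Finset.mem_image] at hy
    obtain ⟨⟨a, ha⟩, -, rfl⟩ := hy
    have := (hspec a ha).1
    rw [ssph, Finset.mem_filter] at this
    exact this.1
  · exact card_imgOf hp

/-- Sphere-packing bound for `(0,t,ε)_L` codes: if `S_I > (t−1)·N_I`, then
`|C| · binom(M,t) · (S_I − (t−1)·N_I)^t ≤ binom(2^L, M−t) · binom(2^{L+ε}, t)`. -/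
theorem stmt_15 (L M t ε : ℕ) (hL : 1 ≤ L) (hM : 1 ≤ M) (hML : M ≤ 2 ^ L)
    (ht : 1 ≤ t) (htM : t ≤ M) (hε : 1 ≤ ε)
    (C : Finset (Finset (List Bool)))
    (hX : ∀ S ∈ C, S.card = M ∧ ∀ x ∈ S, x.length = L)
    (hcode : isLevCode 0 t ε ↑C)
    (hSN : ((t : ℤ) - 1) * NI L ε < SI L ε) :
    (C.card : ℤ) * (M.choose t : ℤ) * (SI L ε - ((t : ℤ) - 1) * NI L ε) ^ t ≤
      ((2 ^ L).choose (M - t) : ℤ) * ((2 ^ (L + ε)).choose t : ℤ) := by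
  classical
  set Snat := ∑ i ∈ Finset.range (ε+1), (L+ε).choose i with hSnat
  set Nnat := 2 * ∑ i ∈ Finset.range ε, (L+ε-1).choose i with hNnat
  have hSI : SI L ε = (Snat : ℤ) := by rw [SI, hSnat]; push_cast; rfl
  have hNI : NI L ε = (Nnat : ℤ) := by
    rw [NI]
    have hni := nid (L+ε-1) ε
    rw [show L+ε-1+1 = L+ε by omega] at hni
    rw [hni, hNnat]
    push_cast
    ring
  have htc : ((t : ℤ) - 1) = ((t - 1 : ℕ) : ℤ) := by
    rw [Nat.cast_sub ht]; norm_num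
  have hlt : (t-1) * Nnat < Snat := by
    rw [hSI, hNI, htc] at hSN
    exact_mod_cast hSN
  set K := Snat - (t-1) * Nnat with hK
  set Ball : Finset (List Bool) → Finset (Finset (List Bool) × Finset (List Bool)) :=
    fun S => (Dom (L+ε) t S).image (Phi S) with hBall
  -- lower bound for each ball
  have hball_card : ∀ S ∈ C, M.choose t * K^t ≤ (Ball S).card := by
    intro S hS
    obtain ⟨hScard, hSlen⟩ := hX S hS
    rw [hBall]
    rw [Finset.card_image_of_injOn phi_injOn, card_Dom]
    calc M.choose t * K^t = ∑ _F ∈ S.powersetCard t, K^t := by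
          rw [Finset.sum_const, smul_eq_mul, Finset.card_powersetCard, hScard]
      _ ≤ ∑ F ∈ S.powersetCard t, ∏ x ∈ F, (CSet (L+ε) F x).card := by
          apply Finset.sum_le_sum
          intro F hF
          rw [Finset.mem_powersetCard] at hF
          calc K^t = ∏ _x ∈ F, K := by rw [Finset.prod_const, hF.2]
            _ ≤ ∏ x ∈ F, (CSet (L+ε) F x).card := by
                apply Finset.prod_le_prod (fun _ _ => Nat.zero_le _)
                intro x hx
                exact card_CSet_ge L ε t F x hx hF.2
                  (fun w hw => hSlen w (hF.1 hw))
  -- disjointness of balls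
  have hdisj : ∀ S₁ ∈ C, ∀ S₂ ∈ C, S₁ ≠ S₂ → Disjoint (Ball S₁) (Ball S₂) := by
    intro S₁ hS₁ S₂ hS₂ hne
    rw [Finset.disjoint_left]
    intro p hp1 hp2
    rw [hBall, Finset.mem_image] at hp1 hp2
    obtain ⟨q₁, hq₁, hq₁e⟩ := hp1
    obtain ⟨q₂, hq₂, hq₂e⟩ := hp2
    have hm₁ : (p.1 ∪ p.2) ∈ levBall 0 t ε S₁ := by
      rw [← hq₁e]; exact phi_mem_levBall (hX S₁ hS₁).2 hq₁
    have hm₂ : (p.1 ∪ p.2) ∈ levBall 0 t ε S₂ := by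
      rw [← hq₂e]; exact phi_mem_levBall (hX S₂ hS₂).2 hq₂
    have := hcode S₁ (Finset.mem_coe.mpr hS₁) S₂ (Finset.mem_coe.mpr hS₂) hne
    exact Set.eq_empty_iff_forall_notMem.mp this _ ⟨hm₁, hm₂⟩
  -- upper bound
  have hWsub : C.biUnion Ball ⊆ ((allB L).powersetCard (M - t)) ×ˢ ((allB (L+ε)).powersetCard t) := by
    intro p hp
    rw [Finset.mem_biUnion] at hp
    obtain ⟨S, hS, hpS⟩ := hp
    rw [hBall, Finset.mem_image] at hpS
    obtain ⟨q, hq, rfl⟩ := hpS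
    exact phi_mem_W (hX S hS).1 (hX S hS).2 hq
  have hWcard : (((allB L).powersetCard (M - t)) ×ˢ ((allB (L+ε)).powersetCard t)).card
      = (2^L).choose (M-t) * (2^(L+ε)).choose t := by
    rw [Finset.card_product, Finset.card_powersetCard, Finset.card_powersetCard,
      card_allB, card_allB]
  have hchain : C.card * (M.choose t * K^t) ≤ (2^L).choose (M-t) * (2^(L+ε)).choose t := by
    rw [← hWcard]
    calc C.card * (M.choose t * K^t) = C.card • (M.choose t * K^t) := by rw [smul_eq_mul]
      _ ≤ ∑ S ∈ C, (Ball S).card := Finset.card_nsmul_le_sum C _ _ hball_card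
      _ = (C.biUnion Ball).card := (Finset.card_biUnion hdisj).symm
      _ ≤ _ := Finset.card_le_card hWsub
  -- conclude over ℤ
  rw [hSI, hNI, htc, show ((Snat:ℤ) - ((t-1:ℕ):ℤ) * (Nnat:ℤ)) = ((K:ℕ):ℤ) by
    rw [hK, Nat.cast_sub (le_of_lt hlt)]; push_cast; ring]
  calc (C.card : ℤ) * (M.choose t : ℤ) * ((K:ℕ):ℤ)^t
      = ((C.card * (M.choose t * K^t) : ℕ) : ℤ) := by push_cast; ring
    _ ≤ (((2^L).choose (M-t) * (2^(L+ε)).choose t : ℕ) : ℤ) := by exact_mod_cast hchain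
    _ = _ := by push_cast; ring
end
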